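/- arXiv:math/0406349 — 13 statements merged into one kernel-verified Lean document; each statement's English description precedes it below -/
import Mathlib

section
/- Let a_1 < a_2 < ... < a_n be an increasing sequence of real numbers, viewed as a metric space with the metric inherited from the real line. Then any embedding of {a_1,...,a_n} into an ultrametric space has distortion at least (a_n - a_1) / max_{1 ≤ i ≤ n-1} (a_{i+1} - a_i). -/
/-- Any embedding of an increasing sequence of reals into an ultrametric space has
distortion at least `(a (n-1) - a 0) / G` where `G` bounds the consecutive gaps. -/
theorem increasing_seq_into_ultrametric_distortion
    {X : Type*} [MetricSpace X]
    (hX : ∀ x y z : X, dist x z ≤ max (dist x y) (dist y z))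
    (n : ℕ) (hn : 2 ≤ n) (a : ℕ → ℝ)
    (ha : ∀ i j, i < j → j < n → a i < a j)
    (f : ℕ → X) (hfinj : ∀ i j, i < n → j < n → f i = f j → i = j)
    (L₁ L₂ : ℝ)
    (hf1 : ∀ i j, i < n → j < n → dist (f i) (f j) ≤ L₁ * |a i - a j|)
    (hf2 : ∀ i j, i < n → j < n → |a i - a j| ≤ L₂ * dist (f i) (f j))
    (G : ℝ) (hG : 0 < G) (hgap : ∀ i, i + 1 < n → a (i + 1) - a i ≤ G) :
    (a (n - 1) - a 0) / G ≤ L₁ * L₂ := by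
  have h0n : 0 < n := by omega
  have hlast : n - 1 < n := by omega
  have h01 : (0:ℕ) < n - 1 := by omega
  have haa : a 0 < a (n - 1) := ha 0 (n-1) h01 hlast
  -- L₁ > 0
  have hd01 : 0 < dist (f 0) (f (n-1)) := by
    rw [dist_pos]
    intro h
    have := hfinj 0 (n-1) h0n hlast h
    omega
  have hL1 : 0 < L₁ := by
    have h := hf1 0 (n-1) h0n hlast
    nlinarith [abs_nonneg (a 0 - a (n-1))]
  -- main claim: dist (f 0) (f k) ≤ L₁ * G for all k < n
  have key : ∀ k, k < n → dist (f 0) (f k) ≤ L₁ * G := by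
    intro k
    induction k with
    | zero => intro _; simp; positivity
    | succ m ih =>
      intro hm
      have hmn : m < n := by omega
      have h1 : dist (f m) (f (m+1)) ≤ L₁ * G := by
        have := hf1 m (m+1) hmn hm
        have habs : |a m - a (m+1)| = a (m+1) - a m := by
          rw [abs_sub_comm, abs_of_nonneg]
          linarith [ha m (m+1) (by omega) hm]
        have := hgap m hm
        nlinarith
      calc dist (f 0) (f (m+1)) ≤ max (dist (f 0) (f m)) (dist (f m) (f (m+1))) :=
            hX _ _ _
        _ ≤ L₁ * G := max_le (ih hmn) h1
  have h2 := hf2 0 (n-1) h0n hlast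
  have habs : |a 0 - a (n-1)| = a (n-1) - a 0 := by
    rw [abs_sub_comm, abs_of_nonneg]; linarith
  have hL2 : 0 ≤ L₂ := by nlinarith
  have : a (n-1) - a 0 ≤ L₂ * (L₁ * G) := by
    calc a (n-1) - a 0 ≤ L₂ * dist (f 0) (f (n-1)) := by rw [← habs]; exact h2
      _ ≤ L₂ * (L₁ * G) := by nlinarith [key (n-1) hlast]
  rw [div_le_iff₀ hG]
  nlinarith
end

section
/- For every n ≥ 2, any embedding of the set {1,2,...,n} with the metric from the real line into an ultrametric space has distortion at least n-1. -/
/-- Any embedding of `{1,…,n}` with the real-line metric into an ultrametric space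
has distortion at least `n - 1`. -/
theorem path_into_ultrametric_distortion
    {X : Type*} [MetricSpace X]
    (hX : ∀ x y z : X, dist x z ≤ max (dist x y) (dist y z))
    (n : ℕ) (hn : 2 ≤ n) (f : ℕ → X) (L₁ L₂ : ℝ)
    (hf1 : ∀ i j, 1 ≤ i → i ≤ n → 1 ≤ j → j ≤ n →
      dist (f i) (f j) ≤ L₁ * |(i : ℝ) - (j : ℝ)|)
    (hf2 : ∀ i j, 1 ≤ i → i ≤ n → 1 ≤ j → j ≤ n →
      |(i : ℝ) - (j : ℝ)| ≤ L₂ * dist (f i) (f j)) :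
    (n : ℝ) - 1 ≤ L₁ * L₂ := by
  have hL1 : 0 ≤ L₁ := by
    have h := hf1 1 2 le_rfl (by omega) (by omega) hn
    push_cast at h
    have : |(1 : ℝ) - 2| = 1 := by norm_num
    rw [this, mul_one] at h
    exact le_trans dist_nonneg h
  -- consecutive distances are ≤ L₁
  have hcons : ∀ k, 1 ≤ k → k + 1 ≤ n → dist (f k) (f (k + 1)) ≤ L₁ := by
    intro k hk1 hk2
    have h := hf1 k (k + 1) hk1 (by omega) (by omega) hk2
    have : |(k : ℝ) - ((k : ℕ) + 1 : ℕ)| = 1 := by push_cast; rw [abs_sub_comm]; norm_num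
    rwa [this, mul_one] at h
  have key : ∀ k, 1 ≤ k → k ≤ n → dist (f 1) (f k) ≤ L₁ := by
    intro k
    induction k with
    | zero => omega
    | succ m ih =>
      intro _ hm
      rcases Nat.eq_or_lt_of_le (show 1 ≤ m + 1 by omega) with h1 | h1
      · simp [← h1, hL1]
      · have hm1 : 1 ≤ m := by omega
        calc dist (f 1) (f (m + 1)) ≤ max (dist (f 1) (f m)) (dist (f m) (f (m + 1))) :=
              hX _ _ _
          _ ≤ L₁ := max_le (ih hm1 (by omega)) (hcons m hm1 hm)
  have hdn : dist (f 1) (f n) ≤ L₁ := key n (by omega) le_rfl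
  have h2 := hf2 1 n le_rfl (by omega) (by omega) le_rfl
  have habs : |(1 : ℝ) - n| = (n : ℝ) - 1 := by
    rw [abs_sub_comm, abs_of_nonneg]
    have : (2 : ℝ) ≤ n := by exact_mod_cast hn
    linarith
  push_cast at h2
  rw [habs] at h2
  have hL2 : 0 ≤ L₂ := by
    by_contra h
    push_neg at h
    have : L₂ * dist (f 1) (f n) ≤ 0 := mul_nonpos_of_nonpos_of_nonneg h.le dist_nonneg
    have : (2 : ℝ) ≤ n := by exact_mod_cast hn
    linarith
  calc (n : ℝ) - 1 ≤ L₂ * dist (f 1) (f n) := h2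
    _ ≤ L₂ * L₁ := mul_le_mul_of_nonneg_left hdn hL2
    _ = L₁ * L₂ := mul_comm _ _
end

section
/- Fix integers n, k ≥ 1 with n ≥ 2. For every function χ from the set of unordered pairs of distinct elements of {1,...,n} to {1,...,k}, there exist an integer s ≥ floor(n^{1/k} / (8 log n)), nonempty pairwise disjoint subsets A_1,...,A_s ⊆ {1,...,n}, and a color ℓ ∈ {1,...,k} such that for all 1 ≤ i < j ≤ s, min{χ(p,q) : p ∈ A_i, q ∈ A_j} = ℓ. -/
open Finset

/-- Greedy partition of a finite set into maximal `R`-independent classes: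
classes are pairwise disjoint, each independent, every later class is fully
dominated by every earlier class, and together they cover `S`. -/
lemma greedy_partition {α : Type*} [DecidableEq α] (R : α → α → Prop)
    (hsym : ∀ p q, R p q → R q p) (hirr : ∀ p, ¬ R p p) :
    ∀ (N : ℕ) (S : Finset α), S.card ≤ N →
    ∃ (m : ℕ) (B : Fin m → Finset α),
      (∀ i, B i ⊆ S) ∧ (∀ i, (B i).Nonempty) ∧
      (∀ i j, i ≠ j → Disjoint (B i) (B j)) ∧
      (∀ i, ∀ p ∈ B i, ∀ q ∈ B i, ¬ R p q) ∧
      (∀ i j : Fin m, i < j → ∀ v ∈ B j, ∃ u ∈ B i, R u v) ∧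
      S.card ≤ ∑ i, (B i).card := by
  intro N
  induction N with
  | zero =>
      intro S hS
      exact ⟨0, Fin.elim0, fun i => i.elim0, fun i => i.elim0,
        fun i => i.elim0, fun i => i.elim0, fun i => i.elim0,
        by simpa using hS⟩
  | succ N ih =>
      intro S hS
      classical
      rcases S.eq_empty_or_nonempty with rfl | ⟨v, hv⟩
      · exact ⟨0, Fin.elim0, fun i => i.elim0, fun i => i.elim0,
          fun i => i.elim0, fun i => i.elim0, fun i => i.elim0, by simp⟩
      · set F := S.powerset.filter
          (fun A => A.Nonempty ∧ ∀ p ∈ A, ∀ q ∈ A, ¬ R p q) with hF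
        have hFne : F.Nonempty := by
          refine ⟨{v}, ?_⟩
          simp only [hF, mem_filter, mem_powerset]
          refine ⟨by simpa using hv, singleton_nonempty v, ?_⟩
          intro p hp q hq
          rw [mem_singleton] at hp hq
          subst hp; subst hq
          exact hirr _
        obtain ⟨A₀, hA₀F, hmax⟩ := F.exists_max_image Finset.card hFne
        simp only [hF, mem_filter, mem_powerset] at hA₀F
        obtain ⟨hA₀S, hA₀ne, hA₀ind⟩ := hA₀F
        have hdom : ∀ w ∈ S \ A₀, ∃ u ∈ A₀, R u w := by
          intro w hw
          rw [mem_sdiff] at hw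
          by_contra hcon
          push_neg at hcon
          have hins : insert w A₀ ∈ F := by
            simp only [hF, mem_filter, mem_powerset]
            refine ⟨insert_subset hw.1 hA₀S, insert_nonempty _ _, ?_⟩
            intro p hp q hq
            rw [mem_insert] at hp hq
            rcases hp with rfl | hp <;> rcases hq with rfl | hq
            · exact hirr _
            · exact fun h => hcon q hq (hsym _ _ h)
            · exact hcon p hp
            · exact hA₀ind p hp q hq
          have := hmax _ hins
          rw [card_insert_of_notMem hw.2] at this
          omega
        have hcard : (S \ A₀).card ≤ N := by
          have h1 : 1 ≤ A₀.card := card_pos.2 hA₀ne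
          have h2 : (S \ A₀).card = S.card - A₀.card := card_sdiff_of_subset hA₀S
          omega
        obtain ⟨m, B, hBS, hBne, hBdisj, hBind, hBdom, hBsum⟩ :=
          ih (S \ A₀) hcard
        refine ⟨m + 1, Fin.cons A₀ B, ?_, ?_, ?_, ?_, ?_, ?_⟩
        · intro i
          induction i using Fin.cases with
          | zero => simpa using hA₀S
          | succ i => simpa using (hBS i).trans (sdiff_subset)
        · intro i
          induction i using Fin.cases with
          | zero => simpa using hA₀ne
          | succ i => simpa using hBne i
        · intro i j hij
          induction i using Fin.cases with
          | zero =>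
              induction j using Fin.cases with
              | zero => exact absurd rfl hij
              | succ j =>
                  simp only [Fin.cons_zero, Fin.cons_succ]
                  rw [disjoint_comm]
                  exact disjoint_of_subset_left (hBS j) sdiff_disjoint
          | succ i =>
              induction j using Fin.cases with
              | zero =>
                  simp only [Fin.cons_zero, Fin.cons_succ]
                  exact disjoint_of_subset_left (hBS i) sdiff_disjoint
              | succ j =>
                  simp only [Fin.cons_succ]
                  exact hBdisj i j (fun h => hij (by rw [h]))
        · intro i
          induction i using Fin.cases with
          | zero => simpa using hA₀ind
          | succ i => simpa using hBind i
        · intro i j hij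
          induction i using Fin.cases with
          | zero =>
              induction j using Fin.cases with
              | zero => exact absurd hij (lt_irrefl _)
              | succ j =>
                  simp only [Fin.cons_zero, Fin.cons_succ]
                  intro w hw
                  exact hdom w (hBS j hw)
          | succ i =>
              induction j using Fin.cases with
              | zero => exact absurd hij (by simp [Fin.lt_def])
              | succ j =>
                  simp only [Fin.cons_succ]
                  exact hBdom i j (by rwa [Fin.succ_lt_succ_iff] at hij)
        · have hsum : ∑ i : Fin (m+1), ((Fin.cons A₀ B : Fin (m+1) → Finset α) i).card
              = A₀.card + ∑ i : Fin m, (B i).card := by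
            rw [Fin.sum_univ_succ]
            simp
          rw [hsum]
          have h2 : (S \ A₀).card + A₀.card = S.card :=
            card_sdiff_add_card_eq_card hA₀S
          omega

/-- Main induction on the number of remaining colors. -/
lemma main_lemma (n k : ℕ) (χ : Fin n → Fin n → Fin k)
    (hsymm : ∀ p q, χ p q = χ q p) (t : ℕ) (ht : 2 ≤ t) :
    ∀ r : ℕ, 1 ≤ r → r ≤ k → ∀ S : Finset (Fin n),
      t ^ r ≤ S.card →
      (∀ p ∈ S, ∀ q ∈ S, p ≠ q → k - r ≤ (χ p q : ℕ)) →
      ∃ (A : Fin t → Finset (Fin n)) (ℓ : Fin k),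
        (∀ i, (A i).Nonempty) ∧
        (∀ i j, i ≠ j → Disjoint (A i) (A j)) ∧
        (∀ i j, i ≠ j →
          (∃ p ∈ A i, ∃ q ∈ A j, χ p q = ℓ) ∧
          (∀ p ∈ A i, ∀ q ∈ A j, ℓ ≤ χ p q)) := by
  intro r hr1
  induction r, hr1 using Nat.le_induction with
  | base =>
      intro hk S hcard hcol
      have htS : t ≤ S.card := by simpa using hcard
      obtain ⟨S', hS'sub, hS'card⟩ := S.exists_subset_card_eq htS
      have e := S'.orderIsoOfFin hS'card
      refine ⟨fun i => {(e i : Fin n)}, ⟨k - 1, by omega⟩, ?_, ?_, ?_⟩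
      · intro i; exact ⟨_, mem_singleton_self _⟩
      · intro i j hij
        rw [disjoint_singleton]
        intro h
        exact hij (e.injective (Subtype.ext h))
      · intro i j hij
        have hne : (e i : Fin n) ≠ (e j : Fin n) :=
          fun h => hij (e.injective (Subtype.ext h))
        have hpS : (e i : Fin n) ∈ S := hS'sub (e i).2
        have hqS : (e j : Fin n) ∈ S := hS'sub (e j).2
        have h1 : k - 1 ≤ (χ (e i) (e j) : ℕ) := hcol _ hpS _ hqS hne
        have h2 : (χ (e i) (e j) : ℕ) < k := (χ _ _).isLt
        constructor
        · exact ⟨_, mem_singleton_self _, _, mem_singleton_self _,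
            by apply Fin.ext; simp; omega⟩
        · intro p hp q hq
          rw [mem_singleton] at hp hq
          subst hp; subst hq
          rw [Fin.le_def]
          simpa using h1
  | succ r hr ih =>
      intro hrk S hcard hcol
      set c := k - (r + 1) with hc
      set R : Fin n → Fin n → Prop :=
        fun p q => p ≠ q ∧ (χ p q : ℕ) = c with hR
      have hsymR : ∀ p q, R p q → R q p := by
        intro p q ⟨h1, h2⟩
        exact ⟨h1.symm, by rw [← hsymm]; exact h2⟩
      have hirrR : ∀ p, ¬ R p p := fun p h => h.1 rfl
      obtain ⟨m, B, hBS, hBne, hBdisj, hBind, hBdom, hBsum⟩ :=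
        greedy_partition R hsymR hirrR S.card S le_rfl
      by_cases hm : t ≤ m
      · -- enough classes: take the first t of them, color c
        refine ⟨fun i => B ⟨i, lt_of_lt_of_le i.isLt hm⟩, ⟨c, by omega⟩,
          fun i => hBne _, ?_, ?_⟩
        · intro i j hij
          exact hBdisj _ _ (by
            intro h
            apply hij
            apply Fin.ext
            simpa [Fin.mk.injEq] using h)
        · intro i j hij
          have hijm : (⟨i, lt_of_lt_of_le i.isLt hm⟩ : Fin m) ≠
              ⟨j, lt_of_lt_of_le j.isLt hm⟩ := by
            intro h
            apply hij
            apply Fin.ext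
            simpa [Fin.mk.injEq] using h
          constructor
          · rcases lt_or_gt_of_ne hijm with h | h
            · obtain ⟨v, hv⟩ := hBne ⟨j, lt_of_lt_of_le j.isLt hm⟩
              obtain ⟨u, hu, hRuv⟩ := hBdom _ _ h v hv
              exact ⟨u, hu, v, hv, Fin.ext (by simpa using hRuv.2)⟩
            · obtain ⟨v, hv⟩ := hBne ⟨i, lt_of_lt_of_le i.isLt hm⟩
              obtain ⟨u, hu, hRuv⟩ := hBdom _ _ h v hv
              refine ⟨v, hv, u, hu, Fin.ext ?_⟩
              rw [hsymm]
              simpa using hRuv.2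
          · intro p hp q hq
            have hpq : p ≠ q := by
              intro h
              subst h
              exact (Finset.disjoint_left.1 (hBdisj _ _ hijm) hp) hq
            have := hcol p (hBS _ hp) q (hBS _ hq) hpq
            rw [Fin.le_def]
            simpa using this
      · -- few classes: a big class avoids color c, recurse
        push_neg at hm
        have hm1 : 1 ≤ m := by
          rcases Nat.eq_zero_or_pos m with rfl | h
          · exfalso
            have : S.card = 0 := by simpa using hBsum
            have : (0:ℕ) < t ^ (r+1) := Nat.pow_pos (by omega)
            omega
          · exact h
        have : Nonempty (Fin m) := ⟨⟨0, hm1⟩⟩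
        obtain ⟨i₀, _, hi₀⟩ := (univ : Finset (Fin m)).exists_max_image
          (fun i => (B i).card) univ_nonempty
        set c₀ := (B i₀).card with hc₀
        have hsum_le : ∑ i, (B i).card ≤ m * c₀ := by
          calc ∑ i, (B i).card ≤ (univ : Finset (Fin m)).card • c₀ :=
                Finset.sum_le_card_nsmul _ _ _ (fun i _ => hi₀ i (mem_univ i))
            _ = m * c₀ := by simp [mul_comm]
        have hc₀pos : 1 ≤ c₀ := card_pos.2 (hBne i₀)
        have hkey : t ^ r ≤ c₀ := by
          have h1 : t * t ^ r ≤ m * c₀ := by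
            have h0 : t ^ (r + 1) ≤ m * c₀ :=
              le_trans hcard (le_trans hBsum hsum_le)
            have h3 : t ^ (r + 1) = t * t ^ r := by ring
            omega
          have h5 : m * c₀ + c₀ ≤ t * c₀ := by
            have h5' : (m + 1) * c₀ ≤ t * c₀ :=
              Nat.mul_le_mul_right _ (Nat.succ_le_of_lt hm)
            have h5'' : (m + 1) * c₀ = m * c₀ + c₀ := by ring
            omega
          by_contra hcon
          push_neg at hcon
          have h6 : t * (c₀ + 1) ≤ t * t ^ r :=
            Nat.mul_le_mul_left _ (by omega)
          have h7 : t * (c₀ + 1) = t * c₀ + t := by ring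
          omega
        have hcol' : ∀ p ∈ B i₀, ∀ q ∈ B i₀, p ≠ q → k - r ≤ (χ p q : ℕ) := by
          intro p hp q hq hpq
          have h1 : k - (r + 1) ≤ (χ p q : ℕ) :=
            hcol p (hBS _ hp) q (hBS _ hq) hpq
          have h2 : ¬ R p q := hBind i₀ p hp q hq
          have h3 : (χ p q : ℕ) ≠ c := by
            intro h
            exact h2 ⟨hpq, h⟩
          omega
        obtain ⟨A, ℓ, h1, h2, h3⟩ := ih (by omega) (B i₀) hkey hcol'
        exact ⟨A, ℓ, h1, h2, h3⟩

/-- Ramsey-type coloring lemma: for any symmetric coloring of pairs of `{1,…,n}` by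
`k` colors there are at least `⌊n^(1/k)/(8 log n)⌋` nonempty disjoint subsets such
that the minimal color between any two of them is some fixed color `ℓ`. -/
theorem coloring_lemma (n k : ℕ) (hn : 2 ≤ n) (hk : 1 ≤ k)
    (χ : Fin n → Fin n → Fin k) (hsymm : ∀ p q, χ p q = χ q p) :
    ∃ (s : ℕ) (A : Fin s → Finset (Fin n)) (ℓ : Fin k),
      Nat.floor ((n : ℝ) ^ ((1 : ℝ) / k) / (8 * Real.log n)) ≤ s ∧
      (∀ i, (A i).Nonempty) ∧
      (∀ i j, i ≠ j → Disjoint (A i) (A j)) ∧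
      (∀ i j : Fin s, i ≠ j →
        (∃ p ∈ A i, ∃ q ∈ A j, χ p q = ℓ) ∧
        (∀ p ∈ A i, ∀ q ∈ A j, ℓ ≤ χ p q)) := by
  set t := Nat.floor ((n : ℝ) ^ ((1 : ℝ) / k) / (8 * Real.log n)) with htdef
  rcases le_or_gt t 1 with ht | ht
  · -- trivial case
    refine ⟨1, fun _ => {⟨0, by omega⟩}, ⟨0, hk⟩, ht, ?_, ?_, ?_⟩
    · intro i; exact ⟨_, mem_singleton_self _⟩
    · intro i j hij; exact absurd (Subsingleton.elim i j) hij
    · intro i j hij; exact absurd (Subsingleton.elim i j) hij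
  · -- main case
    have hn1 : (1:ℝ) ≤ n := by exact_mod_cast hn.trans' (by norm_num)
    have hlogpos : (0:ℝ) ≤ Real.log n := Real.log_nonneg hn1
    have hrpow_nonneg : (0:ℝ) ≤ (n : ℝ) ^ ((1 : ℝ) / k) :=
      Real.rpow_nonneg (by positivity) _
    have hlog2 : Real.log 2 ≤ Real.log n :=
      Real.log_le_log (by norm_num) (by exact_mod_cast hn)
    have h8 : (1:ℝ) ≤ 8 * Real.log n := by
      have := Real.log_two_gt_d9
      nlinarith
    have hx : (0:ℝ) ≤ (n : ℝ) ^ ((1 : ℝ) / k) / (8 * Real.log n) :=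
      div_nonneg hrpow_nonneg (by linarith)
    have hle1 : ((n : ℝ) ^ ((1 : ℝ) / k) / (8 * Real.log n)) ≤
        (n : ℝ) ^ ((1 : ℝ) / k) := div_le_self hrpow_nonneg h8
    have htle : (t : ℝ) ≤ (n : ℝ) ^ ((1 : ℝ) / k) :=
      le_trans (Nat.floor_le hx) hle1
    have hpowk : ((n : ℝ) ^ ((1 : ℝ) / k)) ^ (k : ℕ) = n := by
      rw [← Real.rpow_natCast ((n : ℝ) ^ ((1 : ℝ) / k)) k,
        ← Real.rpow_mul (by positivity),
        one_div_mul_cancel (Nat.cast_ne_zero.2 (by omega) : (k:ℝ) ≠ 0),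
        Real.rpow_one]
    have htk : (t : ℝ) ^ (k : ℕ) ≤ n := by
      calc (t : ℝ) ^ (k : ℕ) ≤ ((n : ℝ) ^ ((1 : ℝ) / k)) ^ (k : ℕ) :=
            pow_le_pow_left₀ (by positivity) htle k
        _ = n := hpowk
    have htkn : t ^ k ≤ n := by exact_mod_cast htk
    have hcovS : t ^ k ≤ (univ : Finset (Fin n)).card := by
      simpa using htkn
    obtain ⟨A, ℓ, h1, h2, h3⟩ := main_lemma n k χ hsymm t ht k hk le_rfl
      univ hcovS (fun p _ q _ _ => by omega)
    exact ⟨t, A, ℓ, le_rfl, h1, h2, h3⟩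
end

section
/- Let n ≥ 2 be an integer and let f: {0,1,...,n} → ℓ_p (1 ≤ p ≤ 2) satisfy d(x,y) ≤ ‖f(x)-f(y)‖_p ≤ L·d(x,y) for all x,y, where d is the star metric with d(i,0)=1 for 1 ≤ i ≤ n and d(i,j)=2 for distinct i,j ≥ 1. Then L ≥ 2^{1-1/p} (1 - 1/n)^{1/p}. -/
/-- The star metric on `{0,1,…,n}`: `d(i,0) = 1` for `i ≥ 1` and `d(i,j) = 2`
for distinct `i, j ≥ 1`. -/
noncomputable def starDist (i j : ℕ) : ℝ :=
  if i = j then 0 else if i = 0 ∨ j = 0 then 1 else 2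

open MeasureTheory Real Set

namespace StarLpAux

lemma exp_tsum (x : ℝ) : Real.exp x = ∑' k : ℕ, x ^ k / k.factorial := by
  rw [Real.exp_eq_exp_ℝ, NormedSpace.exp_eq_tsum_div]

lemma gaussian_pd {ι : Type*} (s : Finset ι) (c t : ι → ℝ) {v : ℝ} (hv : 0 ≤ v) :
    0 ≤ ∑ i ∈ s, ∑ j ∈ s, c i * c j * Real.exp (-(t i - t j) ^ 2 * v) := by
  set d : ι → ℝ := fun i => c i * Real.exp (-(t i) ^ 2 * v) with hd
  have key : ∀ i j, c i * c j * Real.exp (-(t i - t j) ^ 2 * v)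
      = ∑' k : ℕ, (2 * v) ^ k / k.factorial * ((d i * t i ^ k) * (d j * t j ^ k)) := by
    intro i j
    have h1 : -(t i - t j) ^ 2 * v = -(t i) ^ 2 * v + -(t j) ^ 2 * v + (2 * t i * t j * v) := by
      ring
    rw [h1, Real.exp_add, Real.exp_add, exp_tsum (2 * t i * t j * v),
      ← tsum_mul_left, ← tsum_mul_left]
    congr 1
    ext k
    rw [mul_pow, mul_pow, mul_pow]
    simp only [hd]
    ring
  have hsummable : ∀ i j, Summable fun k : ℕ =>
      (2 * v) ^ k / k.factorial * ((d i * t i ^ k) * (d j * t j ^ k)) := by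
    intro i j
    have : ∀ k : ℕ, (2 * v) ^ k / k.factorial * ((d i * t i ^ k) * (d j * t j ^ k))
        = d i * d j * ((2 * v * (t i * t j)) ^ k / k.factorial) := by
      intro k; rw [mul_pow, mul_pow]; ring
    simp_rw [this]
    exact (Real.summable_pow_div_factorial _).mul_left _
  calc (0:ℝ) ≤ ∑' k : ℕ, (2 * v) ^ k / k.factorial * (∑ i ∈ s, d i * t i ^ k) ^ 2 := by
        refine tsum_nonneg fun k => mul_nonneg (div_nonneg (pow_nonneg (by linarith) _)
          (by positivity)) (sq_nonneg _)
    _ = ∑ i ∈ s, ∑ j ∈ s, c i * c j * Real.exp (-(t i - t j) ^ 2 * v) := by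
        simp_rw [key]
        have step1 : ∀ i ∈ s, ∑ j ∈ s, ∑' k : ℕ,
            (2 * v) ^ k / k.factorial * ((d i * t i ^ k) * (d j * t j ^ k))
            = ∑' k : ℕ, ∑ j ∈ s, (2 * v) ^ k / k.factorial * ((d i * t i ^ k) * (d j * t j ^ k)) :=
          fun i _ => (Summable.tsum_finsetSum fun j _ => hsummable i j).symm
        rw [Finset.sum_congr rfl step1,
          ← Summable.tsum_finsetSum (fun i _ => summable_sum (fun j _ => hsummable i j))]
        congr 1
        ext k
        rw [sq, Finset.sum_mul_sum, Finset.mul_sum]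
        exact Finset.sum_congr rfl fun i _ => by
          rw [Finset.mul_sum]

lemma kern_contOn {p b : ℝ} :
    ContinuousOn (fun v : ℝ => (1 - Real.exp (-(b * v))) * v ^ (-1 - p / 2)) (Ioi (0:ℝ)) := by
  apply ContinuousOn.mul
  · exact (continuous_const.sub ((continuous_const.mul continuous_id).neg.rexp)).continuousOn
  · exact ContinuousOn.rpow_const continuousOn_id fun x hx => Or.inl (ne_of_gt hx)

lemma kern_nonneg {p b v : ℝ} (hb : 0 ≤ b) (hv : 0 < v) :
    0 ≤ (1 - Real.exp (-(b * v))) * v ^ (-1 - p / 2) := by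
  apply mul_nonneg
  · have : Real.exp (-(b * v)) ≤ 1 := Real.exp_le_one_iff.mpr (by nlinarith)
    linarith
  · exact Real.rpow_nonneg hv.le _

lemma kern_integrableOn {p : ℝ} (hp0 : 0 < p) (hp2 : p < 2) {b : ℝ} (hb : 0 ≤ b) :
    IntegrableOn (fun v => (1 - Real.exp (-(b * v))) * v ^ (-1 - p / 2)) (Ioi (0:ℝ)) := by
  have hmeas : ∀ (s : Set ℝ), s ⊆ Ioi 0 → MeasurableSet s → AEStronglyMeasurable
      (fun v : ℝ => (1 - Real.exp (-(b * v))) * v ^ (-1 - p / 2)) (volume.restrict s) :=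
    fun s hs hsm => (kern_contOn.mono hs).aestronglyMeasurable hsm
  rw [← Ioc_union_Ioi_eq_Ioi (zero_le_one (α := ℝ))]
  apply IntegrableOn.union
  · -- on Ioc 0 1, dominate by b * v ^ (-p/2)
    have hdom : IntegrableOn (fun v : ℝ => b * v ^ (-(p / 2))) (Ioc (0:ℝ) 1) := by
      apply Integrable.const_mul
      have h := (intervalIntegral.intervalIntegrable_rpow' (a := 0) (b := 1) (r := -(p/2)) (by linarith)).1
      exact (by simpa using h : IntegrableOn (fun x : ℝ => x ^ (-(p / 2))) (Ioc 0 1))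
    apply Integrable.mono hdom (hmeas _ (fun x hx => hx.1) measurableSet_Ioc)
    rw [ae_restrict_iff' measurableSet_Ioc]
    filter_upwards with v hv
    have hv0 : 0 < v := hv.1
    have h1 : Real.exp (-(b * v)) ≤ 1 := Real.exp_le_one_iff.mpr (by nlinarith)
    have h2 : 1 - Real.exp (-(b * v)) ≤ b * v := by
      have := Real.add_one_le_exp (-(b * v))
      linarith
    rw [Real.norm_eq_abs, Real.norm_eq_abs, abs_of_nonneg (kern_nonneg hb hv0),
      abs_of_nonneg (by positivity)]
    calc (1 - Real.exp (-(b * v))) * v ^ (-1 - p / 2) ≤ (b * v) * v ^ (-1 - p / 2) := by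
          apply mul_le_mul_of_nonneg_right h2 (Real.rpow_nonneg hv0.le _)
      _ = b * v ^ (-(p / 2)) := by
          rw [mul_assoc]
          congr 1
          rw [show v * v ^ (-1 - p/2) = v ^ (1:ℝ) * v ^ (-1 - p/2) by rw [Real.rpow_one],
            ← Real.rpow_add hv0]
          norm_num
          ring_nf
  · -- on Ioi 1, dominate by v ^ (-1 - p/2)
    have hdom : IntegrableOn (fun v : ℝ => v ^ (-1 - p / 2)) (Ioi (1:ℝ)) :=
      integrableOn_Ioi_rpow_of_lt (by linarith) zero_lt_one
    apply Integrable.mono hdom (hmeas _ (fun x hx => mem_Ioi.mpr (lt_trans zero_lt_one hx)) measurableSet_Ioi)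
    rw [ae_restrict_iff' measurableSet_Ioi]
    filter_upwards with v hv
    have hv0 : (0:ℝ) < v := lt_trans zero_lt_one hv
    have h1 : Real.exp (-(b * v)) ≤ 1 := Real.exp_le_one_iff.mpr (by nlinarith)
    have h1' : 0 < Real.exp (-(b*v)) := Real.exp_pos _
    rw [Real.norm_eq_abs, Real.norm_eq_abs, abs_of_nonneg (kern_nonneg hb hv0),
      abs_of_nonneg (Real.rpow_nonneg hv0.le _)]
    nlinarith [Real.rpow_nonneg hv0.le (-1 - p/2)]

noncomputable def Ip (p : ℝ) : ℝ := ∫ v in Ioi (0:ℝ), (1 - Real.exp (-(1 * v))) * v ^ (-1 - p / 2)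

lemma Ip_pos {p : ℝ} (hp0 : 0 < p) (hp2 : p < 2) : 0 < Ip p := by
  have h1 : 0 ≤ᵐ[volume.restrict (Ioi (0:ℝ))]
      fun v : ℝ => (1 - Real.exp (-(1 * v))) * v ^ (-1 - p / 2) := by
    filter_upwards [self_mem_ae_restrict measurableSet_Ioi] with v hv
    exact kern_nonneg zero_le_one hv
  rw [Ip, setIntegral_pos_iff_support_of_nonneg_ae h1 (kern_integrableOn hp0 hp2 zero_le_one)]
  have hsupp : Function.support
      (fun v : ℝ => (1 - Real.exp (-(1 * v))) * v ^ (-1 - p / 2)) ∩ Ioi 0 = Ioi 0 := by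
    apply inter_eq_self_of_subset_right
    intro v hv
    have hv0 : (0:ℝ) < v := hv
    have hlt : Real.exp (-(1 * v)) < 1 := by
      rw [Real.exp_lt_one_iff]; linarith
    have h2 : (0:ℝ) < v ^ (-1 - p/2) := Real.rpow_pos_of_pos hv0 _
    simp only [Function.mem_support]
    exact (mul_pos (by linarith) h2).ne'
  rw [hsupp, Real.volume_Ioi]
  exact ENNReal.zero_lt_top

lemma integral_eq_abs_rpow {p : ℝ} (hp0 : 0 < p) (hp2 : p < 2) (a : ℝ) :
    ∫ v in Ioi (0:ℝ), (1 - Real.exp (-(a ^ 2 * v))) * v ^ (-1 - p / 2) = |a| ^ p * Ip p := by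
  rcases eq_or_ne a 0 with rfl | ha
  · simp [Real.zero_rpow hp0.ne']
  · have hb : (0:ℝ) < a ^ 2 := by positivity
    have key := integral_comp_mul_left_Ioi
      (fun v => (1 - Real.exp (-v)) * v ^ (-1 - p / 2)) 0 hb
    rw [mul_zero] at key
    have lhs_eq : ∀ v ∈ Ioi (0:ℝ),
        (1 - Real.exp (-(a ^ 2 * v))) * (a ^ 2 * v) ^ (-1 - p / 2)
        = (a ^ 2) ^ (-1 - p / 2) * ((1 - Real.exp (-(a ^ 2 * v))) * v ^ (-1 - p / 2)) := by
      intro v hv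
      rw [Real.mul_rpow hb.le (le_of_lt hv)]
      ring
    rw [setIntegral_congr_fun measurableSet_Ioi lhs_eq, integral_const_mul] at key
    -- key : (a^2)^(-1-p/2) * ∫ (1 - exp(-(a^2 v))) v^(-1-p/2) = (a^2)⁻¹ • ∫ (1-exp(-v)) v^...
    have habs : (a ^ 2) ^ (p / 2) = |a| ^ p := by
      rw [← sq_abs, ← Real.rpow_two, ← Real.rpow_mul (abs_nonneg a),
        show 2 * (p / 2) = p by ring]
    rw [smul_eq_mul] at key
    have h2 : (a ^ 2) ^ (-1 - p / 2) ≠ 0 := (Real.rpow_pos_of_pos hb _).ne'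
    have expand : (a ^ 2) ^ (-1 - p / 2) * ((a ^ 2) ^ (p / 2) * Ip p)
        = (a ^ 2)⁻¹ * Ip p := by
      rw [← mul_assoc, ← Real.rpow_add hb,
        show -1 - p / 2 + p / 2 = (-1:ℝ) by ring, Real.rpow_neg_one]
    rw [← habs]
    apply mul_left_cancel₀ h2
    rw [key, expand, Ip]
    congr 1
    exact setIntegral_congr_fun measurableSet_Ioi (fun v _ => by norm_num)

lemma neg_type {ι : Type*} (s : Finset ι) (c t : ι → ℝ) (hc : ∑ i ∈ s, c i = 0)
    {p : ℝ} (hp0 : 0 < p) (hp2 : p ≤ 2) :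
    ∑ i ∈ s, ∑ j ∈ s, c i * c j * |t i - t j| ^ p ≤ 0 := by
  rcases eq_or_lt_of_le hp2 with rfl | hplt
  · -- p = 2
    have habs : ∀ i j : ι, |t i - t j| ^ (2:ℝ) = (t i - t j) ^ 2 := fun i j => by
      rw [Real.rpow_two, sq_abs]
    simp_rw [habs]
    have inner : ∀ i : ι, ∑ j ∈ s, c i * c j * (t i - t j) ^ 2
        = (c i * t i ^ 2) * (∑ j ∈ s, c j) + c i * (∑ j ∈ s, c j * t j ^ 2)
          - (2 * c i * t i) * (∑ j ∈ s, c j * t j) := by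
      intro i
      rw [Finset.mul_sum, Finset.mul_sum, Finset.mul_sum, ← Finset.sum_add_distrib,
        ← Finset.sum_sub_distrib]
      exact Finset.sum_congr rfl fun j _ => by ring
    rw [Finset.sum_congr rfl fun i _ => inner i, Finset.sum_sub_distrib,
      Finset.sum_add_distrib, ← Finset.sum_mul, ← Finset.sum_mul, ← Finset.sum_mul, hc]
    have h2 : ∑ i ∈ s, 2 * c i * t i = 2 * ∑ i ∈ s, c i * t i := by
      rw [Finset.mul_sum]
      exact Finset.sum_congr rfl fun i _ => by ring
    rw [h2]
    simp only [mul_zero, zero_mul, add_zero, zero_add, zero_sub, neg_nonpos]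
    nlinarith [sq_nonneg (∑ i ∈ s, c i * t i)]
  · -- p < 2
    have key : ∀ i j : ι, c i * c j * |t i - t j| ^ p = (Ip p)⁻¹ *
        ∫ v in Ioi (0:ℝ), c i * c j * ((1 - Real.exp (-((t i - t j) ^ 2 * v))) * v ^ (-1 - p / 2)) := by
      intro i j
      rw [integral_const_mul, integral_eq_abs_rpow hp0 hplt]
      field_simp [(Ip_pos hp0 hplt).ne']
    simp_rw [key, ← Finset.mul_sum]
    apply mul_nonpos_of_nonneg_of_nonpos (inv_nonneg.mpr (Ip_pos hp0 hplt).le)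
    have swap : ∀ i ∈ s, ∑ j ∈ s, ∫ v in Ioi (0:ℝ),
        c i * c j * ((1 - Real.exp (-((t i - t j) ^ 2 * v))) * v ^ (-1 - p / 2))
        = ∫ v in Ioi (0:ℝ), ∑ j ∈ s,
        c i * c j * ((1 - Real.exp (-((t i - t j) ^ 2 * v))) * v ^ (-1 - p / 2)) := by
      intro i _
      exact (integral_finset_sum s fun j _ =>
        ((kern_integrableOn hp0 hplt (sq_nonneg (t i - t j))).const_mul _)).symm
    rw [Finset.sum_congr rfl swap, ← integral_finset_sum s (fun i _ =>
      integrable_finset_sum s fun j _ =>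
        ((kern_integrableOn hp0 hplt (sq_nonneg (t i - t j))).const_mul _))]
    apply integral_nonpos_of_ae
    filter_upwards [self_mem_ae_restrict measurableSet_Ioi] with v hv
    have hv0 : (0:ℝ) < v := hv
    have hQ := gaussian_pd s c t hv0.le
    have expand : ∀ i j : ι, c i * c j * ((1 - Real.exp (-((t i - t j) ^ 2 * v))) * v ^ (-1 - p / 2))
        = c i * c j * v ^ (-1 - p / 2)
          - (c i * c j * Real.exp (-(t i - t j) ^ 2 * v)) * v ^ (-1 - p / 2) := by
      intro i j
      rw [neg_mul]
      ring
    simp_rw [expand, Finset.sum_sub_distrib, ← Finset.sum_mul, ← Finset.mul_sum, hc,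
      Finset.sum_mul, mul_zero, zero_mul, Finset.sum_const_zero]
    simp only [Pi.zero_apply, zero_sub, neg_nonpos]
    simp_rw [← Finset.sum_mul]
    exact mul_nonneg hQ (Real.rpow_nonneg hv0.le _)

lemma star_ineq_real {p : ℝ} (hp0 : 0 < p) (hp2 : p ≤ 2) (n : ℕ) (t : ℕ → ℝ) (s0 : ℝ) :
    ∑ i ∈ Finset.Icc 1 n, ∑ j ∈ Finset.Icc 1 n, |t i - t j| ^ p
      ≤ 2 * n * ∑ i ∈ Finset.Icc 1 n, |t i - s0| ^ p := by
  set A := Finset.Icc 1 n with hA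
  have h0A : 0 ∉ A := by simp [hA]
  have hcard : A.card = n := by simp [hA]
  set c : ℕ → ℝ := fun i => if i = 0 then -(n:ℝ) else 1 with hcdef
  set t' : ℕ → ℝ := fun i => if i = 0 then s0 else t i with ht'def
  have hc : ∑ i ∈ insert 0 A, c i = 0 := by
    rw [Finset.sum_insert h0A]
    have : ∑ i ∈ A, c i = ∑ i ∈ A, 1 := by
      refine Finset.sum_congr rfl fun i hi => ?_
      have : i ≠ 0 := fun h => h0A (h ▸ hi)
      simp [hcdef, this]
    rw [this]
    simp [hcdef, hcard]
  have key := neg_type (insert 0 A) c t' hc hp0 hp2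
  rw [Finset.sum_insert h0A] at key
  rw [Finset.sum_insert h0A] at key
  have hdiag : c 0 * c 0 * |t' 0 - t' 0| ^ p = 0 := by
    simp [Real.zero_rpow hp0.ne']
  have hrow : ∑ j ∈ A, c 0 * c j * |t' 0 - t' j| ^ p
      = -(n:ℝ) * ∑ j ∈ A, |t j - s0| ^ p := by
    rw [Finset.mul_sum]
    refine Finset.sum_congr rfl fun j hj => ?_
    have hj0 : j ≠ 0 := fun h => h0A (h ▸ hj)
    simp only [hcdef, ht'def, if_pos rfl, if_neg hj0, mul_one, abs_sub_comm s0 (t j)]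
  have hcol : ∑ i ∈ A, (c i * c 0 * |t' i - t' 0| ^ p
      + ∑ j ∈ A, c i * c j * |t' i - t' j| ^ p)
      = -(n:ℝ) * ∑ i ∈ A, |t i - s0| ^ p
        + ∑ i ∈ A, ∑ j ∈ A, |t i - t j| ^ p := by
    rw [Finset.sum_add_distrib]
    congr 1
    · rw [Finset.mul_sum]
      refine Finset.sum_congr rfl fun i hi => ?_
      have hi0 : i ≠ 0 := fun h => h0A (h ▸ hi)
      simp only [hcdef, ht'def, if_pos rfl, if_neg hi0, one_mul]
    · refine Finset.sum_congr rfl fun i hi => Finset.sum_congr rfl fun j hj => ?_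
      have hi0 : i ≠ 0 := fun h => h0A (h ▸ hi)
      have hj0 : j ≠ 0 := fun h => h0A (h ▸ hj)
      simp [hcdef, ht'def, hi0, hj0]
  have hsplit : ∑ x ∈ A, ∑ j ∈ insert 0 A, c x * c j * |t' x - t' j| ^ p
      = ∑ i ∈ A, (c i * c 0 * |t' i - t' 0| ^ p
        + ∑ j ∈ A, c i * c j * |t' i - t' j| ^ p) :=
    Finset.sum_congr rfl fun x _ => Finset.sum_insert h0A
  rw [hdiag, hrow, hsplit, hcol] at key
  linarith

end StarLpAux

open StarLpAux

/-- Lower bound for the distortion of embedding the star metric `★_n` into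
`ℓ_p` for `1 ≤ p ≤ 2`. -/
theorem star_into_lp_one_le_p_le_two (n : ℕ) (hn : 2 ≤ n)
    (p : ℝ) (hp1 : 1 ≤ p) (hp2 : p ≤ 2) [Fact (1 ≤ ENNReal.ofReal p)]
    (f : ℕ → lp (fun _ : ℕ => ℝ) (ENNReal.ofReal p)) (L : ℝ)
    (hf : ∀ i j, i ≤ n → j ≤ n →
      starDist i j ≤ ‖f i - f j‖ ∧ ‖f i - f j‖ ≤ L * starDist i j) :
    (2 : ℝ) ^ (1 - 1 / p) * (1 - 1 / (n : ℝ)) ^ ((1 : ℝ) / p) ≤ L := by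
  have hp0 : 0 < p := by linarith
  have htr : (ENNReal.ofReal p).toReal = p := ENNReal.toReal_ofReal hp0.le
  have htrpos : 0 < (ENNReal.ofReal p).toReal := by rw [htr]; exact hp0
  set A := Finset.Icc 1 n with hA
  have hcard : A.card = n := by simp [hA]
  -- norms as tsums
  have hnorm : ∀ x y : ℕ, ‖f x - f y‖ ^ p = ∑' k, |f x k - f y k| ^ p := by
    intro x y
    have h := lp.norm_rpow_eq_tsum htrpos (f x - f y)
    rw [htr] at h
    simpa only [lp.coeFn_sub, Pi.sub_apply, Real.norm_eq_abs] using h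
  have hsum : ∀ x y : ℕ, Summable fun k => |f x k - f y k| ^ p := by
    intro x y
    have h := (lp.memℓp (f x - f y)).summable htrpos
    rw [htr] at h
    simpa only [lp.coeFn_sub, Pi.sub_apply, Real.norm_eq_abs] using h
  -- key inequality
  have key : ∑ i ∈ A, ∑ j ∈ A, ‖f i - f j‖ ^ p
      ≤ 2 * n * ∑ i ∈ A, ‖f i - f 0‖ ^ p := by
    simp_rw [hnorm]
    have swap1 : ∀ i ∈ A, ∑ j ∈ A, ∑' k, |f i k - f j k| ^ p
        = ∑' k, ∑ j ∈ A, |f i k - f j k| ^ p :=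
      fun i _ => (Summable.tsum_finsetSum fun j _ => hsum i j).symm
    rw [Finset.sum_congr rfl swap1,
      ← Summable.tsum_finsetSum (fun i (_ : i ∈ A) => summable_sum fun j _ => hsum i j),
      ← Summable.tsum_finsetSum (fun i (_ : i ∈ A) => hsum i 0), ← tsum_mul_left]
    apply Summable.tsum_le_tsum
    · intro k
      exact star_ineq_real hp0 hp2 n (fun i => f i k) (f 0 k)
    · exact summable_sum fun i _ => summable_sum fun j _ => hsum i j
    · exact (summable_sum fun i (_ : i ∈ A) => hsum i 0).mul_left _
  -- lower bound
  have hlow : (n : ℝ) * ((n : ℝ) - 1) * 2 ^ p ≤ ∑ i ∈ A, ∑ j ∈ A, ‖f i - f j‖ ^ p := by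
    have hterm : ∀ i ∈ A, ∀ j ∈ A, i ≠ j → (2:ℝ) ^ p ≤ ‖f i - f j‖ ^ p := by
      intro i hi j hj hij
      have hi' := Finset.mem_Icc.mp hi
      have hj' := Finset.mem_Icc.mp hj
      have hd : starDist i j = 2 := by
        rw [starDist, if_neg hij, if_neg]
        push_neg
        constructor <;> omega
      have := (hf i j hi'.2 hj'.2).1
      rw [hd] at this
      exact Real.rpow_le_rpow (by norm_num) this hp0.le
    calc (n : ℝ) * ((n : ℝ) - 1) * 2 ^ p = ∑ i ∈ A, ((n:ℝ) - 1) * 2 ^ p := by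
          rw [Finset.sum_const, hcard, nsmul_eq_mul]; ring
      _ ≤ ∑ i ∈ A, ∑ j ∈ A, ‖f i - f j‖ ^ p := by
          refine Finset.sum_le_sum fun i hi => ?_
          calc ((n:ℝ) - 1) * 2 ^ p = ∑ j ∈ A.erase i, (2:ℝ) ^ p := by
                rw [Finset.sum_const, Finset.card_erase_of_mem hi, hcard, nsmul_eq_mul]
                push_cast [show 1 ≤ n by omega]
                ring
            _ ≤ ∑ j ∈ A.erase i, ‖f i - f j‖ ^ p := by
                refine Finset.sum_le_sum fun j hj => ?_
                exact hterm i hi j (Finset.mem_of_mem_erase hj) (Finset.ne_of_mem_erase hj).symm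
            _ ≤ ∑ j ∈ A, ‖f i - f j‖ ^ p := by
                refine Finset.sum_le_sum_of_subset_of_nonneg (Finset.erase_subset _ _)
                  fun j _ _ => Real.rpow_nonneg (norm_nonneg _) _
  -- upper bound
  have hL1 : 1 ≤ L := by
    have h1 := hf 1 0 (by omega) (by omega)
    have hd : starDist 1 0 = 1 := by simp [starDist]
    rw [hd, mul_one] at h1
    linarith [h1.1, h1.2]
  have hupp : ∑ i ∈ A, ‖f i - f 0‖ ^ p ≤ (n : ℝ) * L ^ p := by
    calc ∑ i ∈ A, ‖f i - f 0‖ ^ p ≤ ∑ i ∈ A, L ^ p := by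
          refine Finset.sum_le_sum fun i hi => ?_
          have hi' := Finset.mem_Icc.mp hi
          have hd : starDist i 0 = 1 := by
            rw [starDist, if_neg (by omega), if_pos (Or.inr rfl)]
          have := (hf i 0 hi'.2 (by omega)).2
          rw [hd, mul_one] at this
          exact Real.rpow_le_rpow (norm_nonneg _) this hp0.le
      _ = (n : ℝ) * L ^ p := by rw [Finset.sum_const, hcard, nsmul_eq_mul]
  -- combine
  have hN : (2:ℝ) ≤ (n:ℝ) := by exact_mod_cast hn
  have hNpos : (0:ℝ) < n := by linarith
  have hmain : (2:ℝ) ^ (p - 1) * (1 - 1 / (n:ℝ)) ≤ L ^ p := by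
    have hchain : (n : ℝ) * ((n : ℝ) - 1) * 2 ^ p ≤ 2 * n * ((n : ℝ) * L ^ p) := by
      calc (n : ℝ) * ((n : ℝ) - 1) * 2 ^ p ≤ ∑ i ∈ A, ∑ j ∈ A, ‖f i - f j‖ ^ p := hlow
        _ ≤ 2 * n * ∑ i ∈ A, ‖f i - f 0‖ ^ p := key
        _ ≤ 2 * n * ((n : ℝ) * L ^ p) := by
            apply mul_le_mul_of_nonneg_left hupp (by positivity)
    have h2p : (2:ℝ) ^ (p - 1) = 2 ^ p / 2 := by
      rw [Real.rpow_sub (by norm_num), Real.rpow_one]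
    rw [h2p]
    have h2ppos : (0:ℝ) < 2 ^ p := Real.rpow_pos_of_pos (by norm_num) _
    rw [div_mul_eq_mul_div, div_le_iff₀ (by norm_num), one_sub_div hNpos.ne']
    rw [← mul_div_assoc, div_le_iff₀ hNpos]
    nlinarith
  -- conclude
  have h1n : (0:ℝ) ≤ 1 - 1 / (n:ℝ) := by
    rw [sub_nonneg, div_le_one hNpos]; linarith
  have hLnn : (0:ℝ) ≤ L := by linarith
  have hbase : (0:ℝ) ≤ 2 ^ (p - 1) * (1 - 1 / (n:ℝ)) := by
    apply mul_nonneg (Real.rpow_nonneg (by norm_num) _) h1n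
  have hfinal := Real.rpow_le_rpow hbase hmain (by positivity : (0:ℝ) ≤ 1 / p)
  rw [← Real.rpow_mul hLnn, mul_one_div_cancel hp0.ne', Real.rpow_one,
    Real.mul_rpow (Real.rpow_nonneg (by norm_num) _) h1n,
    ← Real.rpow_mul (by norm_num : (0:ℝ) ≤ 2),
    show (p - 1) * (1 / p) = 1 - 1 / p by field_simp] at hfinal
  exact hfinal
end

section
/- Let n ≥ 2 be an integer and let f: {0,1,...,n} → ℓ_p (2 ≤ p < ∞) satisfy d(x,y) ≤ ‖f(x)-f(y)‖_p ≤ L·d(x,y) for all x,y, where d is the star metric with d(i,0)=1 for 1 ≤ i ≤ n and d(i,j)=2 for distinct i,j ≥ 1. Then L ≥ 2^{1/p} (1 - 1/n)^{1/p}. -/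
/-- Signed power `t ↦ sign(t)·|t|^q`. -/
noncomputable def signedPow (q t : ℝ) : ℝ := if 0 ≤ t then t ^ q else -((-t) ^ q)

private lemma convex_pow_aux {q a b : ℝ} (hq : 1 ≤ q) (ha : 0 ≤ a) (hb : 0 ≤ b) :
    (a + b) ^ q ≤ 2 ^ (q - 1) * (a ^ q + b ^ q) := by
  have h := NNReal.rpow_add_le_mul_rpow_add_rpow a.toNNReal b.toNNReal hq
  have h' := NNReal.coe_le_coe.2 h
  push_cast [NNReal.coe_rpow, Real.coe_toNNReal _ ha, Real.coe_toNNReal _ hb] at h'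
  exact h'

private lemma superadd_aux {q a b : ℝ} (hq : 1 ≤ q) (ha : 0 ≤ a) (hb : 0 ≤ b) :
    a ^ q + b ^ q ≤ (a + b) ^ q := by
  have h := NNReal.add_rpow_le_rpow_add a.toNNReal b.toNNReal hq
  have h' := NNReal.coe_le_coe.2 h
  push_cast [NNReal.coe_rpow, Real.coe_toNNReal _ ha, Real.coe_toNNReal _ hb] at h'
  exact h'

private lemma mazur_nonneg {q a b : ℝ} (hq : 1 ≤ q) (ha : 0 ≤ a) (hab : a ≤ b) :
    (b - a) ^ q ≤ 2 ^ (q - 1) * (b ^ q - a ^ q) := by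
  have h2 : (1:ℝ) ≤ 2 ^ (q - 1) := Real.one_le_rpow one_le_two (by linarith)
  have h1 : (b - a) ^ q + a ^ q ≤ b ^ q := by
    have := superadd_aux hq (sub_nonneg.2 hab) ha
    rwa [sub_add_cancel] at this
  have h3 : (b - a) ^ q ≤ b ^ q - a ^ q := by linarith
  have h4 : (0:ℝ) ≤ b ^ q - a ^ q := by
    have := Real.rpow_le_rpow ha hab (by linarith : (0:ℝ) ≤ q)
    linarith
  calc (b - a) ^ q ≤ b ^ q - a ^ q := h3
    _ ≤ 2 ^ (q - 1) * (b ^ q - a ^ q) := le_mul_of_one_le_left h4 h2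

private lemma mazur {q : ℝ} (hq : 1 ≤ q) {x y : ℝ} (hxy : y ≤ x) :
    (x - y) ^ q ≤ 2 ^ (q - 1) * (signedPow q x - signedPow q y) := by
  rcases le_or_gt 0 y with hy | hy
  · have hx : 0 ≤ x := hy.trans hxy
    rw [signedPow, signedPow, if_pos hx, if_pos hy]
    exact mazur_nonneg hq hy hxy
  · rcases le_or_gt 0 x with hx | hx
    · rw [signedPow, signedPow, if_pos hx, if_neg (not_le.2 hy), sub_neg_eq_add]
      have h := convex_pow_aux (a := x) (b := -y) hq hx (by linarith)
      calc (x - y) ^ q = (x + -y) ^ q := by ring_nf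
        _ ≤ 2 ^ (q - 1) * (x ^ q + (-y) ^ q) := h
    · rw [signedPow, signedPow, if_neg (not_le.2 hx), if_neg (not_le.2 hy)]
      have h := mazur_nonneg hq (a := -x) (b := -y) (by linarith) (by linarith)
      calc (x - y) ^ q = (-y - -x) ^ q := by ring_nf
        _ ≤ 2 ^ (q - 1) * ((-y) ^ q - (-x) ^ q) := h
        _ = 2 ^ (q - 1) * (-(-x) ^ q - -(-y) ^ q) := by ring

private lemma pointwise_aux {p : ℝ} (hp : 2 ≤ p) {x y : ℝ} (hxy : y ≤ x) :
    |x - y| ^ p ≤ 2 ^ (p - 2) * (signedPow (p/2) x - signedPow (p/2) y) ^ 2 := by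
  have hq : 1 ≤ p / 2 := by linarith
  have h1 := mazur hq hxy
  have hnn : 0 ≤ (x - y) ^ (p/2) := Real.rpow_nonneg (sub_nonneg.2 hxy) _
  have hsq := mul_self_le_mul_self hnn h1
  have e1 : (x - y) ^ (p/2) * (x - y) ^ (p/2) = (x - y) ^ p := by
    rw [← Real.rpow_add' (sub_nonneg.2 hxy) (by linarith)]
    norm_num
  have e2 : (2:ℝ) ^ (p/2 - 1) * (signedPow (p/2) x - signedPow (p/2) y) *
      ((2:ℝ) ^ (p/2 - 1) * (signedPow (p/2) x - signedPow (p/2) y)) =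
      2 ^ (p - 2) * (signedPow (p/2) x - signedPow (p/2) y) ^ 2 := by
    have h22 : (2:ℝ) ^ (p/2 - 1) * (2:ℝ) ^ (p/2 - 1) = 2 ^ (p - 2) := by
      rw [← Real.rpow_add (by norm_num : (0:ℝ) < 2)]
      congr 1; ring
    calc _ = ((2:ℝ) ^ (p/2-1) * (2:ℝ) ^ (p/2-1)) *
          (signedPow (p/2) x - signedPow (p/2) y) ^ 2 := by ring
      _ = _ := by rw [h22]
  rw [abs_of_nonneg (sub_nonneg.2 hxy), ← e1, ← e2]
  exact hsq

private lemma pointwise {p : ℝ} (hp : 2 ≤ p) (x y : ℝ) :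
    |x - y| ^ p ≤ 2 ^ (p - 2) * (signedPow (p/2) x - signedPow (p/2) y) ^ 2 := by
  rcases le_total y x with h | h
  · exact pointwise_aux hp h
  · have := pointwise_aux hp h
    rw [show (signedPow (p/2) y - signedPow (p/2) x)^2
        = (signedPow (p/2) x - signedPow (p/2) y)^2 from by ring] at this
    rwa [abs_sub_comm] at this

private lemma signedPow_sq {p : ℝ} (hp : 2 ≤ p) (t : ℝ) :
    signedPow (p/2) t ^ 2 = |t| ^ p := by
  have key : ∀ s : ℝ, 0 ≤ s → (s ^ (p/2)) ^ 2 = s ^ p := by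
    intro s hs
    rw [← Real.rpow_natCast (s ^ (p/2)) 2, ← Real.rpow_mul hs]
    norm_num
  rw [signedPow]
  split_ifs with h
  · rw [key _ h, abs_of_nonneg h]
  · rw [neg_pow, key _ (by linarith : (0:ℝ) ≤ -t)]
    simp [abs_of_neg (not_le.1 h)]

private lemma scalarC {ι : Type*} (s : Finset ι) {p : ℝ} (hp : 2 ≤ p) (c : ι → ℝ) :
    ∑ i ∈ s, ∑ j ∈ s, |c i - c j| ^ p ≤ 2 ^ (p - 1) * s.card * ∑ i ∈ s, |c i| ^ p := by
  set g : ι → ℝ := fun i => signedPow (p/2) (c i) with hg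
  have h1 : ∑ i ∈ s, ∑ j ∈ s, |c i - c j| ^ p
      ≤ 2 ^ (p - 2) * ∑ i ∈ s, ∑ j ∈ s, (g i - g j) ^ 2 := by
    rw [Finset.mul_sum]
    refine Finset.sum_le_sum fun i _ => ?_
    rw [Finset.mul_sum]
    exact Finset.sum_le_sum fun j _ => pointwise hp _ _
  have h2 : ∑ i ∈ s, ∑ j ∈ s, (g i - g j) ^ 2
      = 2 * (s.card : ℝ) * (∑ i ∈ s, g i ^ 2) - 2 * (∑ i ∈ s, g i) ^ 2 := by
    have key : ∀ i ∈ s, ∑ j ∈ s, (g i - g j) ^ 2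
        = (s.card : ℝ) * g i ^ 2 - 2 * g i * (∑ j ∈ s, g j) + ∑ j ∈ s, g j ^ 2 := by
      intro i _
      have e : ∀ j ∈ s, (g i - g j) ^ 2 = g i ^ 2 - 2 * g i * g j + g j ^ 2 :=
        fun j _ => by ring
      rw [Finset.sum_congr rfl e, Finset.sum_add_distrib, Finset.sum_sub_distrib,
        Finset.sum_const, nsmul_eq_mul, ← Finset.mul_sum]
    rw [Finset.sum_congr rfl key, Finset.sum_add_distrib, Finset.sum_sub_distrib,
      ← Finset.mul_sum, ← Finset.sum_mul, Finset.sum_const, nsmul_eq_mul, ← Finset.mul_sum]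
    ring
  have h3 : (0:ℝ) ≤ (∑ i ∈ s, g i) ^ 2 := sq_nonneg _
  have h4 : (0:ℝ) < 2 ^ (p - 2) := Real.rpow_pos_of_pos (by norm_num) _
  have h5 : ∑ i ∈ s, g i ^ 2 = ∑ i ∈ s, |c i| ^ p :=
    Finset.sum_congr rfl fun i _ => signedPow_sq hp _
  have h6 : (2:ℝ) ^ (p - 1) = 2 ^ (p - 2) * 2 := by
    rw [show p - 1 = (p - 2) + 1 by ring, Real.rpow_add (by norm_num : (0:ℝ) < 2),
      Real.rpow_one]
  calc ∑ i ∈ s, ∑ j ∈ s, |c i - c j| ^ p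
      ≤ 2 ^ (p - 2) * (2 * (s.card : ℝ) * (∑ i ∈ s, g i ^ 2) - 2 * (∑ i ∈ s, g i) ^ 2) := by
        rw [← h2]; exact h1
    _ ≤ 2 ^ (p - 2) * (2 * (s.card : ℝ) * (∑ i ∈ s, g i ^ 2)) := by
        apply mul_le_mul_of_nonneg_left _ h4.le
        linarith
    _ = 2 ^ (p - 1) * s.card * ∑ i ∈ s, |c i| ^ p := by rw [h5, h6]; ring

private lemma vectorC {p : ℝ} (hp : 2 ≤ p) [Fact (1 ≤ ENNReal.ofReal p)]
    (s : Finset ℕ) (x : ℕ → lp (fun _ : ℕ => ℝ) (ENNReal.ofReal p))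
    (y : lp (fun _ : ℕ => ℝ) (ENNReal.ofReal p)) :
    ∑ i ∈ s, ∑ j ∈ s, ‖x i - x j‖ ^ p
      ≤ 2 ^ (p - 1) * s.card * ∑ i ∈ s, ‖x i - y‖ ^ p := by
  have hPt : (ENNReal.ofReal p).toReal = p := ENNReal.toReal_ofReal (by linarith)
  have hpt : 0 < (ENNReal.ofReal p).toReal := by rw [hPt]; linarith
  have norm_eq : ∀ u : lp (fun _ : ℕ => ℝ) (ENNReal.ofReal p),
      ‖u‖ ^ p = ∑' k, |u k| ^ p := by
    intro u
    have h := lp.norm_rpow_eq_tsum hpt u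
    rw [hPt] at h
    simpa [Real.norm_eq_abs] using h
  have hsum : ∀ u : lp (fun _ : ℕ => ℝ) (ENNReal.ofReal p),
      Summable (fun k => |u k| ^ p) := by
    intro u
    have h := (lp.memℓp u).summable hpt
    rw [hPt] at h
    simpa [Real.norm_eq_abs] using h
  have S1 : ∀ z : ℕ × ℕ, Summable (fun k => |x z.1 k - x z.2 k| ^ p) := by
    intro z
    have := hsum (x z.1 - x z.2)
    simpa [lp.coeFn_sub, Pi.sub_apply] using this
  have S2 : ∀ i : ℕ, Summable (fun k => |x i k - y k| ^ p) := by
    intro i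
    have := hsum (x i - y)
    simpa [lp.coeFn_sub, Pi.sub_apply] using this
  have norm_eq' : ∀ i j : ℕ, ‖x i - x j‖ ^ p = ∑' k, |x i k - x j k| ^ p := by
    intro i j
    rw [norm_eq (x i - x j)]
    exact tsum_congr fun k => by simp [lp.coeFn_sub, Pi.sub_apply]
  have norm_eq2 : ∀ i : ℕ, ‖x i - y‖ ^ p = ∑' k, |x i k - y k| ^ p := by
    intro i
    rw [norm_eq (x i - y)]
    exact tsum_congr fun k => by simp [lp.coeFn_sub, Pi.sub_apply]
  calc ∑ i ∈ s, ∑ j ∈ s, ‖x i - x j‖ ^ p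
      = ∑ z ∈ s ×ˢ s, ∑' k, |x z.1 k - x z.2 k| ^ p := by
        rw [Finset.sum_product]
        exact Finset.sum_congr rfl fun i _ => Finset.sum_congr rfl fun j _ => norm_eq' i j
    _ = ∑' k, ∑ z ∈ s ×ˢ s, |x z.1 k - x z.2 k| ^ p :=
        (Summable.tsum_finsetSum fun z _ => S1 z).symm
    _ ≤ ∑' k, 2 ^ (p - 1) * s.card * ∑ i ∈ s, |x i k - y k| ^ p := by
        refine Summable.tsum_le_tsum (fun k => ?_) (summable_sum fun z _ => S1 z)
          (((summable_sum fun i (_ : i ∈ s) => S2 i).mul_left _))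
        have h := scalarC s hp (fun i => x i k - y k)
        calc ∑ z ∈ s ×ˢ s, |x z.1 k - x z.2 k| ^ p
            = ∑ i ∈ s, ∑ j ∈ s, |(x i k - y k) - (x j k - y k)| ^ p := by
              rw [Finset.sum_product]
              exact Finset.sum_congr rfl fun i _ => Finset.sum_congr rfl fun j _ => by
                rw [sub_sub_sub_cancel_right]
          _ ≤ 2 ^ (p - 1) * s.card * ∑ i ∈ s, |x i k - y k| ^ p := h
    _ = 2 ^ (p - 1) * s.card * ∑ i ∈ s, ‖x i - y‖ ^ p := by
        rw [tsum_mul_left, Summable.tsum_finsetSum fun i (_ : i ∈ s) => S2 i]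
        exact congrArg _ (Finset.sum_congr rfl fun i _ => (norm_eq2 i).symm)

/-- Lower bound for the distortion of embedding the star metric `★_n` into
`ℓ_p` for `2 ≤ p < ∞`. -/
theorem star_into_lp_two_le_p (n : ℕ) (hn : 2 ≤ n)
    (p : ℝ) (hp : 2 ≤ p) [Fact (1 ≤ ENNReal.ofReal p)]
    (f : ℕ → lp (fun _ : ℕ => ℝ) (ENNReal.ofReal p)) (L : ℝ)
    (hf : ∀ i j, i ≤ n → j ≤ n →
      starDist i j ≤ ‖f i - f j‖ ∧ ‖f i - f j‖ ≤ L * starDist i j) :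
    (2 : ℝ) ^ ((1 : ℝ) / p) * (1 - 1 / (n : ℝ)) ^ ((1 : ℝ) / p) ≤ L := by
  have hp0 : (0:ℝ) < p := by linarith
  have hn0 : (0:ℝ) < (n:ℝ) := by positivity
  have hn1 : (1:ℝ) ≤ (n:ℝ) := by exact_mod_cast Nat.one_le_of_lt hn
  -- L ≥ 1
  have hL1 : (1:ℝ) ≤ L := by
    have h10 := hf 1 0 (by omega) (by omega)
    have hd : starDist 1 0 = 1 := by norm_num [starDist]
    rw [hd] at h10
    calc (1:ℝ) ≤ ‖f 1 - f 0‖ := h10.1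
      _ ≤ L * 1 := h10.2
      _ = L := mul_one L
  have hL0 : (0:ℝ) ≤ L := by linarith
  set s : Finset ℕ := Finset.Icc 1 n with hs
  have hcard : (s.card : ℝ) = n := by
    rw [hs, Nat.card_Icc]
    push_cast [Nat.add_sub_cancel]
    ring
  have hmem : ∀ i ∈ s, 1 ≤ i ∧ i ≤ n := fun i hi => Finset.mem_Icc.1 hi
  -- lower bound on the double sum
  have lower : (n:ℝ) * ((n:ℝ) - 1) * 2 ^ p ≤ ∑ i ∈ s, ∑ j ∈ s, ‖f i - f j‖ ^ p := by
    have step : ∀ i ∈ s, ∀ j ∈ s, (if i = j then (0:ℝ) else 2 ^ p) ≤ ‖f i - f j‖ ^ p := by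
      intro i hi j hj
      by_cases h : i = j
      · simpa [h] using Real.rpow_nonneg (norm_nonneg (f i - f j)) p
      · rw [if_neg h]
        have hij : starDist i j = 2 := by
          have h1i := (hmem i hi).1
          have h1j := (hmem j hj).1
          rw [starDist, if_neg h, if_neg]
          push_neg
          exact ⟨by omega, by omega⟩
        have h2 : (2:ℝ) ≤ ‖f i - f j‖ := by
          have := (hf i j (hmem i hi).2 (hmem j hj).2).1
          rwa [hij] at this
        exact Real.rpow_le_rpow (by norm_num) h2 (by linarith)
    have e1 : ∀ i ∈ s, ∑ j ∈ s, (if i = j then (0:ℝ) else 2 ^ p)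
        = (n:ℝ) * 2 ^ p - 2 ^ p := by
      intro i hi
      have e : ∀ j ∈ s, (if i = j then (0:ℝ) else 2 ^ p)
          = 2 ^ p - (if i = j then (2:ℝ) ^ p else 0) := by
        intro j _
        split_ifs <;> ring
      rw [Finset.sum_congr rfl e, Finset.sum_sub_distrib, Finset.sum_const, nsmul_eq_mul,
        Finset.sum_ite_eq, if_pos hi, hcard]
    calc (n:ℝ) * ((n:ℝ) - 1) * 2 ^ p
        = ∑ i ∈ s, ((n:ℝ) * 2 ^ p - 2 ^ p) := by
          rw [Finset.sum_const, nsmul_eq_mul, hcard]; ring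
      _ = ∑ i ∈ s, ∑ j ∈ s, (if i = j then (0:ℝ) else 2 ^ p) :=
          (Finset.sum_congr rfl fun i hi => (e1 i hi).symm)
      _ ≤ ∑ i ∈ s, ∑ j ∈ s, ‖f i - f j‖ ^ p :=
          Finset.sum_le_sum fun i hi => Finset.sum_le_sum fun j hj => step i hi j hj
  -- upper bound on the center sums
  have upper : ∑ i ∈ s, ‖f i - f 0‖ ^ p ≤ (n:ℝ) * L ^ p := by
    have step : ∀ i ∈ s, ‖f i - f 0‖ ^ p ≤ L ^ p := by
      intro i hi
      have hij : starDist i 0 = 1 := by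
        have h1i := (hmem i hi).1
        rw [starDist, if_neg (by omega : ¬ i = 0), if_pos (Or.inr rfl)]
      have h2 : ‖f i - f 0‖ ≤ L := by
        have := (hf i 0 (hmem i hi).2 (by omega)).2
        rwa [hij, mul_one] at this
      exact Real.rpow_le_rpow (norm_nonneg _) h2 (by linarith)
    calc ∑ i ∈ s, ‖f i - f 0‖ ^ p ≤ ∑ i ∈ s, L ^ p := Finset.sum_le_sum step
      _ = (n:ℝ) * L ^ p := by rw [Finset.sum_const, nsmul_eq_mul, hcard]
  have key := vectorC hp s f (f 0)
  rw [hcard] at key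
  have ha : (0:ℝ) < 2 ^ (p - 1) := Real.rpow_pos_of_pos (by norm_num) _
  have h2p : (2:ℝ) ^ p = 2 * 2 ^ (p - 1) := by
    have h := Real.rpow_add (by norm_num : (0:ℝ) < 2) 1 (p - 1)
    rw [show 1 + (p - 1) = p by ring, Real.rpow_one] at h
    exact h
  have main : (n:ℝ) * ((n:ℝ) - 1) * (2 * 2 ^ (p - 1))
      ≤ 2 ^ (p - 1) * (n:ℝ) * ((n:ℝ) * L ^ p) := by
    calc (n:ℝ) * ((n:ℝ) - 1) * (2 * 2 ^ (p - 1))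
        ≤ ∑ i ∈ s, ∑ j ∈ s, ‖f i - f j‖ ^ p := by rw [← h2p]; exact lower
      _ ≤ 2 ^ (p - 1) * (n:ℝ) * ∑ i ∈ s, ‖f i - f 0‖ ^ p := key
      _ ≤ 2 ^ (p - 1) * (n:ℝ) * ((n:ℝ) * L ^ p) := by
          apply mul_le_mul_of_nonneg_left upper
          positivity
  have hLp : 2 * (1 - 1 / (n:ℝ)) ≤ L ^ p := by
    have h1 : 2 * ((n:ℝ) - 1) ≤ (n:ℝ) * L ^ p := by
      have hmn : (0:ℝ) < 2 ^ (p - 1) * (n:ℝ) := by positivity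
      rw [← mul_le_mul_iff_right₀ hmn]
      calc 2 ^ (p - 1) * (n:ℝ) * (2 * ((n:ℝ) - 1))
          = (n:ℝ) * ((n:ℝ) - 1) * (2 * 2 ^ (p - 1)) := by ring
        _ ≤ 2 ^ (p - 1) * (n:ℝ) * ((n:ℝ) * L ^ p) := main
    have e : 2 * (1 - 1 / (n:ℝ)) = 2 * ((n:ℝ) - 1) / (n:ℝ) := by
      field_simp
    rw [e, div_le_iff₀ hn0]
    nlinarith
  have hbase : (0:ℝ) ≤ 2 * (1 - 1 / (n:ℝ)) := by
    have : 1 / (n:ℝ) ≤ 1 := by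
      rw [div_le_one hn0]; exact hn1
    linarith
  have hfin := Real.rpow_le_rpow hbase hLp (by positivity : (0:ℝ) ≤ 1 / p)
  have hR : (L ^ p) ^ ((1:ℝ) / p) = L := by
    rw [one_div, Real.rpow_rpow_inv hL0 (ne_of_gt hp0)]
  have hLft : (2 * (1 - 1 / (n:ℝ))) ^ ((1:ℝ) / p)
      = (2:ℝ) ^ ((1:ℝ) / p) * (1 - 1 / (n:ℝ)) ^ ((1:ℝ) / p) := by
    rw [Real.mul_rpow (by norm_num) (by linarith)]
  rw [hLft, hR] at hfin
  exact hfin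
end

section
/- Every Q space (metric quotient) of the star metric ★_{n-1} on {0,1,...,n-1} with k+1 equivalence classes is isometric to the star metric ★_k. -/
def chainLength {ι : Type*} (w : ι → ι → ℝ) : List ι → ℝ
  | [] => 0
  | [_] => 0
  | a :: b :: l => w a b + chainLength w (b :: l)

noncomputable def geoDist {ι : Type*} (w : ι → ι → ℝ) (x y : ι) : ℝ :=
  sInf {c | ∃ l : List ι, l.head? = some x ∧ l.getLast? = some y ∧ chainLength w l = c}

noncomputable def setDist {M : Type*} (d : M → M → ℝ) (A B : Set M) : ℝ :=
  sInf {r | ∃ a ∈ A, ∃ b ∈ B, d a b = r}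

lemma starDist_self (i : ℕ) : starDist i i = 0 := by simp [starDist]

lemma starDist_eq {i j : ℕ} (h : i ≠ j) :
    starDist i j = if i = 0 ∨ j = 0 then 1 else 2 := by
  simp [starDist, h]

lemma starDist_tri (x y z : ℕ) : starDist x z ≤ starDist x y + starDist y z := by
  unfold starDist
  split_ifs <;> norm_num <;> omega

lemma geoDist_eq {ι : Type*} (w : ι → ι → ℝ) (h0 : ∀ x, w x x = 0)
    (htri : ∀ x y z, w x z ≤ w x y + w y z) (x y : ι) :
    geoDist w x y = w x y := by
  have hlow : ∀ l : List ι, ∀ a b : ι, l.head? = some a → l.getLast? = some b →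
      w a b ≤ chainLength w l := by
    intro l
    induction l with
    | nil => intro a b h _; simp at h
    | cons c t ih =>
      intro a b ha hb
      simp only [List.head?_cons, Option.some.injEq] at ha
      subst ha
      cases t with
      | nil =>
        simp only [List.getLast?_singleton, Option.some.injEq] at hb
        subst hb
        simp [chainLength, h0]
      | cons d t' =>
        have hb' : (d :: t').getLast? = some b := by
          simpa [List.getLast?_cons_cons] using hb
        have := ih d b rfl hb'
        calc w c b ≤ w c d + w d b := htri _ _ _
          _ ≤ w c d + chainLength w (d :: t') := by linarith
          _ = chainLength w (c :: d :: t') := rfl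
  have hmem : w x y ∈ {c | ∃ l : List ι, l.head? = some x ∧ l.getLast? = some y ∧
      chainLength w l = c} := by
    refine ⟨[x, y], by simp, by simp, ?_⟩
    simp [chainLength]
  have hlb : ∀ c ∈ {c | ∃ l : List ι, l.head? = some x ∧ l.getLast? = some y ∧
      chainLength w l = c}, w x y ≤ c := by
    rintro c ⟨l, ha, hb, rfl⟩
    exact hlow l x y ha hb
  exact IsLeast.csInf_eq ⟨hmem, hlb⟩

/-- Every `Q` space (metric quotient) of the star metric `★_{n-1}` on `{0,…,n-1}`
with `k+1` classes is isometric to the star metric `★_k`. -/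
theorem quotient_of_star_is_star (n k : ℕ) (hn : 1 ≤ n)
    (U : Fin (k + 1) → Finset ℕ)
    (hne : ∀ i, (U i).Nonempty)
    (hsub : ∀ i, U i ⊆ Finset.range n)
    (hdisj : ∀ i j, i ≠ j → Disjoint (U i) (U j))
    (hcover : ∀ x ∈ Finset.range n, ∃ i, x ∈ U i) :
    ∃ σ : Fin (k + 1) ≃ Fin (k + 1), ∀ u v : Fin (k + 1),
      geoDist (fun i j => if i = j then 0 else
          setDist starDist (↑(U i) : Set ℕ) (↑(U j) : Set ℕ)) u v
        = starDist (σ u).val (σ v).val := by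
  obtain ⟨i0, hi0⟩ := hcover 0 (Finset.mem_range.mpr hn)
  set σ : Fin (k + 1) ≃ Fin (k + 1) := Equiv.swap i0 0 with hσ
  set w : Fin (k + 1) → Fin (k + 1) → ℝ := (fun i j => if i = j then 0 else
      setDist starDist (↑(U i) : Set ℕ) (↑(U j) : Set ℕ)) with hwdef
  have hzero : ∀ u : Fin (k + 1), u ≠ i0 → (0 : ℕ) ∉ U u := by
    intro u hu h0
    exact Finset.disjoint_left.mp (hdisj u i0 hu) h0 hi0
  have hneq : ∀ u v : Fin (k + 1), u ≠ v → ∀ a ∈ U u, ∀ b ∈ U v, a ≠ b := by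
    intro u v huv a ha b hb h
    exact Finset.disjoint_left.mp (hdisj u v huv) ha (h ▸ hb)
  have hσ0 : ∀ u : Fin (k + 1), σ u = 0 ↔ u = i0 := by
    intro u
    constructor
    · intro h
      have h2 : u = σ.symm 0 := by rw [← h]; simp
      simpa [hσ, Equiv.swap_apply_right] using h2
    · intro h; simp [h, hσ, Equiv.swap_apply_left]
  have hval0 : ∀ u : Fin (k+1), (σ u).val = 0 ↔ u = i0 := by
    intro u
    rw [← hσ0 u, Fin.ext_iff, Fin.val_zero]
  have hw : ∀ u v, w u v = starDist (σ u).val (σ v).val := by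
    intro u v
    rcases eq_or_ne u v with rfl | huv
    · simp [hwdef, starDist_self]
    · have hσuv : (σ u).val ≠ (σ v).val := by
        simp only [ne_eq, Fin.val_eq_val, EmbeddingLike.apply_eq_iff_eq]
        exact huv
      rw [hwdef]
      simp only [if_neg huv]
      rw [starDist_eq hσuv]
      by_cases hcase : (σ u).val = 0 ∨ (σ v).val = 0
      · rw [if_pos hcase]
        rcases hcase with h | h
        · have hu : u = i0 := (hval0 u).mp h
          subst hu
          obtain ⟨b, hb⟩ := hne v
          have hb0 : b ≠ 0 := fun hb0 => hzero v (Ne.symm huv) (hb0 ▸ hb)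
          refine IsLeast.csInf_eq ⟨⟨0, Finset.mem_coe.mpr hi0, b, Finset.mem_coe.mpr hb, ?_⟩, ?_⟩
          · simp [starDist, Ne.symm hb0]
          · rintro r ⟨a, ha, b', hb', rfl⟩
            have hab : a ≠ b' := hneq _ _ huv a (Finset.mem_coe.mp ha) b' (Finset.mem_coe.mp hb')
            rw [starDist_eq hab]
            split_ifs <;> norm_num
        · have hv : v = i0 := (hval0 v).mp h
          subst hv
          obtain ⟨a, ha⟩ := hne u
          have ha0 : a ≠ 0 := fun ha0 => hzero u huv (ha0 ▸ ha)
          refine IsLeast.csInf_eq ⟨⟨a, Finset.mem_coe.mpr ha, 0, Finset.mem_coe.mpr hi0, ?_⟩, ?_⟩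
          · simp [starDist, ha0]
          · rintro r ⟨a', ha', b', hb', rfl⟩
            have hab : a' ≠ b' := hneq _ _ huv a' (Finset.mem_coe.mp ha') b' (Finset.mem_coe.mp hb')
            rw [starDist_eq hab]
            split_ifs <;> norm_num
      · rw [if_neg hcase]
        push_neg at hcase
        have hui : u ≠ i0 := fun h => hcase.1 ((hval0 u).mpr h)
        have hvi : v ≠ i0 := fun h => hcase.2 ((hval0 v).mpr h)
        have hu0 := hzero u hui
        have hv0 := hzero v hvi
        have key : ∀ a ∈ U u, ∀ b ∈ U v, starDist a b = 2 := by
          intro a ha b hb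
          have hab : a ≠ b := hneq _ _ huv a ha b hb
          have ha0 : a ≠ 0 := fun h => hu0 (h ▸ ha)
          have hb0 : b ≠ 0 := fun h => hv0 (h ▸ hb)
          simp [starDist, hab, ha0, hb0]
        obtain ⟨a, ha⟩ := hne u
        obtain ⟨b, hb⟩ := hne v
        refine IsLeast.csInf_eq ⟨⟨a, Finset.mem_coe.mpr ha, b, Finset.mem_coe.mpr hb, key a ha b hb⟩, ?_⟩
        rintro r ⟨a', ha', b', hb', rfl⟩
        rw [key a' (Finset.mem_coe.mp ha') b' (Finset.mem_coe.mp hb')]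
  have h0 : ∀ x, w x x = 0 := fun x => by rw [hw]; exact starDist_self _
  have htri : ∀ x y z, w x z ≤ w x y + w y z := fun x y z => by
    rw [hw, hw, hw]; exact starDist_tri _ _ _
  exact ⟨σ, fun u v => by rw [geoDist_eq w h0 htri u v]; exact hw u v⟩
end

section
/- Fix m ≥ 1 and let X be a finite metric space which has an m-center. Then for every 1 ≤ p < ∞, X embeds into ℓ_p with distortion at most 96·⌈(log m)/p⌉. -/
open Finset
open scoped Classical
set_option linter.unusedSectionVars false
set_option linter.unusedVariables false
set_option maxHeartbeats 1000000

namespace MC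

variable {X : Type*} [MetricSpace X] [Fintype X]




/-- closed ball as a Finset -/
noncomputable def cB (u : X) (r : ℝ) : Finset X := Finset.univ.filter (fun z => dist u z ≤ r)

/-- open ball as a Finset -/
noncomputable def oB (u : X) (r : ℝ) : Finset X := Finset.univ.filter (fun z => dist u z < r)

lemma mem_cB {u z : X} {r : ℝ} : z ∈ cB u r ↔ dist u z ≤ r := by simp [cB]
lemma mem_oB {u z : X} {r : ℝ} : z ∈ oB u r ↔ dist u z < r := by simp [oB]

lemma cB_mono {u : X} {r r' : ℝ} (h : r ≤ r') : cB u r ⊆ cB u r' := by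
  intro z hz; rw [mem_cB] at *; exact hz.trans h

lemma self_mem_cB {u : X} {r : ℝ} (h : 0 ≤ r) : u ∈ cB u r := by
  rw [mem_cB, dist_self]; exact h

noncomputable def rad (c Q : ℝ) (u : X) : ℝ :=
  (insert c ((Finset.univ.image (dist u)).filter
      (fun r => r ≤ c ∧ Q ≤ ((cB u r).card : ℝ)))).min' (insert_nonempty _ _)

lemma rad_le_c (c Q : ℝ) (u : X) : rad c Q u ≤ c :=
  min'_le _ _ (mem_insert_self _ _)

lemma rad_nonneg {c : ℝ} (hc : 0 ≤ c) (Q : ℝ) (u : X) : 0 ≤ rad c Q u := by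
  apply le_min'
  intro y hy
  rcases mem_insert.mp hy with h | h
  · exact h ▸ hc
  · obtain ⟨z, _, hz⟩ := mem_image.mp (mem_filter.mp h).1
    exact hz ▸ dist_nonneg

lemma rad_mono {Q Q' : ℝ} (h : Q ≤ Q') (c : ℝ) (u : X) : rad c Q u ≤ rad c Q' u := by
  apply min'_le
  have hsub : (insert c ((Finset.univ.image (dist u)).filter
      (fun r => r ≤ c ∧ Q' ≤ ((cB u r).card : ℝ)))) ⊆
      (insert c ((Finset.univ.image (dist u)).filter
      (fun r => r ≤ c ∧ Q ≤ ((cB u r).card : ℝ)))) := by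
    apply insert_subset_insert
    intro r hr
    rw [mem_filter] at *
    exact ⟨hr.1, hr.2.1, h.trans hr.2.2⟩
  exact hsub (min'_mem _ _)

lemma rad_zero {c : ℝ} (hc : 0 ≤ c) {Q : ℝ} (hQ : Q ≤ 1) (u : X) : rad c Q u = 0 := by
  refine le_antisymm ?_ (rad_nonneg hc Q u)
  apply min'_le
  refine mem_insert_of_mem (mem_filter.mpr ⟨?_, hc, ?_⟩)
  · exact mem_image.mpr ⟨u, mem_univ u, dist_self u⟩
  · refine hQ.trans ?_
    have : u ∈ cB u (0:ℝ) := self_mem_cB le_rfl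
    have h1 : 1 ≤ (cB u (0:ℝ)).card := card_pos.mpr ⟨u, this⟩
    exact_mod_cast h1

lemma card_lt_of_lt_rad {c Q : ℝ} {u : X} {r : ℝ} (hr0 : 0 ≤ r)
    (hr : r < rad c Q u) : ((cB u r).card : ℝ) < Q := by
  by_contra hcon
  push_neg at hcon
  have hne : (cB u r).Nonempty := ⟨u, self_mem_cB hr0⟩
  obtain ⟨z₀, hz₀, hsup⟩ := exists_mem_eq_sup' hne (fun z => dist u z)
  set r'' := (cB u r).sup' hne (fun z => dist u z) with hr''
  have hr''le : r'' ≤ r := by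
    apply sup'_le
    intro z hz; exact mem_cB.mp hz
  have hsubset : cB u r ⊆ cB u r'' := by
    intro z hz
    rw [mem_cB]
    exact le_sup' (fun z => dist u z) hz
  have hcard : Q ≤ ((cB u r'').card : ℝ) := by
    refine hcon.trans ?_
    exact_mod_cast card_le_card hsubset
  have hmem : r'' ∈ insert c ((Finset.univ.image (dist u)).filter
      (fun s => s ≤ c ∧ Q ≤ ((cB u s).card : ℝ))) := by
    refine mem_insert_of_mem (mem_filter.mpr ⟨?_, ?_, hcard⟩)
    · exact mem_image.mpr ⟨z₀, mem_univ z₀, hsup.symm⟩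
    · exact hr''le.trans (hr.le.trans (rad_le_c c Q u))
  have := min'_le _ _ hmem
  have : rad c Q u ≤ r := le_trans this hr''le
  exact absurd hr (not_lt.mpr this)

lemma card_oB_rad_lt {c Q : ℝ} (hQ : 0 < Q) (u : X) :
    ((oB u (rad c Q u)).card : ℝ) < Q := by
  rcases (oB u (rad c Q u)).eq_empty_or_nonempty with he | hne
  · rw [he]; simpa using hQ
  · obtain ⟨z₀, hz₀, hsup⟩ := exists_mem_eq_sup' hne (fun z => dist u z)
    set r'' := (oB u (rad c Q u)).sup' hne (fun z => dist u z) with hr''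
    have hr''lt : r'' < rad c Q u := by
      rw [hsup]; exact mem_oB.mp hz₀
    have hr''0 : 0 ≤ r'' := hsup ▸ dist_nonneg
    have hsubset : oB u (rad c Q u) ⊆ cB u r'' := by
      intro z hz
      rw [mem_cB]
      exact le_sup' (fun z => dist u z) hz
    calc ((oB u (rad c Q u)).card : ℝ) ≤ ((cB u r'').card : ℝ) := by
          exact_mod_cast card_le_card hsubset
      _ < Q := card_lt_of_lt_rad hr''0 hr''lt

lemma card_cB_rad {c Q : ℝ} {u : X} (h : rad c Q u < c) :
    Q ≤ ((cB u (rad c Q u)).card : ℝ) := by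
  have := min'_mem (insert c ((Finset.univ.image (dist u)).filter
      (fun r => r ≤ c ∧ Q ≤ ((cB u r).card : ℝ)))) (insert_nonempty _ _)
  rcases mem_insert.mp this with heq | hmem
  · exact absurd heq (ne_of_lt h)
  · exact (mem_filter.mp hmem).2.2





/-- Bernoulli product weight -/
def mu (u : ℝ) (S : Finset X) : ℝ := u ^ S.card * (1 - u) ^ (Fintype.card X - S.card)

lemma mu_nonneg {u : ℝ} (h0 : 0 ≤ u) (h1 : u ≤ 1) (S : Finset X) : 0 ≤ mu u S := by
  unfold mu
  have : (0:ℝ) ≤ 1 - u := by linarith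
  positivity

lemma sum_pow_binom (u : ℝ) (T : Finset X) :
    ∑ S ∈ T.powerset, u ^ S.card * (1 - u) ^ (T.card - S.card) = 1 := by
  have h := Finset.prod_add (fun _ : X => u) (fun _ : X => 1 - u) T
  simp only [prod_const] at h
  have h2 : ∀ S ∈ T.powerset, u ^ S.card * (1 - u) ^ ((T \ S).card) =
      u ^ S.card * (1 - u) ^ (T.card - S.card) := by
    intro S hS
    rw [card_sdiff_of_subset (mem_powerset.mp hS)]
  rw [Finset.sum_congr rfl h2] at h
  have : (u + (1 - u)) = 1 := by ring
  rw [this] at h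
  simpa using h.symm

lemma sum_mu_disjoint (u : ℝ) (C : Finset X) :
    ∑ S ∈ Finset.univ.filter (fun S : Finset X => Disjoint S C), mu u S
      = (1 - u) ^ C.card := by
  classical
  have hfilter : Finset.univ.filter (fun S : Finset X => Disjoint S C)
      = (Finset.univ \ C).powerset := by
    ext S
    simp only [mem_filter, mem_univ, true_and, mem_powerset, subset_sdiff, subset_univ]
  rw [hfilter]
  have hcardU : (Finset.univ \ C).card = Fintype.card X - C.card := by
    rw [card_sdiff_of_subset (subset_univ C), card_univ]
  have hmu : ∀ S ∈ (Finset.univ \ C).powerset, mu u S =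
      (u ^ S.card * (1 - u) ^ ((Finset.univ \ C).card - S.card)) * (1 - u) ^ C.card := by
    intro S hS
    have hSle : S.card ≤ (Finset.univ \ C).card := card_le_card (mem_powerset.mp hS)
    have hCle : C.card ≤ Fintype.card X := by
      simpa [card_univ] using card_le_card (subset_univ C)
    unfold mu
    rw [mul_assoc, ← pow_add]
    congr 2
    rw [hcardU] at hSle ⊢
    omega
  rw [Finset.sum_congr rfl hmu, ← Finset.sum_mul, sum_pow_binom, one_mul]

lemma sum_mu_event (u : ℝ) {A B : Finset X} (hAB : Disjoint A B) :
    ∑ S ∈ Finset.univ.filter (fun S : Finset X => Disjoint S A ∧ ¬ Disjoint S B), mu u S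
      = (1 - u) ^ A.card * (1 - (1 - u) ^ B.card) := by
  classical
  have hsplit := Finset.sum_filter_add_sum_filter_not
    (Finset.univ.filter (fun S : Finset X => Disjoint S A))
    (fun S : Finset X => ¬ Disjoint S B) (mu u)
  rw [filter_filter, filter_filter] at hsplit
  have h1 : Finset.univ.filter (fun S : Finset X => Disjoint S A ∧ ¬¬Disjoint S B)
      = Finset.univ.filter (fun S : Finset X => Disjoint S (A ∪ B)) := by
    apply filter_congr
    intro S _
    simp only [not_not, disjoint_union_right]
  rw [h1, sum_mu_disjoint, sum_mu_disjoint] at hsplit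
  have h2 : (A ∪ B).card = A.card + B.card := card_union_of_disjoint hAB
  rw [h2, pow_add] at hsplit
  linarith [hsplit]

/-- minimum distance to a finite set (0 if empty) -/
noncomputable def dmin (S : Finset X) (x : X) : ℝ :=
  if h : S.Nonempty then S.inf' h (fun z => dist x z) else 0

lemma dmin_le_of_mem {S : Finset X} {z : X} (hz : z ∈ S) (x : X) :
    dmin S x ≤ dist x z := by
  rw [dmin, dif_pos ⟨z, hz⟩]
  exact inf'_le _ hz

lemma le_dmin {S : Finset X} (h : S.Nonempty) {x : X} {r : ℝ}
    (hall : ∀ z ∈ S, r ≤ dist x z) : r ≤ dmin S x := by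
  rw [dmin, dif_pos h]
  exact le_inf' h _ hall

lemma dmin_lip (S : Finset X) (x y : X) : |dmin S x - dmin S y| ≤ dist x y := by
  rcases S.eq_empty_or_nonempty with he | hne
  · simp [he, dmin, dist_nonneg]
  · rw [abs_sub_le_iff]
    constructor
    · obtain ⟨z, hz, hzeq⟩ := exists_mem_eq_inf' hne (fun z => dist y z)
      have h1 : dmin S x ≤ dist x z := dmin_le_of_mem hz x
      have h2 : dmin S y = dist y z := by rw [dmin, dif_pos hne, hzeq]
      have h3 : dist x z ≤ dist x y + dist y z := dist_triangle x y z
      linarith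
    · obtain ⟨z, hz, hzeq⟩ := exists_mem_eq_inf' hne (fun z => dist x z)
      have h1 : dmin S y ≤ dist y z := dmin_le_of_mem hz y
      have h2 : dmin S x = dist x z := by rw [dmin, dif_pos hne, hzeq]
      have h3 : dist y z ≤ dist y x + dist x z := dist_triangle y x z
      rw [dist_comm y x] at h3
      linarith




lemma lp_single_sub (p' : ENNReal) (n : ℕ) (a b : ℝ) :
    lp.single (E := fun _ : ℕ => ℝ) p' n (a - b)
      = lp.single p' n a - lp.single p' n b := by
  refine lp.ext (funext fun m => ?_)
  rw [lp.coeFn_sub]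
  rcases eq_or_ne m n with rfl | hm
  · simp [lp.single_apply_self]
  · simp [lp.single_apply_ne p' n _ hm]

lemma norm_sum_single_embed (p' : ENNReal) [Fact (1 ≤ p')] (hp : 0 < p'.toReal)
    {ι : Type*} [Fintype ι] (e : ι ↪ ℕ) (h : ι → ℝ) :
    ‖∑ i : ι, lp.single (E := fun _ : ℕ => ℝ) p' (e i) (h i)‖ ^ p'.toReal
      = ∑ i : ι, |h i| ^ p'.toReal := by
  classical
  set H : ℕ → ℝ := fun n => ∑ i : ι, if e i = n then h i else 0 with hH
  have hHe : ∀ i : ι, H (e i) = h i := by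
    intro i
    rw [hH]
    simp only []
    rw [Finset.sum_eq_single i]
    · simp
    · intro j _ hji
      rw [if_neg]
      exact fun hc => hji (e.injective hc)
    · intro hi; exact absurd (mem_univ i) hi
  have h1 : (∑ i : ι, lp.single (E := fun _ : ℕ => ℝ) p' (e i) (h i))
      = ∑ n ∈ Finset.univ.map e, lp.single p' n (H n) := by
    rw [Finset.sum_map]
    exact Finset.sum_congr rfl fun i _ => by rw [hHe]
  rw [h1, lp.norm_sum_single hp H (Finset.univ.map e), Finset.sum_map]
  exact Finset.sum_congr rfl fun i _ => by rw [hHe, Real.norm_eq_abs]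




lemma exp_neg_le_one_sub {u : ℝ} (hu0 : 0 < u) (hu1 : u < 1) :
    Real.exp (-(u / (1 - u))) ≤ 1 - u := by
  have h1u : 0 < 1 - u := by linarith
  have h := Real.add_one_le_exp (u / (1 - u))
  have heq : u / (1 - u) + 1 = 1 / (1 - u) := by field_simp; ring
  rw [heq] at h
  have h2 : 1 ≤ (1 - u) * Real.exp (u / (1 - u)) := by
    rw [div_le_iff₀ h1u] at h
    linarith [h]
  have h3 : (0:ℝ) < Real.exp (u / (1 - u)) := Real.exp_pos _
  rw [Real.exp_neg]
  rw [inv_le_iff_one_le_mul₀ h3]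
  linarith [h2]

lemma prob_lower {u p : ℝ} (hp : 1 ≤ p) (hu0 : 0 < u) (hu1 : u ≤ Real.exp (-1))
    (a b : ℕ) (ha : (a : ℝ) * u ≤ 1) (hb : Real.exp (-p) ≤ u * b) :
    Real.exp (-1 / (1 - Real.exp (-1))) * (Real.exp (-Real.exp (-1)) * Real.exp (-p))
      ≤ (1 - u) ^ a * (1 - (1 - u) ^ b) := by
  have he1 : Real.exp (-1) < 1 := by
    rw [Real.exp_lt_one_iff]; norm_num
  have heE : (0:ℝ) < Real.exp (-1) := Real.exp_pos _
  have hu1' : u < 1 := lt_of_le_of_lt hu1 he1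
  have h1u : 0 < 1 - u := by linarith
  have h1E : (0:ℝ) < 1 - Real.exp (-1) := by linarith
  have part1 : Real.exp (-1 / (1 - Real.exp (-1))) ≤ (1 - u) ^ a := by
    have hpow : Real.exp (-(u / (1 - u))) ^ a ≤ (1 - u) ^ a :=
      pow_le_pow_left₀ (Real.exp_pos _).le (exp_neg_le_one_sub hu0 hu1') a
    refine le_trans ?_ hpow
    rw [← Real.exp_nat_mul]
    apply Real.exp_le_exp.mpr
    have hfrac : (a:ℝ) * u / (1 - u) ≤ 1 / (1 - Real.exp (-1)) := by
      apply div_le_div₀ (by norm_num) ha h1E (by linarith)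
    have heq2 : (a:ℝ) * -(u / (1 - u)) = -((a:ℝ) * u / (1 - u)) := by ring
    rw [heq2]
    rw [neg_div]
    linarith [hfrac]
  have part2 : Real.exp (-Real.exp (-1)) * Real.exp (-p) ≤ 1 - (1 - u) ^ b := by
    set x := Real.exp (-p) with hx
    have hx0 : 0 < x := Real.exp_pos _
    have hxE : x ≤ Real.exp (-1) := by
      rw [hx]; apply Real.exp_le_exp.mpr; linarith
    have hstep1 : (1 - u) ^ b ≤ Real.exp (-(u * b)) := by
      have h1 : 1 - u ≤ Real.exp (-u) := by
        have := Real.add_one_le_exp (-u); linarith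
      calc (1 - u) ^ b ≤ Real.exp (-u) ^ b := pow_le_pow_left₀ h1u.le h1 b
        _ = Real.exp ((b:ℝ) * -u) := (Real.exp_nat_mul _ b).symm
        _ = Real.exp (-(u * b)) := by ring_nf
    have hstep2 : Real.exp (-(u * b)) ≤ Real.exp (-x) := by
      apply Real.exp_le_exp.mpr; linarith [hb]
    have hstep3 : x * Real.exp (-x) ≤ 1 - Real.exp (-x) := by
      have h1 := Real.add_one_le_exp x
      have h2 : Real.exp (-x) * Real.exp x = 1 := by
        rw [← Real.exp_add]; simp
      nlinarith [Real.exp_pos (-x), Real.exp_pos x]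
    have hstep4 : Real.exp (-Real.exp (-1)) ≤ Real.exp (-x) :=
      Real.exp_le_exp.mpr (by linarith)
    calc Real.exp (-Real.exp (-1)) * x ≤ Real.exp (-x) * x := by
          apply mul_le_mul_of_nonneg_right hstep4 hx0.le
      _ ≤ 1 - Real.exp (-x) := by linarith [hstep3]
      _ ≤ 1 - (1 - u) ^ b := by linarith [hstep1.trans hstep2]
  have hnn : (0:ℝ) ≤ Real.exp (-Real.exp (-1)) * Real.exp (-p) :=
    mul_nonneg (Real.exp_pos _).le (Real.exp_pos _).le
  exact mul_le_mul part1 part2 hnn (pow_nonneg h1u.le a)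


lemma sum_mu_univ (u : ℝ) : ∑ S : Finset X, mu u S = 1 := by
  classical
  have h1 : (Finset.univ : Finset (Finset X)) = (Finset.univ : Finset X).powerset :=
    Finset.powerset_univ.symm
  rw [h1]
  have h2 := sum_pow_binom u (Finset.univ : Finset X)
  have h3 : ∀ S ∈ (Finset.univ : Finset X).powerset,
      u ^ S.card * (1 - u) ^ ((Finset.univ : Finset X).card - S.card) = mu u S := by
    intro S _
    rw [mu, card_univ]
  rw [Finset.sum_congr rfl h3] at h2
  exact h2

lemma scale_core_aux (p : ℝ) (hp : 1 ≤ p) (x y : X) (c : ℝ) (hc0 : 0 < c)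
    (hcD : 2 * c < dist x y) (t : ℕ)
    (hfar : rad c (Real.exp (p*((t:ℝ)+1))) y ≤ rad c (Real.exp (p*((t:ℝ)+1))) x)
    (hlt : max (rad c (Real.exp (p*(t:ℝ))) x) (rad c (Real.exp (p*(t:ℝ))) y)
         < max (rad c (Real.exp (p*((t:ℝ)+1))) x) (rad c (Real.exp (p*((t:ℝ)+1))) y)) :
    Real.exp (-1 / (1 - Real.exp (-1))) * (Real.exp (-Real.exp (-1)) * Real.exp (-p)) *
      (max (rad c (Real.exp (p*((t:ℝ)+1))) x) (rad c (Real.exp (p*((t:ℝ)+1))) y)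
        - max (rad c (Real.exp (p*(t:ℝ))) x) (rad c (Real.exp (p*(t:ℝ))) y)) ^ p
    ≤ ∑ S : Finset X, mu (Real.exp (-(p*((t:ℝ)+1)))) S * |dmin S x - dmin S y| ^ p := by
  classical
  set Q1 := Real.exp (p*((t:ℝ)+1)) with hQ1
  set Q0 := Real.exp (p*(t:ℝ)) with hQ0
  set u := Real.exp (-(p*((t:ℝ)+1))) with hu
  set r1 := max (rad c Q1 x) (rad c Q1 y) with hr1
  set r0 := max (rad c Q0 x) (rad c Q0 y) with hr0
  have hp0 : 0 < p := lt_of_lt_of_le one_pos hp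
  have hu0 : 0 < u := Real.exp_pos _
  have hr1x : r1 = rad c Q1 x := max_eq_left hfar
  have hr0c : r0 ≤ c := max_le (rad_le_c _ _ _) (rad_le_c _ _ _)
  have hr1c : r1 ≤ c := max_le (rad_le_c _ _ _) (rad_le_c _ _ _)
  have hr0nn : 0 ≤ r0 := le_trans (rad_nonneg hc0.le _ x) (le_max_left _ _)
  have hΔnn : 0 ≤ r1 - r0 := sub_nonneg.mpr hlt.le
  set A := oB x r1 with hA
  set B := cB y r0 with hB
  have hAcard : ((A.card : ℝ)) < Q1 := by
    rw [hA, hr1x]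
    exact card_oB_rad_lt (Real.exp_pos _) x
  have hrad0y : rad c Q0 y < c :=
    lt_of_le_of_lt (le_max_right _ _) (lt_of_lt_of_le hlt hr1c)
  have hBcard : Q0 ≤ ((B.card : ℝ)) := by
    have h1 : rad c Q0 y < c := hrad0y
    have h2 := card_cB_rad h1
    have h3 : cB y (rad c Q0 y) ⊆ cB y r0 := cB_mono (le_max_right _ _)
    calc Q0 ≤ ((cB y (rad c Q0 y)).card : ℝ) := h2
      _ ≤ ((B.card : ℝ)) := by exact_mod_cast card_le_card h3
  have hdisj : Disjoint A B := by
    rw [Finset.disjoint_left]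
    intro z hzA hzB
    have h1 : dist x z < r1 := mem_oB.mp hzA
    have h2 : dist y z ≤ r0 := mem_cB.mp hzB
    have h3 : dist x y ≤ dist x z + dist z y := dist_triangle x z y
    rw [dist_comm z y] at h3
    linarith
  set E := Finset.univ.filter (fun S : Finset X => Disjoint S A ∧ ¬ Disjoint S B) with hE
  have hsep : ∀ S ∈ E, (r1 - r0) ≤ |dmin S x - dmin S y| := by
    intro S hS
    obtain ⟨-, hSA, hSB⟩ := Finset.mem_filter.mp hS
    obtain ⟨z, hzS, hzB⟩ := Finset.not_disjoint_iff.mp hSB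
    have hSne : S.Nonempty := ⟨z, hzS⟩
    have hdy : dmin S y ≤ r0 := le_trans (dmin_le_of_mem hzS y) (mem_cB.mp hzB)
    have hdx : r1 ≤ dmin S x := by
      apply le_dmin hSne
      intro w hw
      have hwA : w ∉ A := Finset.disjoint_left.mp hSA hw
      rw [hA, mem_oB] at hwA
      linarith [not_lt.mp hwA]
    calc r1 - r0 ≤ dmin S x - dmin S y := by linarith
      _ ≤ |dmin S x - dmin S y| := le_abs_self _
  have hu1e : u ≤ Real.exp (-1) := by
    rw [hu]
    apply Real.exp_le_exp.mpr
    nlinarith [Nat.cast_nonneg (α := ℝ) t]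
  have hau : ((A.card : ℝ)) * u ≤ 1 := by
    have h1 : ((A.card : ℝ)) * u ≤ Q1 * u := by
      apply mul_le_mul_of_nonneg_right hAcard.le hu0.le
    have h2 : Q1 * u = 1 := by
      rw [hQ1, hu, ← Real.exp_add]
      simp
    linarith
  have hbu : Real.exp (-p) ≤ u * ((B.card : ℝ)) := by
    have h1 : u * Q0 ≤ u * ((B.card : ℝ)) := mul_le_mul_of_nonneg_left hBcard hu0.le
    have h2 : u * Q0 = Real.exp (-p) := by
      rw [hQ0, hu, ← Real.exp_add]
      ring_nf
    linarith
  have hprob := prob_lower hp hu0 hu1e A.card B.card hau hbu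
  have hmu1 : u ≤ 1 := by
    rw [hu, Real.exp_le_one_iff]
    nlinarith [Nat.cast_nonneg (α := ℝ) t]
  have hEsum : ∑ S ∈ E, mu u S = (1 - u) ^ A.card * (1 - (1 - u) ^ B.card) :=
    sum_mu_event u hdisj
  calc Real.exp (-1 / (1 - Real.exp (-1))) * (Real.exp (-Real.exp (-1)) * Real.exp (-p)) * (r1 - r0) ^ p
      ≤ ((1 - u) ^ A.card * (1 - (1 - u) ^ B.card)) * (r1 - r0) ^ p := by
        apply mul_le_mul_of_nonneg_right hprob (Real.rpow_nonneg hΔnn p)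
    _ = ∑ S ∈ E, mu u S * (r1 - r0) ^ p := by rw [← Finset.sum_mul, hEsum]
    _ ≤ ∑ S ∈ E, mu u S * |dmin S x - dmin S y| ^ p := by
        apply Finset.sum_le_sum
        intro S hS
        apply mul_le_mul_of_nonneg_left _ (mu_nonneg hu0.le hmu1 S)
        exact Real.rpow_le_rpow hΔnn (hsep S hS) hp0.le
    _ ≤ ∑ S : Finset X, mu u S * |dmin S x - dmin S y| ^ p := by
        apply Finset.sum_le_sum_of_subset_of_nonneg (Finset.filter_subset _ _)
        intro S _ _
        exact mul_nonneg (mu_nonneg hu0.le hmu1 S) (Real.rpow_nonneg (abs_nonneg _) p)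

lemma scale_core (p : ℝ) (hp : 1 ≤ p) (x y : X) (c : ℝ) (hc0 : 0 < c)
    (hcD : 2 * c < dist x y) (t : ℕ) :
    Real.exp (-1 / (1 - Real.exp (-1))) * (Real.exp (-Real.exp (-1)) * Real.exp (-p)) *
      (max (rad c (Real.exp (p*((t:ℝ)+1))) x) (rad c (Real.exp (p*((t:ℝ)+1))) y)
        - max (rad c (Real.exp (p*(t:ℝ))) x) (rad c (Real.exp (p*(t:ℝ))) y)) ^ p
    ≤ ∑ S : Finset X, mu (Real.exp (-(p*((t:ℝ)+1)))) S * |dmin S x - dmin S y| ^ p := by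
  classical
  have hp0 : 0 < p := lt_of_lt_of_le one_pos hp
  have hu0 : (0:ℝ) < Real.exp (-(p*((t:ℝ)+1))) := Real.exp_pos _
  have hu1 : Real.exp (-(p*((t:ℝ)+1))) ≤ 1 := by
    rw [Real.exp_le_one_iff]
    nlinarith [Nat.cast_nonneg (α := ℝ) t]
  have hQmono : Real.exp (p*(t:ℝ)) ≤ Real.exp (p*((t:ℝ)+1)) := by
    apply Real.exp_le_exp.mpr
    nlinarith [Nat.cast_nonneg (α := ℝ) t]
  have hr01 : max (rad c (Real.exp (p*(t:ℝ))) x) (rad c (Real.exp (p*(t:ℝ))) y)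
      ≤ max (rad c (Real.exp (p*((t:ℝ)+1))) x) (rad c (Real.exp (p*((t:ℝ)+1))) y) :=
    max_le_max (rad_mono hQmono c x) (rad_mono hQmono c y)
  rcases eq_or_lt_of_le hr01 with heq | hlt
  · rw [← heq, sub_self, Real.zero_rpow (ne_of_gt hp0), mul_zero]
    apply Finset.sum_nonneg
    intro S _
    exact mul_nonneg (mu_nonneg hu0.le hu1 S) (Real.rpow_nonneg (abs_nonneg _) p)
  · by_cases hfar : rad c (Real.exp (p*((t:ℝ)+1))) y ≤ rad c (Real.exp (p*((t:ℝ)+1))) x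
    · exact scale_core_aux p hp x y c hc0 hcD t hfar hlt
    · have hfar' : rad c (Real.exp (p*((t:ℝ)+1))) x ≤ rad c (Real.exp (p*((t:ℝ)+1))) y :=
        (not_le.mp hfar).le
      have hcD' : 2 * c < dist y x := by rwa [dist_comm]
      have hlt' : max (rad c (Real.exp (p*(t:ℝ))) y) (rad c (Real.exp (p*(t:ℝ))) x)
          < max (rad c (Real.exp (p*((t:ℝ)+1))) y) (rad c (Real.exp (p*((t:ℝ)+1))) x) := by
        rw [max_comm, max_comm (rad c (Real.exp (p*((t:ℝ)+1))) y)]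
        exact hlt
      have h := scale_core_aux p hp y x c hc0 hcD' t hfar' hlt'
      rw [max_comm (rad c (Real.exp (p*((t:ℝ)+1))) y),
        max_comm (rad c (Real.exp (p*(t:ℝ))) y)] at h
      refine le_trans h (le_of_eq ?_)
      apply Finset.sum_congr rfl
      intro S _
      rw [abs_sub_comm]

lemma coord_pow {p : ℝ} (hp0 : 0 < p) {base : ℝ} (hb : 0 ≤ base) (vx vy : ℝ) :
    |base ^ (1/p) * vx - base ^ (1/p) * vy| ^ p = base * |vx - vy| ^ p := by
  rw [← mul_sub, abs_mul, abs_of_nonneg (Real.rpow_nonneg hb _),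
    Real.mul_rpow (Real.rpow_nonneg hb _) (abs_nonneg _),
    ← Real.rpow_mul hb, one_div, inv_mul_cancel₀ (ne_of_gt hp0), Real.rpow_one]

lemma exp_neg_one_facts : Real.exp (-1) ≤ 0.368 ∧ (0.632:ℝ) ≤ 1 - Real.exp (-1) := by
  have h1 : Real.exp (-1) ≤ 0.368 := by
    rw [Real.exp_neg, inv_le_iff_one_le_mul₀ (Real.exp_pos 1)]
    nlinarith [Real.exp_one_gt_d9]
  exact ⟨h1, by linarith⟩

lemma numeric_main (p : ℝ) (hp : 1 ≤ p) :
    Real.exp p * (1/96 : ℝ) ^ p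
      ≤ ((1 - (1/24:ℝ) ^ p) *
          (Real.exp (-1 / (1 - Real.exp (-1))) * Real.exp (-Real.exp (-1)))) * (3/8:ℝ) ^ p := by
  obtain ⟨hE, h1E⟩ := exp_neg_one_facts
  have hp0 : 0 < p := lt_of_lt_of_le one_pos hp
  have hE0 : (0:ℝ) < Real.exp (-1) := Real.exp_pos _
  -- exp 3 bound
  have hexp3 : Real.exp (2.951 : ℝ) ≤ 34.5 := by
    have h1 : Real.exp (2.951 : ℝ) ≤ Real.exp 3 := Real.exp_le_exp.mpr (by norm_num)
    have h2 : Real.exp (3:ℝ) = Real.exp 1 ^ 3 := by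
      rw [← Real.exp_nat_mul]; norm_num
    have h3 : Real.exp 1 ^ 3 ≤ (2.7182818286 : ℝ) ^ 3 := by
      apply pow_le_pow_left₀ (Real.exp_pos 1).le Real.exp_one_lt_d9.le
    calc Real.exp (2.951:ℝ) ≤ Real.exp 1 ^ 3 := h2 ▸ h1
      _ ≤ (2.7182818286 : ℝ) ^ 3 := h3
      _ ≤ 34.5 := by norm_num
  -- the key constant bound : exp 1 / 36 ≤ 23/24 * exp (-1.951)
  have hkey : Real.exp 1 * Real.exp (1.951 : ℝ) ≤ 34.5 := by
    rw [← Real.exp_add]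
    have : (1 : ℝ) + 1.951 = 2.951 := by norm_num
    rw [this]; exact hexp3
  have hinv : Real.exp (1.951:ℝ) * Real.exp (-(1.951:ℝ)) = 1 := by
    rw [← Real.exp_add]; norm_num
  have h6 : Real.exp 1 ≤ 34.5 * Real.exp (-(1.951:ℝ)) := by
    have h5 := mul_le_mul_of_nonneg_right hkey (Real.exp_pos (-(1.951:ℝ))).le
    rw [mul_assoc, hinv, mul_one] at h5
    exact h5
  have h36 : Real.exp 1 / 36 ≤ 23/24 * Real.exp (-(1.951:ℝ)) := by linarith
  -- C₀ lower bound
  have hfrac : 1 / (1 - Real.exp (-1)) ≤ 1.583 := by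
    rw [div_le_iff₀ (by linarith)]
    nlinarith
  have hC0 : Real.exp (-(1.951:ℝ)) ≤ Real.exp (-1 / (1 - Real.exp (-1))) * Real.exp (-Real.exp (-1)) := by
    rw [← Real.exp_add]
    apply Real.exp_le_exp.mpr
    have : -1 / (1 - Real.exp (-1)) = -(1 / (1 - Real.exp (-1))) := by ring
    rw [this]
    linarith
  -- β bound
  have hbeta : (1/24:ℝ) ^ p ≤ 1/24 := by
    have := Real.rpow_le_rpow_of_exponent_ge (by norm_num : (0:ℝ) < 1/24) (by norm_num) hp
    rwa [Real.rpow_one] at this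
  have hC0pos : (0:ℝ) < Real.exp (-1 / (1 - Real.exp (-1))) * Real.exp (-Real.exp (-1)) :=
    mul_pos (Real.exp_pos _) (Real.exp_pos _)
  have hmain : Real.exp 1 / 36 ≤ (1 - (1/24:ℝ) ^ p) *
      (Real.exp (-1 / (1 - Real.exp (-1))) * Real.exp (-Real.exp (-1))) := by
    calc Real.exp 1 / 36 ≤ 23/24 * Real.exp (-(1.951:ℝ)) := h36
      _ ≤ (1 - (1/24:ℝ) ^ p) * (Real.exp (-1 / (1 - Real.exp (-1))) * Real.exp (-Real.exp (-1))) := by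
          apply mul_le_mul (by linarith) hC0 (Real.exp_pos _).le (by linarith)
  -- assemble with rpow algebra
  have he36 : (Real.exp 1 / 36 : ℝ) ^ p ≤ Real.exp 1 / 36 := by
    have h0 : (0:ℝ) < Real.exp 1 / 36 := by positivity
    have h1 : Real.exp 1 / 36 ≤ 1 := by
      nlinarith [Real.exp_one_lt_d9]
    have := Real.rpow_le_rpow_of_exponent_ge h0 h1 hp
    rwa [Real.rpow_one] at this
  have hLHS : Real.exp p * (1/96 : ℝ) ^ p = (Real.exp 1 / 36 : ℝ) ^ p * (3/8:ℝ) ^ p := by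
    rw [← Real.exp_one_rpow p, ← Real.mul_rpow (by positivity) (by norm_num),
      ← Real.mul_rpow (by positivity) (by norm_num)]
    congr 1
    ring
  rw [hLHS]
  apply mul_le_mul_of_nonneg_right _ (Real.rpow_nonneg (by norm_num) p)
  exact le_trans he36 hmain

end MC

/-- A finite metric space with an `m`-center embeds into `ℓ_p` with distortion at
most `96 ⌈(log m)/p⌉`. -/
theorem mcenter_embeds_lp {X : Type*} [MetricSpace X] [Fintype X]
    (m : ℝ) (hm : 1 ≤ m) (x₀ : X)
    (hx₀ : ∀ (y : X) (r : ℝ), 0 < r →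
      m ≤ (Set.ncard {z : X | dist y z ≤ r} : ℝ) → dist y x₀ ≤ r)
    (p : ℝ) (hp : 1 ≤ p) [Fact (1 ≤ ENNReal.ofReal p)] :
    ∃ f : X → lp (fun _ : ℕ => ℝ) (ENNReal.ofReal p),
      ∀ x y : X, dist x y ≤ ‖f x - f y‖ ∧
        ‖f x - f y‖ ≤ 96 * (⌈Real.log m / p⌉₊ : ℝ) * dist x y := by
  classical
  have hp0 : 0 < p := lt_of_lt_of_le one_pos hp
  rcases eq_or_lt_of_le hm with hm1 | hm1
  · -- m = 1 : X is a single point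
    have hsub : ∀ z : X, z = x₀ := by
      intro z
      have hdd : ∀ r : ℝ, 0 < r → dist z x₀ ≤ r := by
        intro r hr
        apply hx₀ z r hr
        rw [← hm1]
        have hz : z ∈ {w : X | dist z w ≤ r} := by
          simp only [Set.mem_setOf_eq, dist_self]; exact hr.le
        have hfin : {w : X | dist z w ≤ r}.Finite := Set.toFinite _
        have hpos : 0 < {w : X | dist z w ≤ r}.ncard := by
          rw [Set.ncard_pos hfin]
          exact ⟨z, hz⟩
        exact_mod_cast hpos
      have hle : dist z x₀ ≤ 0 := by
        by_contra hcon
        push_neg at hcon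
        have := hdd (dist z x₀ / 2) (by linarith)
        linarith
      exact dist_eq_zero.mp (le_antisymm hle dist_nonneg)
    refine ⟨fun _ => 0, fun x y => ?_⟩
    have hxy : x = y := (hsub x).trans (hsub y).symm
    subst hxy
    simp
  · -- main case : 1 < m
    set k := ⌈Real.log m / p⌉₊ with hk
    have hk1 : 1 ≤ k := Nat.one_le_ceil_iff.mpr (div_pos (Real.log_pos hm1) hp0)
    have hkR : (1:ℝ) ≤ (k:ℝ) := by exact_mod_cast hk1
    have hkpos : (0:ℝ) < (k:ℝ) := by linarith
    have hkne : (k:ℝ) ≠ 0 := ne_of_gt hkpos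
    set p' := ENNReal.ofReal p with hp'
    have hpR : p'.toReal = p := ENNReal.toReal_ofReal hp0.le
    have hp'0 : 0 < p'.toReal := by rw [hpR]; exact hp0
    set β : ℝ := (1/24 : ℝ) ^ p with hβ
    have hβ0 : 0 < β := Real.rpow_pos_of_pos (by norm_num) p
    have hβ24 : β ≤ 1/24 := by
      have h := Real.rpow_le_rpow_of_exponent_ge (by norm_num : (0:ℝ) < 1/24) (by norm_num) hp
      rwa [Real.rpow_one] at h
    have hβ1 : β < 1 := lt_of_le_of_lt hβ24 (by norm_num)
    set C0 : ℝ := Real.exp (-1 / (1 - Real.exp (-1))) * Real.exp (-Real.exp (-1)) with hC0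
    have hC0pos : 0 < C0 := mul_pos (Real.exp_pos _) (Real.exp_pos _)
    set uT : ℕ → ℝ := fun t => Real.exp (-(p * ((t:ℝ)+1))) with huT
    have huT0 : ∀ t : ℕ, 0 < uT t := fun t => Real.exp_pos _
    have huT1 : ∀ t : ℕ, uT t ≤ 1 := by
      intro t
      rw [huT, Real.exp_le_one_iff]
      nlinarith [Nat.cast_nonneg (α := ℝ) t]
    have hcoeff : ∀ (t : ℕ) (S : Finset X), 0 ≤ ((1-β)/(k:ℝ)) * MC.mu (uT t) S := by
      intro t S
      apply mul_nonneg (div_nonneg (by linarith) hkpos.le)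
      exact MC.mu_nonneg (huT0 t).le (huT1 t) S
    set g1 : X → ℝ := fun z => β ^ (1/p) * dist z x₀ with hg1
    set g2 : Fin k × Finset X → X → ℝ :=
      fun ts z => (((1-β)/(k:ℝ)) * MC.mu (uT ts.1) ts.2) ^ (1/p) * MC.dmin ts.2 z with hg2
    set g : X → (Unit ⊕ (Fin k × Finset X)) → ℝ :=
      fun z => Sum.elim (fun _ => g1 z) (fun ts => g2 ts z) with hg
    set e : (Unit ⊕ (Fin k × Finset X)) ↪ ℕ :=
      (Fintype.equivFin _).toEmbedding.trans Fin.valEmbedding with he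
    set gmap : X → lp (fun _ : ℕ => ℝ) p' :=
      fun z => ∑ i, lp.single p' (e i) (g z i) with hgmap
    refine ⟨fun z => ((96 * (k:ℝ))) • gmap z, fun x y => ?_⟩
    set D := dist x y with hD
    have hD0' : 0 ≤ D := dist_nonneg
    -- norm identity
    have hsubmap : gmap x - gmap y = ∑ i, lp.single p' (e i) (g x i - g y i) := by
      rw [hgmap]
      simp only []
      rw [← Finset.sum_sub_distrib]
      exact Finset.sum_congr rfl fun i _ => (MC.lp_single_sub p' (e i) _ _).symm
    have hnorm : ‖gmap x - gmap y‖ ^ p = ∑ i, |g x i - g y i| ^ p := by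
      have h := MC.norm_sum_single_embed p' hp'0 e (fun i => g x i - g y i)
      rw [hpR] at h
      rw [hsubmap]
      exact h
    -- expand the sum
    have hexpand : ∑ i, |g x i - g y i| ^ p
        = β * |dist x x₀ - dist y x₀| ^ p
          + ∑ t : Fin k, ∑ S : Finset X,
              (((1-β)/(k:ℝ)) * MC.mu (uT (t:ℕ)) S) * |MC.dmin S x - MC.dmin S y| ^ p := by
      rw [Fintype.sum_sum_type]
      congr 1
      · simp only [hg, Sum.elim_inl, hg1, Finset.univ_unique, Finset.sum_singleton]
        exact MC.coord_pow hp0 hβ0.le _ _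
      · rw [Fintype.sum_prod_type]
        refine Finset.sum_congr rfl fun t _ => ?_
        refine Finset.sum_congr rfl fun S _ => ?_
        simp only [hg, Sum.elim_inr, hg2]
        exact MC.coord_pow hp0 (hcoeff (t:ℕ) S) _ _
    -- upper bound
    have hub : ∑ i, |g x i - g y i| ^ p ≤ D ^ p := by
      rw [hexpand]
      have h1 : β * |dist x x₀ - dist y x₀| ^ p ≤ β * D ^ p := by
        apply mul_le_mul_of_nonneg_left _ hβ0.le
        exact Real.rpow_le_rpow (abs_nonneg _) (abs_dist_sub_le x y x₀) hp0.le
      have h2 : ∀ t : Fin k, ∑ S : Finset X,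
          (((1-β)/(k:ℝ)) * MC.mu (uT (t:ℕ)) S) * |MC.dmin S x - MC.dmin S y| ^ p
            ≤ ((1-β)/(k:ℝ)) * D ^ p := by
        intro t
        have hstep : ∀ S : Finset X,
            (((1-β)/(k:ℝ)) * MC.mu (uT (t:ℕ)) S) * |MC.dmin S x - MC.dmin S y| ^ p
              ≤ (((1-β)/(k:ℝ)) * MC.mu (uT (t:ℕ)) S) * D ^ p := by
          intro S
          apply mul_le_mul_of_nonneg_left _ (hcoeff _ S)
          exact Real.rpow_le_rpow (abs_nonneg _) (MC.dmin_lip S x y) hp0.le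
        calc ∑ S : Finset X, (((1-β)/(k:ℝ)) * MC.mu (uT (t:ℕ)) S) * |MC.dmin S x - MC.dmin S y| ^ p
            ≤ ∑ S : Finset X, (((1-β)/(k:ℝ)) * MC.mu (uT (t:ℕ)) S) * D ^ p :=
              Finset.sum_le_sum fun S _ => hstep S
          _ = ((1-β)/(k:ℝ)) * D ^ p := by
              rw [← Finset.sum_mul, ← Finset.mul_sum, MC.sum_mu_univ, mul_one]
      calc β * |dist x x₀ - dist y x₀| ^ p + ∑ t : Fin k, ∑ S : Finset X,
              (((1-β)/(k:ℝ)) * MC.mu (uT (t:ℕ)) S) * |MC.dmin S x - MC.dmin S y| ^ p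
          ≤ β * D ^ p + ∑ _t : Fin k, ((1-β)/(k:ℝ)) * D ^ p :=
            add_le_add h1 (Finset.sum_le_sum fun t _ => h2 t)
        _ = D ^ p := by
            rw [Finset.sum_const, Finset.card_univ, Fintype.card_fin, nsmul_eq_mul]
            field_simp
            ring
    have hNle : ‖gmap x - gmap y‖ ≤ D := by
      have h2 : ‖gmap x - gmap y‖ ^ p ≤ D ^ p := by rw [hnorm]; exact hub
      exact (Real.rpow_le_rpow_iff (norm_nonneg _) hD0' hp0).mp h2
    -- lower bound
    have hNge : D / (96*(k:ℝ)) ≤ ‖gmap x - gmap y‖ := by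
      rcases eq_or_ne x y with rfl | hxy
      · have : D = 0 := by rw [hD, dist_self]
        rw [this]
        simp only [zero_div]
        exact norm_nonneg _
      · have hD0 : 0 < D := by rw [hD]; exact dist_pos.mpr hxy
        have hgoal : (D / (96*(k:ℝ))) ^ p ≤ ∑ i, |g x i - g y i| ^ p := by
          by_cases hAB : D/4 ≤ |dist x x₀ - dist y x₀|
          · -- Case A
            have hstep1 : (D/(96*(k:ℝ)))^p ≤ (D/96)^p := by
              apply Real.rpow_le_rpow (by positivity) _ hp0.le
              rw [div_le_div_iff₀ (by positivity) (by norm_num)]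
              nlinarith
            have hstep2 : (D/96 : ℝ)^p = β * (D/4)^p := by
              rw [hβ, ← Real.mul_rpow (by norm_num) (by positivity)]
              congr 1
              ring
            have hstep3 : β * (D/4)^p ≤ β * |dist x x₀ - dist y x₀|^p := by
              apply mul_le_mul_of_nonneg_left _ hβ0.le
              exact Real.rpow_le_rpow (by positivity) hAB hp0.le
            have hstep4 : β * |dist x x₀ - dist y x₀|^p ≤ ∑ i, |g x i - g y i| ^ p := by
              rw [hexpand]
              apply le_add_of_nonneg_right
              apply Finset.sum_nonneg
              intro t _
              apply Finset.sum_nonneg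
              intro S _
              exact mul_nonneg (hcoeff _ S) (Real.rpow_nonneg (abs_nonneg _) p)
            calc (D/(96*(k:ℝ)))^p ≤ (D/96)^p := hstep1
              _ = β * (D/4)^p := hstep2
              _ ≤ β * |dist x x₀ - dist y x₀|^p := hstep3
              _ ≤ ∑ i, |g x i - g y i| ^ p := hstep4
          · -- Case B
            push_neg at hAB
            have htri : D ≤ dist x x₀ + dist y x₀ := by
              have h := dist_triangle x x₀ y
              rw [dist_comm x₀ y] at h
              rw [hD]; linarith
            have habs := abs_lt.mp hAB
            have hx3 : 3*D/8 ≤ dist x x₀ := by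
              rcases habs with ⟨ha, hb⟩; linarith
            have hy3 : 3*D/8 ≤ dist y x₀ := by
              rcases habs with ⟨ha, hb⟩; linarith
            set c := 3*D/8 with hc
            have hc0 : 0 < c := by rw [hc]; linarith
            have hcD : 2*c < dist x y := by rw [hc, ← hD]; linarith
            have hcapx : MC.rad c (Real.exp (p*((k:ℕ):ℝ))) x = c := by
              by_contra hne
              have hlt := lt_of_le_of_ne (MC.rad_le_c c _ x) hne
              have hnn := MC.rad_nonneg hc0.le (Real.exp (p*((k:ℕ):ℝ))) x
              have hcard := MC.card_cB_rad hlt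
              have hmk : m ≤ Real.exp (p*((k:ℕ):ℝ)) := by
                rw [← Real.exp_log (lt_trans one_pos hm1), Real.exp_le_exp]
                have hceil := Nat.le_ceil (Real.log m / p)
                rw [← hk] at hceil
                calc Real.log m = (Real.log m / p) * p := by field_simp
                  _ ≤ (k:ℝ) * p := mul_le_mul_of_nonneg_right hceil hp0.le
                  _ = p * (k:ℝ) := mul_comm _ _
              rcases eq_or_lt_of_le hnn with h0 | hpos
              · rw [← h0] at hcard
                have hsub1 : MC.cB x (0:ℝ) ⊆ {x} := by
                  intro z hz
                  rw [MC.mem_cB] at hz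
                  rw [Finset.mem_singleton]
                  exact (dist_le_zero.mp hz).symm
                have hle1 : ((MC.cB x (0:ℝ)).card : ℝ) ≤ 1 := by
                  have := Finset.card_le_card hsub1
                  rw [Finset.card_singleton] at this
                  exact_mod_cast this
                linarith
              · have hncard : m ≤ (({z : X | dist x z ≤ MC.rad c (Real.exp (p*((k:ℕ):ℝ))) x}.ncard : ℕ) : ℝ) := by
                  have hseteq : {z : X | dist x z ≤ MC.rad c (Real.exp (p*((k:ℕ):ℝ))) x}
                      = ↑(MC.cB x (MC.rad c (Real.exp (p*((k:ℕ):ℝ))) x)) := by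
                    ext z
                    simp [MC.cB]
                  rw [hseteq, Set.ncard_coe_finset]
                  linarith
                have hcontra := hx₀ x _ hpos hncard
                linarith
            set rr : ℕ → ℝ := fun j => max (MC.rad c (Real.exp (p*(j:ℝ))) x)
              (MC.rad c (Real.exp (p*(j:ℝ))) y) with hrr
            have hrr0 : rr 0 = 0 := by
              rw [hrr]
              simp only [Nat.cast_zero, mul_zero, Real.exp_zero]
              rw [MC.rad_zero hc0.le le_rfl x, MC.rad_zero hc0.le le_rfl y, max_self]
            have hrrk : rr k = c := by
              have h1 : rr k ≤ c := max_le (MC.rad_le_c _ _ _) (MC.rad_le_c _ _ _)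
              have h2 : c ≤ rr k := by
                calc c = MC.rad c (Real.exp (p*((k:ℕ):ℝ))) x := hcapx.symm
                  _ ≤ rr k := le_max_left _ _
              exact le_antisymm h1 h2
            have htel : ∑ t ∈ Finset.range k, (rr (t+1) - rr t) = c := by
              rw [Finset.sum_range_sub rr k, hrr0, hrrk, sub_zero]
            have hΔnn : ∀ t : ℕ, 0 ≤ rr (t+1) - rr t := by
              intro t
              have hQm : Real.exp (p*(t:ℝ)) ≤ Real.exp (p*((t+1:ℕ):ℝ)) := by
                apply Real.exp_le_exp.mpr
                push_cast
                nlinarith [Nat.cast_nonneg (α := ℝ) t]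
              rw [hrr]
              exact sub_nonneg.mpr (max_le_max (MC.rad_mono hQm c x) (MC.rad_mono hQm c y))
            have hjensen : (k:ℝ) * (c/(k:ℝ))^p ≤ ∑ t ∈ Finset.range k, (rr (t+1) - rr t)^p := by
              have hw : ∑ _t ∈ Finset.range k, (1/(k:ℝ)) = 1 := by
                rw [Finset.sum_const, Finset.card_range, nsmul_eq_mul]
                field_simp
              have h := Real.rpow_arith_mean_le_arith_mean_rpow (Finset.range k)
                (fun _ => 1/(k:ℝ)) (fun t => rr (t+1) - rr t)
                (fun i _ => by positivity) hw (fun i _ => hΔnn i) hp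
              have hL : ∑ t ∈ Finset.range k, (1/(k:ℝ)) * (rr (t+1) - rr t) = c / (k:ℝ) := by
                rw [← Finset.mul_sum, htel]
                ring
              rw [hL, ← Finset.mul_sum] at h
              calc (k:ℝ) * (c/(k:ℝ))^p ≤ (k:ℝ) * ((1/(k:ℝ)) * ∑ t ∈ Finset.range k, (rr (t+1) - rr t)^p) :=
                    mul_le_mul_of_nonneg_left h hkpos.le
                _ = ∑ t ∈ Finset.range k, (rr (t+1) - rr t)^p := by
                    field_simp
            have hscale : ∀ t : ℕ, C0 * Real.exp (-p) * (rr (t+1) - rr t)^p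
                ≤ ∑ S : Finset X, MC.mu (uT t) S * |MC.dmin S x - MC.dmin S y| ^ p := by
              intro t
              have h := MC.scale_core p hp x y c hc0 hcD t
              rw [hrr, hC0, huT]
              simp only []
              push_cast
              ring_nf at h ⊢
              exact h
            have hlower1 : ∑ t ∈ Finset.range k,
                ((1-β)/(k:ℝ)) * (C0 * Real.exp (-p) * (rr (t+1) - rr t)^p)
                ≤ ∑ i, |g x i - g y i| ^ p := by
              rw [hexpand]
              have hβterm : 0 ≤ β * |dist x x₀ - dist y x₀| ^ p := by positivity
              refine le_trans ?_ (le_add_of_nonneg_left hβterm)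
              rw [← Fin.sum_univ_eq_sum_range
                (fun t => ((1-β)/(k:ℝ)) * (C0 * Real.exp (-p) * (rr (t+1) - rr t)^p)) k]
              apply Finset.sum_le_sum
              intro t _
              have h1 := hscale (t:ℕ)
              calc ((1-β)/(k:ℝ)) * (C0 * Real.exp (-p) * (rr ((t:ℕ)+1) - rr (t:ℕ))^p)
                  ≤ ((1-β)/(k:ℝ)) * ∑ S : Finset X, MC.mu (uT (t:ℕ)) S * |MC.dmin S x - MC.dmin S y| ^ p := by
                    apply mul_le_mul_of_nonneg_left h1 (div_nonneg (by linarith) hkpos.le)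
                _ = ∑ S : Finset X, (((1-β)/(k:ℝ)) * MC.mu (uT (t:ℕ)) S) * |MC.dmin S x - MC.dmin S y| ^ p := by
                    rw [Finset.mul_sum]
                    exact Finset.sum_congr rfl fun S _ => by ring
            have hlower2 : (D/(96*(k:ℝ)))^p ≤ ∑ t ∈ Finset.range k,
                ((1-β)/(k:ℝ)) * (C0 * Real.exp (-p) * (rr (t+1) - rr t)^p) := by
              have hfactor : ∑ t ∈ Finset.range k,
                  ((1-β)/(k:ℝ)) * (C0 * Real.exp (-p) * (rr (t+1) - rr t)^p)
                  = ((1-β)/(k:ℝ)) * (C0 * Real.exp (-p)) * ∑ t ∈ Finset.range k, (rr (t+1) - rr t)^p := by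
                rw [Finset.mul_sum]
                exact Finset.sum_congr rfl fun t _ => by ring
              rw [hfactor]
              have hnum := MC.numeric_main p hp
              have hck : (c/(k:ℝ))^p = (3/8:ℝ)^p * (D/(k:ℝ))^p := by
                rw [← Real.mul_rpow (by norm_num) (by positivity)]
                congr 1
                rw [hc]; ring
              have hDk : (D/(96*(k:ℝ)))^p = (1/96:ℝ)^p * (D/(k:ℝ))^p := by
                rw [← Real.mul_rpow (by norm_num) (by positivity)]
                congr 1
                field_simp
              have hcore : (1/96:ℝ)^p ≤ (1-β) * C0 * Real.exp (-p) * (3/8:ℝ)^p := by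
                have hinvp : Real.exp (-p) * Real.exp p = 1 := by
                  rw [← Real.exp_add]; simp
                have h5 := mul_le_mul_of_nonneg_left hnum (Real.exp_pos (-p)).le
                calc (1/96:ℝ)^p = Real.exp (-p) * (Real.exp p * (1/96:ℝ)^p) := by
                      rw [← mul_assoc, hinvp, one_mul]
                  _ ≤ Real.exp (-p) * (((1 - β) * C0) * (3/8:ℝ)^p) := h5
                  _ = (1-β) * C0 * Real.exp (-p) * (3/8:ℝ)^p := by ring
              calc (D/(96*(k:ℝ)))^p = (1/96:ℝ)^p * (D/(k:ℝ))^p := hDk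
                _ ≤ ((1-β) * C0 * Real.exp (-p) * (3/8:ℝ)^p) * (D/(k:ℝ))^p := by
                    apply mul_le_mul_of_nonneg_right hcore (Real.rpow_nonneg (by positivity) p)
                _ = ((1-β)/(k:ℝ)) * (C0 * Real.exp (-p)) * ((k:ℝ) * (c/(k:ℝ))^p) := by
                    rw [hck]
                    field_simp
                _ ≤ ((1-β)/(k:ℝ)) * (C0 * Real.exp (-p)) * ∑ t ∈ Finset.range k, (rr (t+1) - rr t)^p := by
                    apply mul_le_mul_of_nonneg_left hjensen
                    apply mul_nonneg (div_nonneg (by linarith) hkpos.le)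
                    exact mul_nonneg hC0pos.le (Real.exp_pos _).le
            exact le_trans hlower2 hlower1
        have h2 : (D/(96*(k:ℝ)))^p ≤ ‖gmap x - gmap y‖ ^ p := by
          rw [hnorm]; exact hgoal
        exact (Real.rpow_le_rpow_iff (by positivity) (norm_nonneg _) hp0).mp h2
    -- conclude
    have hfsub : (96 * (k:ℝ)) • gmap x - (96 * (k:ℝ)) • gmap y
        = (96 * (k:ℝ)) • (gmap x - gmap y) := (smul_sub _ _ _).symm
    have hfnorm : ‖(96 * (k:ℝ)) • gmap x - (96 * (k:ℝ)) • gmap y‖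
        = (96 * (k:ℝ)) * ‖gmap x - gmap y‖ := by
      rw [hfsub, norm_smul, Real.norm_eq_abs, abs_of_pos (by positivity)]
    constructor
    · rw [hfnorm]
      rw [div_le_iff₀ (by positivity)] at hNge
      calc dist x y = D := hD.symm ▸ rfl
        _ ≤ ‖gmap x - gmap y‖ * (96 * (k:ℝ)) := hNge
        _ = (96 * (k:ℝ)) * ‖gmap x - gmap y‖ := mul_comm _ _
    · rw [hfnorm]
      calc (96 * (k:ℝ)) * ‖gmap x - gmap y‖ ≤ (96 * (k:ℝ)) * D :=
            mul_le_mul_of_nonneg_left hNle (by positivity)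
        _ = 96 * (k:ℝ) * dist x y := by rw [hD]
end

section
/- Let m ≥ 1 be an integer and let X be a finite metric space with an m-center. Then X embeds into an ultrametric with distortion at most 2m. -/
open Relation

private lemma crossing {g : ℕ → ℝ} {k : ℕ} {a : ℝ} (h0 : g 0 ≤ a)
    (hk : a < g k) :
    ∃ i, i < k ∧ g i ≤ a ∧ a < g (i+1) := by
  classical
  have hex : ∃ i, a < g i := ⟨k, hk⟩
  have hi₀ : a < g (Nat.find hex) := Nat.find_spec hex
  have hle : Nat.find hex ≤ k := Nat.find_le hk
  have hpos : Nat.find hex ≠ 0 := by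
    intro h; rw [h] at hi₀; linarith
  obtain ⟨i, hi⟩ := Nat.exists_eq_succ_of_ne_zero hpos
  have hP : ¬ a < g i := Nat.find_min hex (by omega)
  exact ⟨i, by omega, le_of_not_gt hP, by rw [← Nat.succ_eq_add_one, ← hi]; exact hi₀⟩

private lemma exists_fn_chain {X : Type*} {r : X → X → Prop} {x y : X}
    (h : Relation.ReflTransGen r x y) :
    ∃ (k : ℕ) (z : ℕ → X), z 0 = x ∧ z k = y ∧ ∀ i < k, r (z i) (z (i+1)) := by
  induction h with
  | refl => exact ⟨0, fun _ => x, rfl, rfl, by omega⟩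
  | @tail b c hxb hbc ih =>
      obtain ⟨k, z, hz0, hzk, hstep⟩ := ih
      refine ⟨k+1, fun i => if i ≤ k then z i else c, ?_, ?_, ?_⟩
      · simpa using hz0
      · simp
      · intro i hi
        rcases Nat.lt_or_ge i k with h | h
        · simp only [if_pos (by omega : i ≤ k), if_pos (by omega : i + 1 ≤ k)]
          exact hstep i h
        · have hik : i = k := by omega
          subst hik
          simp only [if_pos (le_refl i), if_neg (by omega : ¬ i + 1 ≤ i), hzk]
          exact hbc

private lemma center_close {X : Type*} [MetricSpace X] [Fintype X]
    {m : ℕ} (hm : 1 ≤ m) {x₀ : X}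
    (hx₀ : ∀ (y : X) (r : ℝ), 0 < r →
      (m : ℝ) ≤ (Set.ncard {z : X | dist y z ≤ r} : ℝ) → dist y x₀ ≤ r)
    {t : ℝ} (ht : 0 ≤ t) {x y : X}
    (hchain : ReflTransGen (fun a b => dist a b ≤ t) x y)
    (hd : 2 * m * t < dist x y) :
    dist x x₀ ≤ ((m : ℝ) - 1) * (dist x y / (2 * m)) + t := by
  classical
  obtain ⟨k, z, hz0, hzk, hstep⟩ := exists_fn_chain hchain
  have hm' : (1 : ℝ) ≤ m := by exact_mod_cast hm
  set d := dist x y with hdd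
  have hd0 : 0 < d := lt_of_le_of_lt (by positivity) hd
  set s : ℝ := d / (2 * m) with hs
  have hs0 : 0 < s := by positivity
  have hts : t < s := by
    rw [hs, lt_div_iff₀ (by positivity)]
    linarith [hd]
  rcases eq_or_lt_of_le ht with ht0 | ht0
  · -- t = 0 : chain is constant, contradiction
    exfalso
    have hall : ∀ i, i ≤ k → z i = x := by
      intro i
      induction i with
      | zero => intro _; exact hz0
      | succ n ihn =>
          intro hn
          have h1 : z n = x := ihn (by omega)
          have h2 : dist (z n) (z (n+1)) ≤ t := hstep n (by omega)
          rw [← ht0] at h2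
          have h3 : dist (z n) (z (n+1)) = 0 := le_antisymm h2 dist_nonneg
          have h4 := dist_eq_zero.mp h3
          rw [← h4, h1]
    have hxy : dist x y = 0 := by rw [← hzk, hall k le_rfl, dist_self]
    linarith
  · -- main case : 0 < t
    set g : ℕ → ℝ := fun i => dist x (z i) with hg
    have hg0 : g 0 = 0 := by simp [hg, hz0]
    have hgk : g k = d := by simp [hg, hzk, hdd]
    have hgstep : ∀ i, i < k → g (i+1) ≤ g i + t := by
      intro i hi
      calc g (i+1) ≤ g i + dist (z i) (z (i+1)) := dist_triangle _ _ _
        _ ≤ g i + t := by linarith [hstep i hi]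
    -- for each j : Fin m find a point in annulus (j*s, j*s + t]
    have hw : ∀ j : Fin m, ∃ w : X, (j : ℝ) * s < dist x w ∧ dist x w ≤ (j : ℝ) * s + t := by
      intro j
      have hj : (j : ℝ) ≤ (m : ℝ) - 1 := by
        have : (j : ℕ) < m := j.2
        have : ((j : ℕ) : ℝ) ≤ (m : ℝ) - 1 := by
          have : ((j:ℕ):ℝ) + 1 ≤ (m:ℝ) := by exact_mod_cast this
          linarith
        exact this
      have hja : (0 : ℝ) ≤ (j : ℝ) * s := by positivity
      have hcross : ∃ i, i < k ∧ g i ≤ (j : ℝ) * s ∧ (j : ℝ) * s < g (i+1) := by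
        apply crossing (by rw [hg0]; exact hja)
        rw [hgk]
        have h2m : (0:ℝ) < 2 * m := by positivity
        have hsd : s * (2 * m) = d := div_mul_cancel₀ _ (ne_of_gt h2m)
        calc (j : ℝ) * s ≤ ((m:ℝ) - 1) * s := by nlinarith
          _ < d := by nlinarith [hs0, hsd, hm']
      obtain ⟨i, hik, h1, h2⟩ := hcross
      refine ⟨z (i+1), h2, ?_⟩
      calc dist x (z (i+1)) = g (i+1) := rfl
        _ ≤ g i + t := hgstep i hik
        _ ≤ (j : ℝ) * s + t := by linarith
    choose w hw1 hw2 using hw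
    have hinj : Function.Injective w := by
      have key : ∀ a b : Fin m, a < b → w a ≠ w b := by
        intro a b hab he
        have h1 : (b : ℝ) * s < dist x (w b) := hw1 b
        have h2 : dist x (w a) ≤ (a : ℝ) * s + t := hw2 a
        rw [he] at h2
        have hab' : ((a : ℕ) : ℝ) + 1 ≤ ((b : ℕ) : ℝ) := by exact_mod_cast hab
        nlinarith
      intro a b he
      by_contra hne
      rcases Ne.lt_or_gt hne with h | h
      · exact key a b h he
      · exact key b a h he.symm
    set r : ℝ := ((m : ℝ) - 1) * s + t with hr
    have hr0 : 0 < r := by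
      have : (0:ℝ) ≤ ((m:ℝ) - 1) * s := by nlinarith
      linarith
    have hcard : (m : ℝ) ≤ (Set.ncard {v : X | dist x v ≤ r} : ℝ) := by
      have hsub : ↑((Finset.univ : Finset (Fin m)).image w) ⊆ {v : X | dist x v ≤ r} := by
        intro v hv
        simp only [Finset.coe_image, Finset.coe_univ, Set.image_univ, Set.mem_range] at hv
        obtain ⟨j, rfl⟩ := hv
        have hj : (j : ℝ) ≤ (m : ℝ) - 1 := by
          have : ((j:ℕ):ℝ) + 1 ≤ (m:ℝ) := by exact_mod_cast j.2
          linarith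
        have := hw2 j
        simp only [Set.mem_setOf_eq]
        rw [hr]
        nlinarith
      have hFcard : ((Finset.univ : Finset (Fin m)).image w).card = m := by
        rw [Finset.card_image_of_injective _ hinj, Finset.card_univ, Fintype.card_fin]
      have hle := Set.ncard_le_ncard hsub (Set.toFinite _)
      rw [Set.ncard_coe_finset, hFcard] at hle
      exact_mod_cast hle
    have := hx₀ x r hr0 hcard
    exact this

private lemma chain_lb {X : Type*} [MetricSpace X] [Fintype X]
    {m : ℕ} (hm : 1 ≤ m) {x₀ : X}
    (hx₀ : ∀ (y : X) (r : ℝ), 0 < r →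
      (m : ℝ) ≤ (Set.ncard {z : X | dist y z ≤ r} : ℝ) → dist y x₀ ≤ r)
    {t : ℝ} (ht : 0 ≤ t) {x y : X}
    (hchain : ReflTransGen (fun a b => dist a b ≤ t) x y) :
    dist x y ≤ 2 * m * t := by
  by_contra h
  push_neg at h
  have hm' : (1 : ℝ) ≤ m := by exact_mod_cast hm
  have h1 := center_close hm hx₀ ht hchain h
  have hsymm : Symmetric (fun a b : X => dist a b ≤ t) := by
    intro a b hab; rwa [dist_comm]
  have hchain' : ReflTransGen (fun a b : X => dist a b ≤ t) y x :=
    (by haveI : Std.Symm (fun a b : X => dist a b ≤ t) := ⟨hsymm⟩; exact Std.Symm.symm _ _ hchain)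
  have h2 := center_close hm hx₀ ht hchain' (by rwa [dist_comm])
  rw [dist_comm y x] at h2
  have htri : dist x y ≤ dist x x₀ + dist y x₀ := by
    rw [dist_comm y x₀]; exact dist_triangle x x₀ y
  set d := dist x y with hdd
  have hd0 : 0 < d := lt_of_le_of_lt (by positivity) h
  have h2m : (0:ℝ) < 2 * m := by positivity
  have hkey : d ≤ 2 * (((m:ℝ) - 1) * (d / (2*m)) + t) := by linarith
  have hdiv : d / (2*m) * (2*m) = d := div_mul_cancel₀ d (ne_of_gt h2m)
  nlinarith [hkey, hdiv, h, hd0, mul_pos h2m hd0]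

/-- A finite metric space with an `m`-center embeds into an ultrametric with
distortion at most `2m`. -/
theorem mcenter_embeds_ultrametric {X : Type*} [MetricSpace X] [Fintype X]
    (m : ℕ) (hm : 1 ≤ m) (x₀ : X)
    (hx₀ : ∀ (y : X) (r : ℝ), 0 < r →
      (m : ℝ) ≤ (Set.ncard {z : X | dist y z ≤ r} : ℝ) → dist y x₀ ≤ r) :
    ∃ ρ : X → X → ℝ,
      (∀ x y, ρ x y = ρ y x) ∧
      (∀ x y, ρ x y = 0 ↔ x = y) ∧
      (∀ x y z, ρ x z ≤ max (ρ x y) (ρ y z)) ∧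
      (∀ x y, dist x y ≤ ρ x y ∧ ρ x y ≤ 2 * m * dist x y) := by
  classical
  set S : X → X → Set ℝ := fun x y =>
    {t : ℝ | 0 ≤ t ∧ ReflTransGen (fun a b : X => dist a b ≤ t) x y} with hS
  set c : X → X → ℝ := fun x y => sInf (S x y) with hc
  have hmem_dist : ∀ x y, dist x y ∈ S x y := by
    intro x y
    exact ⟨dist_nonneg, ReflTransGen.single le_rfl⟩
  have hne : ∀ x y, (S x y).Nonempty := fun x y => ⟨_, hmem_dist x y⟩
  have hbdd : ∀ x y, BddBelow (S x y) := by
    intro x y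
    exact ⟨0, fun t ht => ht.1⟩
  have hup : ∀ x y, ∀ t ∈ S x y, ∀ t', t ≤ t' → t' ∈ S x y := by
    intro x y t ht t' htt'
    exact ⟨le_trans ht.1 htt', ReflTransGen.mono (fun a b hab => le_trans hab htt') x y ht.2⟩
  have hc_nonneg : ∀ x y, 0 ≤ c x y := by
    intro x y
    exact le_csInf (hne x y) (fun t ht => ht.1)
  have hc_le_dist : ∀ x y, c x y ≤ dist x y := by
    intro x y
    exact csInf_le (hbdd x y) (hmem_dist x y)
  have heps : ∀ x y, ∀ ε : ℝ, 0 < ε → c x y + ε ∈ S x y := by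
    intro x y ε hε
    obtain ⟨t, htS, htlt⟩ := exists_lt_of_csInf_lt (hne x y) (by linarith : sInf (S x y) < c x y + ε)
    exact hup x y t htS _ (le_of_lt htlt)
  have hkey : ∀ x y, dist x y ≤ 2 * m * c x y := by
    intro x y
    have hεb : ∀ ε : ℝ, 0 < ε → dist x y ≤ 2 * m * (c x y + ε) := by
      intro ε hε
      obtain ⟨h0, hch⟩ := heps x y ε hε
      exact chain_lb hm hx₀ h0 hch
    by_contra hcon
    push_neg at hcon
    have h2m : (0:ℝ) < 2 * m := by
      have : (1:ℝ) ≤ m := by exact_mod_cast hm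
      positivity
    set ε := (dist x y - 2 * m * c x y) / (2 * (2 * m)) with hε
    have hε0 : 0 < ε := div_pos (by linarith) (by positivity)
    have := hεb ε hε0
    rw [hε] at this
    have hdiv : (dist x y - 2 * m * c x y) / (2 * (2 * m)) * (2 * (2*m)) = dist x y - 2 * m * c x y :=
      div_mul_cancel₀ _ (by positivity)
    nlinarith
  have hsymmS : ∀ x y, S x y = S y x := by
    intro x y
    ext t
    constructor <;> intro ⟨h0, hch⟩ <;>
      exact ⟨h0, (by haveI : Std.Symm (fun a b : X => dist a b ≤ t) := ⟨fun a b hab => by rwa [dist_comm]⟩; exact Std.Symm.symm _ _ hch)⟩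
  refine ⟨fun x y => 2 * m * c x y, ?_, ?_, ?_, ?_⟩
  · intro x y
    show 2 * (m:ℝ) * c x y = 2 * (m:ℝ) * c y x
    have : c x y = c y x := by simp only [hc]; rw [hsymmS x y]
    rw [this]
  · intro x y
    show 2 * (m:ℝ) * c x y = 0 ↔ x = y
    constructor
    · intro h
      have h2 := hkey x y
      rw [h] at h2
      exact dist_le_zero.mp h2
    · intro h
      subst h
      have h1 : c x x ≤ 0 := by
        have := hc_le_dist x x
        simpa using this
      have h2 : 0 ≤ c x x := hc_nonneg x x
      have : c x x = 0 := le_antisymm h1 h2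
      rw [this]; ring
  · intro x y z
    show 2 * (m:ℝ) * c x z ≤ max (2 * (m:ℝ) * c x y) (2 * (m:ℝ) * c y z)
    have hM : c x z ≤ max (c x y) (c y z) := by
      have hεb : ∀ ε : ℝ, 0 < ε → c x z ≤ max (c x y) (c y z) + ε := by
        intro ε hε
        have h1 : c x y + ε ∈ S x y := heps x y ε hε
        have h2 : c y z + ε ∈ S y z := heps y z ε hε
        set M := max (c x y) (c y z) with hMdef
        have h1' : M + ε ∈ S x y := hup x y _ h1 _ (add_le_add_left (le_max_left _ _) ε)
        have h2' : M + ε ∈ S y z := hup y z _ h2 _ (add_le_add_left (le_max_right _ _) ε)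
        have htrans : M + ε ∈ S x z :=
          ⟨h1'.1, ReflTransGen.trans h1'.2 h2'.2⟩
        exact csInf_le (hbdd x z) htrans
      exact le_of_forall_pos_le_add hεb
    have hmn : (0:ℝ) ≤ 2 * m := by positivity
    calc (2:ℝ) * m * c x z ≤ 2 * m * max (c x y) (c y z) := by
          apply mul_le_mul_of_nonneg_left hM hmn
      _ = max (2 * m * c x y) (2 * m * c y z) := by
          rw [mul_max_of_nonneg _ _ hmn]
  · intro x y
    refine ⟨?_, ?_⟩
    · exact hkey x y
    · have := hc_le_dist x y
      have hmn : (0:ℝ) ≤ 2 * m := by positivity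
      exact mul_le_mul_of_nonneg_left this hmn
end

section
/- Let M be an n-point metric space. Then there exist disjoint subsets S, T ⊆ M with |T| ≥ n/4 such that for every x ∈ T and every subset W with S ⊆ W ⊆ M∖{x}, d_M(x,W) = r_M(x), where r_M(x) = d_M(x, M∖{x}) is the distance from x to its nearest neighbor. -/
/-- Key combinatorial lemma: given a fixed-point-free (on `V`) function `f`,
there is a subset `T ⊆ V` with `f(T) ∩ T = ∅` and `|T| ≥ |V|/3`. -/
lemma exists_T_third {M : Type*} [DecidableEq M] (f : M → M) :
    ∀ n (V : Finset M), V.card ≤ n → (∀ x ∈ V, f x ≠ x) →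
      ∃ T ⊆ V, (∀ x ∈ T, f x ∉ T) ∧ (V.card : ℝ) ≤ 3 * T.card := by
  intro n
  induction n with
  | zero =>
    intro V hV _
    refine ⟨∅, Finset.empty_subset _, by simp, ?_⟩
    simp [Nat.le_zero.mp hV]
  | succ n ih =>
    intro V hV hf
    rcases V.eq_empty_or_nonempty with rfl | ⟨x, hx⟩
    · exact ⟨∅, Finset.empty_subset _, by simp, by simp⟩
    by_cases hsrc : ∃ x ∈ V, ∀ y ∈ V.erase x, f y ≠ x
    · obtain ⟨x, hx, hprex⟩ := hsrc
      set V' : Finset M := (V.erase x).erase (f x) with hV'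
      have hV'sub : V' ⊆ V := (Finset.erase_subset _ _).trans (Finset.erase_subset _ _)
      have hcard1 : V.card - 1 ≤ (V.erase x).card := Finset.pred_card_le_card_erase
      have hcard2 : (V.erase x).card - 1 ≤ V'.card := Finset.pred_card_le_card_erase
      have hlt : V'.card < V.card := by
        have := Finset.card_erase_of_mem hx
        have h2 := Finset.card_le_card (Finset.erase_subset (f x) (V.erase x))
        have hpos : 0 < V.card := Finset.card_pos.mpr ⟨x, hx⟩
        rw [hV']
        omega
      obtain ⟨T', hT'sub, hT'free, hT'card⟩ := ih V' (by omega)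
        (fun y hy => hf y (hV'sub hy))
      have hxT' : x ∉ T' := fun h => (Finset.notMem_erase x V)
        (Finset.erase_subset _ _ (hT'sub h))
      refine ⟨insert x T', Finset.insert_subset hx (hT'sub.trans hV'sub), ?_, ?_⟩
      · intro z hz
        rcases Finset.mem_insert.mp hz with rfl | hz'
        · intro hmem
          rcases Finset.mem_insert.mp hmem with h | h
          · exact hf z hx h
          · exact (Finset.notMem_erase (f z) _) (hT'sub h)
        · intro hmem
          rcases Finset.mem_insert.mp hmem with h | h
          · exact hprex z (Finset.erase_subset _ _ (hT'sub hz')) h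
          · exact hT'free z hz' h
      · rw [Finset.card_insert_of_notMem hxT']
        have h3 : (V.card : ℝ) ≤ V'.card + 3 := by
          have : V.card ≤ V'.card + 3 := by omega
          exact_mod_cast this
        push_cast
        linarith
    · push_neg at hsrc
      -- every x in V has a preimage in V \ {x}; then f is injective on V
      have hsurj : ∀ x ∈ V, ∃ y ∈ V, f y = x := by
        intro x hxV
        obtain ⟨y, hy, hfy⟩ := hsrc x hxV
        exact ⟨y, Finset.erase_subset _ _ hy, hfy⟩
      have hVsub : V ⊆ V.image f := by
        intro x hxV
        obtain ⟨y, hy, hfy⟩ := hsurj x hxV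
        exact Finset.mem_image.mpr ⟨y, hy, hfy⟩
      have hinj : Set.InjOn f V := by
        apply Finset.injOn_of_card_image_eq
        exact le_antisymm Finset.card_image_le (Finset.card_le_card hVsub)
      obtain ⟨y, hyV, hfyx⟩ := hsurj x hx
      set V' : Finset M := (((V.erase x).erase (f x)).erase y) with hV'
      have hV'sub : V' ⊆ V :=
        (Finset.erase_subset _ _).trans ((Finset.erase_subset _ _).trans
          (Finset.erase_subset _ _))
      have hcard1 : V.card - 1 ≤ (V.erase x).card := Finset.pred_card_le_card_erase
      have hcard2 : (V.erase x).card - 1 ≤ ((V.erase x).erase (f x)).card :=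
        Finset.pred_card_le_card_erase
      have hcard3 : ((V.erase x).erase (f x)).card - 1 ≤ V'.card :=
        Finset.pred_card_le_card_erase
      have hlt : V'.card < V.card := by
        have := Finset.card_erase_of_mem hx
        have h2 := Finset.card_le_card (Finset.erase_subset (f x) (V.erase x))
        have h3 := Finset.card_le_card (Finset.erase_subset y ((V.erase x).erase (f x)))
        have hpos : 0 < V.card := Finset.card_pos.mpr ⟨x, hx⟩
        rw [hV']
        omega
      obtain ⟨T', hT'sub, hT'free, hT'card⟩ := ih V' (by omega)
        (fun z hz => hf z (hV'sub hz))
      have hxT' : x ∉ T' := fun h => (Finset.notMem_erase x V)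
        ((Finset.erase_subset _ _) ((Finset.erase_subset _ _) (hT'sub h)))
      refine ⟨insert x T', Finset.insert_subset hx (hT'sub.trans hV'sub), ?_, ?_⟩
      · intro z hz
        rcases Finset.mem_insert.mp hz with rfl | hz'
        · intro hmem
          rcases Finset.mem_insert.mp hmem with h | h
          · exact hf z hx h
          · exact (Finset.notMem_erase (f z) _)
              ((Finset.erase_subset _ _) (hT'sub h))
        · intro hmem
          rcases Finset.mem_insert.mp hmem with h | h
          · -- f z = x = f y, z, y ∈ V, injectivity ⇒ z = y ∉ V'
            have hzV : z ∈ V := hV'sub (hT'sub hz')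
            have : z = y := hinj hzV hyV (h.trans hfyx.symm)
            exact (Finset.notMem_erase y _) (this ▸ hT'sub hz')
          · exact hT'free z hz' h
      · rw [Finset.card_insert_of_notMem hxT']
        have h3 : (V.card : ℝ) ≤ V'.card + 3 := by
          have : V.card ≤ V'.card + 3 := by omega
          exact_mod_cast this
        push_cast
        linarith

/-- In every `n`-point metric space there are disjoint subsets `S, T` with
`|T| ≥ n/4` such that for every `x ∈ T` and every `W` with `S ⊆ W ⊆ M∖{x}`,
the distance from `x` to `W` equals the distance from `x` to its nearest
neighbor. -/
theorem exists_ST_nearest_neighbor {M : Type*} [MetricSpace M] [Fintype M] :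
    ∃ S T : Finset M, Disjoint S T ∧ (Fintype.card M : ℝ) / 4 ≤ T.card ∧
      ∀ x ∈ T, ∀ W : Set M, (↑S : Set M) ⊆ W → W ⊆ ({x}ᶜ : Set M) →
        Metric.infDist x W = Metric.infDist x {y : M | y ≠ x} := by
  classical
  by_cases hsmall : Fintype.card M ≤ 1
  · refine ⟨∅, Finset.univ, by simp, ?_, ?_⟩
    · rw [Finset.card_univ]
      have h0 : (0 : ℝ) ≤ Fintype.card M := by positivity
      linarith
    · intro x _ W _ hWx
      have hcompl : ({x}ᶜ : Set M) = ∅ := by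
        ext y
        simp only [Set.mem_compl_iff, Set.mem_singleton_iff, Set.mem_empty_iff_false,
          iff_false, not_not]
        exact Fintype.card_le_one_iff.mp hsmall y x
      have hW : W = ∅ := Set.subset_empty_iff.mp (hcompl ▸ hWx)
      have hN : {y : M | y ≠ x} = ∅ := by
        ext y
        simp only [Set.mem_setOf_eq, Set.mem_empty_iff_false, iff_false, not_not]
        exact Fintype.card_le_one_iff.mp hsmall y x
      rw [hW, hN]
  · push_neg at hsmall
    -- choose a nearest neighbor f x for each x
    have hfx : ∀ x : M, ∃ y : M, y ≠ x ∧ ∀ z : M, z ≠ x → dist x y ≤ dist x z := by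
      intro x
      obtain ⟨y0, hy0⟩ := Fintype.exists_ne_of_one_lt_card hsmall x
      have hne : (Finset.univ.erase x).Nonempty :=
        ⟨y0, Finset.mem_erase.mpr ⟨hy0, Finset.mem_univ _⟩⟩
      obtain ⟨y, hy, hmin⟩ := Finset.exists_min_image (Finset.univ.erase x)
        (fun z => dist x z) hne
      exact ⟨y, (Finset.mem_erase.mp hy).1,
        fun z hz => hmin z (Finset.mem_erase.mpr ⟨hz, Finset.mem_univ _⟩)⟩
    choose f hf1 hf2 using hfx
    obtain ⟨T, _, hTfree, hTcard⟩ := exists_T_third f (Fintype.card M) Finset.univ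
      (by simp) (fun x _ => hf1 x)
    refine ⟨T.image f, T, ?_, ?_, ?_⟩
    · rw [Finset.disjoint_left]
      intro a ha
      obtain ⟨x, hx, rfl⟩ := Finset.mem_image.mp ha
      exact hTfree x hx
    · rw [Finset.card_univ] at hTcard
      linarith
    · intro x hxT W hSW hWx
      have hfxN : f x ∈ {y : M | y ≠ x} := hf1 x
      have hNne : ({y : M | y ≠ x} : Set M).Nonempty := ⟨f x, hfxN⟩
      have hr : Metric.infDist x {y : M | y ≠ x} = dist x (f x) := by
        apply le_antisymm (Metric.infDist_le_dist_of_mem hfxN)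
        by_contra h
        push_neg at h
        obtain ⟨y, hy, hylt⟩ := (Metric.infDist_lt_iff hNne).mp h
        exact absurd (hf2 x y hy) (not_le.mpr hylt)
      have hfxW : f x ∈ W := hSW (by
        simp only [Finset.coe_image, Set.mem_image, Finset.mem_coe]
        exact ⟨x, hxT, rfl⟩)
      have hWN : W ⊆ {y : M | y ≠ x} := by
        intro y hy
        exact (Set.mem_compl_iff _ _).mp (hWx hy)
      apply le_antisymm
      · rw [hr]
        exact Metric.infDist_le_dist_of_mem hfxW
      · exact Metric.infDist_le_infDist_of_subset hWN ⟨f x, hfxW⟩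
end

section
/- For every integer n ≥ 1, every 1 ≤ p ≤ 2, and every 0 < τ ≤ 2^{1/p}, the star metric ★_n^τ on {0,1,...,n} (with d(i,0)=1 for 1≤i≤n and d(i,j)=τ for distinct i,j≥1) embeds isometrically into L_p. -/
/-- The star metric `★_n^τ` on `{0,1,…,n}`: `d(i,0) = 1` for `i ≥ 1` and
`d(i,j) = τ` for distinct `i, j ≥ 1`. -/
noncomputable def starTauDist (τ : ℝ) (i j : ℕ) : ℝ :=
  if i = j then 0 else if i = 0 ∨ j = 0 then 1 else τ

open MeasureTheory Set

/-- For `1 ≤ p ≤ 2` and `0 < τ ≤ 2^(1/p)`, the star metric `★_n^τ` embeds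
isometrically into `L_p`. -/
theorem starTau_isometric_into_Lp_p_le_two (n : ℕ) (hn : 1 ≤ n)
    (p : ℝ) (hp1 : 1 ≤ p) (hp2 : p ≤ 2)
    (τ : ℝ) (hτ : 0 < τ) (hτ2 : τ ≤ (2 : ℝ) ^ ((1 : ℝ) / p))
    [Fact (1 ≤ ENNReal.ofReal p)] :
    ∃ f : ℕ → MeasureTheory.Lp ℝ (ENNReal.ofReal p)
        (MeasureTheory.volume : MeasureTheory.Measure ℝ),
      ∀ i j, i ≤ n → j ≤ n → ‖f i - f j‖ = starTauDist τ i j := by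
  have hp0 : (0 : ℝ) < p := lt_of_lt_of_le one_pos hp1
  set q : ENNReal := ENNReal.ofReal p with hq
  have hq0 : q ≠ 0 := by simpa [hq] using (ENNReal.ofReal_pos.mpr hp0).ne'
  have hqt : q ≠ ⊤ := ENNReal.ofReal_ne_top
  have hqtr : q.toReal = p := ENNReal.toReal_ofReal hp0.le
  -- τ ^ p ≤ 2
  have hτp0 : (0 : ℝ) < τ ^ p := Real.rpow_pos_of_pos hτ p
  have hτp2 : τ ^ p ≤ 2 := by
    have := Real.rpow_le_rpow hτ.le hτ2 hp0.le
    rwa [← Real.rpow_mul (by norm_num), one_div_mul_cancel hp0.ne',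
      Real.rpow_one] at this
  set t : ℝ := τ ^ p / 2 with htdef
  have ht0 : 0 < t := by positivity
  have ht1 : t ≤ 1 := by rw [htdef]; linarith
  -- the sets
  set S : Set ℝ := Ico (-(1 - t)) 0 with hSdef
  set T : ℕ → Set ℝ := fun i => Ico (i : ℝ) (i + t) with hTdef
  set A : ℕ → Set ℝ := fun i => S ∪ T i with hAdef
  have hSm : MeasurableSet S := measurableSet_Ico
  have hTm : ∀ i, MeasurableSet (T i) := fun i => measurableSet_Ico
  have hAm : ∀ i, MeasurableSet (A i) := fun i => hSm.union (hTm i)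
  have hST : ∀ i, Disjoint S (T i) := by
    intro i
    refine Set.disjoint_left.mpr fun x hx hx' => ?_
    have h1 : x < 0 := hx.2
    have h2 : (i : ℝ) ≤ x := hx'.1
    have : (0 : ℝ) ≤ i := Nat.cast_nonneg i
    linarith
  have hTT : ∀ i j, i ≠ j → Disjoint (T i) (T j) := by
    intro i j hij
    rcases lt_or_gt_of_ne hij with h | h
    · refine Set.disjoint_left.mpr fun x hx hx' => ?_
      have h1 : x < i + t := hx.2
      have h2 : (j : ℝ) ≤ x := hx'.1
      have h3 : (i : ℝ) + 1 ≤ j := by exact_mod_cast h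
      linarith
    · refine Set.disjoint_left.mpr fun x hx hx' => ?_
      have h1 : x < j + t := hx'.2
      have h2 : (i : ℝ) ≤ x := hx.1
      have h3 : (j : ℝ) + 1 ≤ i := by exact_mod_cast h
      linarith
  have hvolS : volume S = ENNReal.ofReal (1 - t) := by
    rw [hSdef, Real.volume_Ico]; ring_nf
  have hvolT : ∀ i, volume (T i) = ENNReal.ofReal t := by
    intro i; rw [hTdef]; simp [Real.volume_Ico]
  have hvolA : ∀ i, volume (A i) = 1 := by
    intro i
    rw [hAdef]
    simp only
    rw [measure_union (hST i) (hTm i), hvolS, hvolT,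
      ← ENNReal.ofReal_add (by linarith) ht0.le]
    norm_num
  have hAfin : ∀ i, volume (A i) ≠ ⊤ := fun i => by rw [hvolA]; exact ENNReal.one_ne_top
  -- volume of union of two T's
  have hvolTT : ∀ i j, i ≠ j → volume (T i ∪ T j) = ENNReal.ofReal (τ ^ p) := by
    intro i j hij
    rw [measure_union (hTT i j hij) (hTm j), hvolT, hvolT,
      ← ENNReal.ofReal_add ht0.le ht0.le]
    congr 1
    rw [htdef]; ring
  -- define the embedding
  refine ⟨fun i => if i = 0 then 0 else indicatorConstLp q (hAm i) (hAfin i) (1 : ℝ),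
    fun i j _ _ => ?_⟩
  have hnorm1 : ∀ i, i ≠ 0 →
      ‖indicatorConstLp q (hAm i) (hAfin i) (1 : ℝ)‖ = 1 := by
    intro i _
    rw [norm_indicatorConstLp hq0 hqt, measureReal_def, hvolA, hqtr]
    simp
  rcases eq_or_ne i j with rfl | hij
  · simp [starTauDist]
  rcases eq_or_ne i 0 with rfl | hi0
  · -- i = 0, j ≠ 0
    have hj0 : j ≠ 0 := fun h => hij h.symm
    beta_reduce
    rw [if_pos rfl, if_neg hj0, zero_sub, norm_neg]
    rw [hnorm1 j hj0, starTauDist, if_neg hij, if_pos (Or.inl rfl)]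
  rcases eq_or_ne j 0 with rfl | hj0
  · beta_reduce
    rw [if_pos rfl, if_neg hi0, sub_zero]
    rw [hnorm1 i hi0, starTauDist, if_neg hij, if_pos (Or.inr rfl)]
  -- main case: i ≠ j, both nonzero
  simp only [if_neg hi0, if_neg hj0]
  have hTTfin : volume (T i ∪ T j) ≠ ⊤ := by
    rw [hvolTT i j hij]; exact ENNReal.ofReal_ne_top
  have hUm : MeasurableSet (T i ∪ T j) := (hTm i).union (hTm j)
  have key : ‖indicatorConstLp q (hAm i) (hAfin i) (1 : ℝ)
        - indicatorConstLp q (hAm j) (hAfin j) (1 : ℝ)‖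
      = ‖indicatorConstLp q hUm hTTfin (1 : ℝ)‖ := by
    rw [Lp.norm_def, Lp.norm_def]
    congr 1
    have h1 : (⇑(indicatorConstLp q (hAm i) (hAfin i) (1 : ℝ)
          - indicatorConstLp q (hAm j) (hAfin j) (1 : ℝ)))
        =ᵐ[volume] fun x => (A i).indicator (fun _ => (1:ℝ)) x
          - (A j).indicator (fun _ => (1:ℝ)) x := by
      filter_upwards [Lp.coeFn_sub (indicatorConstLp q (hAm i) (hAfin i) (1 : ℝ))
        (indicatorConstLp q (hAm j) (hAfin j) (1 : ℝ)),
        indicatorConstLp_coeFn (p := q) (hs := hAm i) (hμs := hAfin i) (c := (1:ℝ)),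
        indicatorConstLp_coeFn (p := q) (hs := hAm j) (hμs := hAfin j) (c := (1:ℝ))]
        with x h1 h2 h3
      rw [h1, Pi.sub_apply, h2, h3]
    rw [eLpNorm_congr_ae h1, eLpNorm_congr_ae (indicatorConstLp_coeFn (p := q)
      (hs := hUm) (hμs := hTTfin) (c := (1:ℝ)))]
    apply eLpNorm_congr_norm_ae
    filter_upwards with x
    have hAi : (A i).indicator (fun _ => (1:ℝ)) x
        = S.indicator (fun _ => (1:ℝ)) x + (T i).indicator (fun _ => (1:ℝ)) x := by
      rw [hAdef]
      exact congrFun (Set.indicator_union_of_disjoint (hST i) _) x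
    have hAj : (A j).indicator (fun _ => (1:ℝ)) x
        = S.indicator (fun _ => (1:ℝ)) x + (T j).indicator (fun _ => (1:ℝ)) x := by
      rw [hAdef]
      exact congrFun (Set.indicator_union_of_disjoint (hST j) _) x
    have hU : (T i ∪ T j).indicator (fun _ => (1:ℝ)) x
        = (T i).indicator (fun _ => (1:ℝ)) x + (T j).indicator (fun _ => (1:ℝ)) x :=
      congrFun (Set.indicator_union_of_disjoint (hTT i j hij) _) x
    rw [hAi, hAj, hU]
    have hdis := Set.disjoint_left.mp (hTT i j hij)
    by_cases hxi : x ∈ T i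
    · have hxj : x ∉ T j := hdis hxi
      simp [Set.indicator_of_mem hxi, Set.indicator_of_notMem hxj]
    · by_cases hxj : x ∈ T j
      · simp [Set.indicator_of_mem hxj, Set.indicator_of_notMem hxi]
      · simp [Set.indicator_of_notMem hxi, Set.indicator_of_notMem hxj]
  rw [key, norm_indicatorConstLp hq0 hqt, measureReal_def, hvolTT i j hij, hqtr,
    ENNReal.toReal_ofReal hτp0.le]
  rw [starTauDist, if_neg hij, if_neg (by push_neg; exact ⟨hi0, hj0⟩)]
  rw [← Real.rpow_mul hτ.le, mul_one_div_cancel hp0.ne', Real.rpow_one]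
  simp
end

section
/- For every integer n ≥ 1, every 2 < p < ∞, and every 0 < τ ≤ 2^{1-1/p}, the star metric ★_n^τ on {0,1,...,n} embeds isometrically into L_p. -/
open Finset MeasureTheory

section Aux

lemma flip_card (n l : ℕ) (hl : l < n) (Q : ℕ → Prop) [DecidablePred Q] :
    ((range (2^n)).filter Q).card = ((range (2^n)).filter (fun v => Q (v ^^^ 2^l))).card := by
  apply Finset.card_bij' (fun v _ => v ^^^ 2^l) (fun v _ => v ^^^ 2^l)
  all_goals intro v hv
  all_goals simp only [mem_filter, mem_range, Nat.xor_assoc, Nat.xor_self, Nat.xor_zero] at hv ⊢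
  all_goals first
    | rfl
    | exact ⟨Nat.xor_lt_two_pow hv.1 (Nat.pow_lt_pow_right one_lt_two hl), hv.2⟩

lemma card_bit (n k : ℕ) (hk : k < n) :
    ((range (2^n)).filter (fun v => Nat.testBit v k = true)).card = 2^(n-1) := by
  have h1 := flip_card n k hk (fun v => Nat.testBit v k = true)
  have h2 : ∀ v, (Nat.testBit (v ^^^ 2^k) k = true) ↔ ¬ (Nat.testBit v k = true) := by
    intro v
    simp [Nat.testBit_xor, Nat.testBit_two_pow_self, Bool.xor_true]
  have h3 : ((range (2^n)).filter (fun v => Nat.testBit (v ^^^ 2^k) k = true)).card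
      = ((range (2^n)).filter (fun v => ¬ (Nat.testBit v k = true))).card := by
    congr 1; apply filter_congr; intro v _; simp [h2 v]
  have h4 := Finset.card_filter_add_card_filter_not
    (s := range (2^n)) (p := fun v => Nat.testBit v k = true)
  rw [card_range] at h4
  have hn : 2^(n-1) + 2^(n-1) = 2^n := by
    rw [← two_mul, ← pow_succ']
    congr 1; omega
  omega

lemma card_bit_ne (n k l : ℕ) (hk : k < n) (hl : l < n) (hkl : k ≠ l) :
    ((range (2^n)).filter (fun v => Nat.testBit v k ≠ Nat.testBit v l)).card = 2^(n-1) := by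
  have h1 := flip_card n l hl (fun v => Nat.testBit v k ≠ Nat.testBit v l)
  have h2 : ∀ v, (Nat.testBit (v ^^^ 2^l) k ≠ Nat.testBit (v ^^^ 2^l) l)
      ↔ ¬ (Nat.testBit v k ≠ Nat.testBit v l) := by
    intro v
    simp only [Nat.testBit_xor, Nat.testBit_two_pow, Nat.testBit_two_pow_self]
    have : decide (l = k) = false := by simp [Ne.symm hkl]
    rw [this]
    cases Nat.testBit v k <;> cases Nat.testBit v l <;> simp
  have h3 : ((range (2^n)).filter (fun v => Nat.testBit (v ^^^ 2^l) k ≠ Nat.testBit (v ^^^ 2^l) l)).card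
      = ((range (2^n)).filter (fun v => ¬ (Nat.testBit v k ≠ Nat.testBit v l))).card := by
    congr 1; apply filter_congr; intro v _; simp only [h2 v]
  have h4 := Finset.card_filter_add_card_filter_not
    (s := range (2^n)) (p := fun v => Nat.testBit v k ≠ Nat.testBit v l)
  rw [card_range] at h4
  have hn : 2^(n-1) + 2^(n-1) = 2^n := by
    rw [← two_mul, ← pow_succ']
    congr 1; omega
  omega

noncomputable def stepFun (N : ℕ) (c : ℕ → ℝ) : ℝ → ℝ :=
  fun x => if x ∈ Set.Ico (0:ℝ) 1 then c (⌊(N:ℝ) * x⌋.toNat) else 0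

lemma mem_Ico_div_iff {N : ℕ} (hN : 0 < N) (v : ℕ) (x : ℝ) :
    x ∈ Set.Ico ((v:ℝ)/N) (((v:ℝ)+1)/N) ↔ ⌊(N:ℝ) * x⌋ = (v:ℤ) := by
  have hN' : (0:ℝ) < N := by exact_mod_cast hN
  rw [Set.mem_Ico, Int.floor_eq_iff, div_le_iff₀ hN', lt_div_iff₀ hN']
  push_cast
  constructor <;> rintro ⟨a, b⟩ <;> constructor <;> nlinarith

lemma stepFun_eq (N : ℕ) (hN : 0 < N) (c : ℕ → ℝ) :
    stepFun N c = fun x => ∑ v ∈ range N,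
      (Set.Ico ((v:ℝ)/N) (((v:ℝ)+1)/N)).indicator (fun _ => c v) x := by
  have hN' : (0:ℝ) < N := by exact_mod_cast hN
  funext x
  simp only [stepFun]
  by_cases hx : x ∈ Set.Ico (0:ℝ) 1
  · rw [if_pos hx]
    obtain ⟨hx0, hx1⟩ := hx
    have hfl : 0 ≤ ⌊(N:ℝ)*x⌋ := Int.floor_nonneg.2 (by positivity)
    have hv0' : ⌊(N:ℝ)*x⌋ = ((⌊(N:ℝ)*x⌋.toNat : ℕ) : ℤ) := (Int.toNat_of_nonneg hfl).symm
    have hlt : ⌊(N:ℝ)*x⌋.toNat < N := by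
      have h1 : (N:ℝ)*x < N := by nlinarith
      have h2 : ⌊(N:ℝ)*x⌋ < (N:ℤ) := Int.floor_lt.2 (by exact_mod_cast h1)
      omega
    rw [Finset.sum_eq_single ⌊(N:ℝ)*x⌋.toNat]
    · exact (Set.indicator_of_mem ((mem_Ico_div_iff hN (⌊(N:ℝ)*x⌋.toNat) x).2 hv0')
        (fun _ => c ⌊(N:ℝ)*x⌋.toNat)).symm
    · intro w hw hwne
      apply Set.indicator_of_notMem
      rw [mem_Ico_div_iff hN w x]
      intro h
      exact hwne (by omega)
    · intro h
      exact absurd (Finset.mem_range.2 hlt) h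
  · rw [if_neg hx]
    symm; apply Finset.sum_eq_zero; intro v hv
    apply Set.indicator_of_notMem
    intro hmem
    apply hx
    obtain ⟨h1, h2⟩ := hmem
    have hb : ((v:ℝ)+1)/N ≤ 1 := by
      rw [div_le_one hN']
      have : (v:ℕ) + 1 ≤ N := Finset.mem_range.1 hv
      exact_mod_cast this
    have ha : (0:ℝ) ≤ (v:ℝ)/N := by positivity
    exact ⟨le_trans ha h1, lt_of_lt_of_le h2 hb⟩

lemma memLp_stepFun (N : ℕ) (hN : 0 < N) (c : ℕ → ℝ) (q : ENNReal) :
    MemLp (stepFun N c) q volume := by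
  rw [stepFun_eq N hN]
  have h := memLp_finset_sum' (μ := (volume : Measure ℝ)) (p := q) (range N)
    (f := fun v => (Set.Ico ((v:ℝ)/N) (((v:ℝ)+1)/N)).indicator (fun _ => c v))
    (fun v _ => memLp_indicator_const q measurableSet_Ico (c v)
      (Or.inr (by rw [Real.volume_Ico]; exact ENNReal.ofReal_ne_top)))
  have he : (∑ v ∈ range N, (Set.Ico ((v:ℝ)/N) (((v:ℝ)+1)/N)).indicator (fun _ => c v))
      = fun x => ∑ v ∈ range N, (Set.Ico ((v:ℝ)/N) (((v:ℝ)+1)/N)).indicator (fun _ => c v) x := by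
    funext x; simp [Finset.sum_apply]
  rwa [he] at h

lemma integral_stepFun (N : ℕ) (hN : 0 < N) (c : ℕ → ℝ) :
    ∫ x, stepFun N c x = (∑ v ∈ range N, c v) / N := by
  have hN' : (0:ℝ) < N := by exact_mod_cast hN
  rw [stepFun_eq N hN]
  rw [integral_finset_sum _ (fun v _ => (integrable_indicator_iff measurableSet_Ico).2
    (integrableOn_const (by rw [Real.volume_Ico]; exact ENNReal.ofReal_ne_top)))]
  have : ∀ v ∈ range N,
      ∫ x, (Set.Ico ((v:ℝ)/N) (((v:ℝ)+1)/N)).indicator (fun _ => c v) x = c v / N := by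
    intro v _
    have hsub : ((v:ℝ)+1)/N - (v:ℝ)/N = 1/N := by field_simp; ring
    rw [integral_indicator_const (c v) measurableSet_Ico, measureReal_def, Real.volume_Ico, hsub,
      ENNReal.toReal_ofReal (by positivity)]
    simp [smul_eq_mul]
    ring
  rw [Finset.sum_congr rfl this, Finset.sum_div]

lemma norm_rpow_stepFun (N : ℕ) (c : ℕ → ℝ) {p : ℝ} (hp : 0 < p) :
    (fun x => ‖stepFun N c x‖ ^ p) = stepFun N (fun v => |c v| ^ p) := by
  funext x
  simp only [stepFun]
  split
  · rw [Real.norm_eq_abs]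
  · rw [norm_zero, Real.zero_rpow hp.ne']

lemma eLpNorm_stepFun_toReal (N : ℕ) (hN : 0 < N) (c : ℕ → ℝ) {p : ℝ} (hp : 0 < p) :
    (eLpNorm (stepFun N c) (ENNReal.ofReal p) volume).toReal
      = ((∑ v ∈ range N, |c v| ^ p) / N) ^ p⁻¹ := by
  have hq0 : (ENNReal.ofReal p) ≠ 0 := by
    simp only [ne_eq, ENNReal.ofReal_eq_zero, not_le]; exact hp
  rw [MemLp.eLpNorm_eq_integral_rpow_norm hq0 ENNReal.ofReal_ne_top (memLp_stepFun N hN c _)]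
  simp only [ENNReal.toReal_ofReal hp.le]
  rw [norm_rpow_stepFun N c hp, integral_stepFun N hN _, ENNReal.toReal_ofReal]
  exact Real.rpow_nonneg (by positivity) _

noncomputable def starCoef (s t : ℝ) : ℕ → ℕ → ℝ := fun i v =>
  if i = 0 then 0 else if Nat.testBit v (i-1) then s + t else s - t

lemma sum_starCoef_single (n : ℕ) (s t p : ℝ) (k : ℕ) (hk : k < n) :
    ∑ v ∈ range (2^n), |starCoef s t (k+1) v| ^ p
      = (2^(n-1) : ℕ) * (|s + t| ^ p + |s - t| ^ p) := by
  have h : ∀ v ∈ range (2^n), |starCoef s t (k+1) v| ^ p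
      = if Nat.testBit v k = true then |s+t|^p else |s-t|^p := by
    intro v _
    simp only [starCoef, Nat.succ_ne_zero, if_false, Nat.add_sub_cancel]
    split <;> rfl
  rw [Finset.sum_congr rfl h, Finset.sum_ite, Finset.sum_const, Finset.sum_const, card_bit n k hk]
  have h4 := Finset.card_filter_add_card_filter_not
    (s := range (2^n)) (p := fun v => Nat.testBit v k = true)
  rw [card_range, card_bit n k hk] at h4
  have hcard : ((range (2^n)).filter (fun v => ¬ (Nat.testBit v k = true))).card = 2^(n-1) := by
    have hn : 2^(n-1) + 2^(n-1) = 2^n := by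
      rw [← two_mul, ← pow_succ']; congr 1; omega
    omega
  rw [hcard]
  simp only [nsmul_eq_mul]
  push_cast
  ring

lemma sum_starCoef_pair (n : ℕ) (s t p : ℝ) (hp : p ≠ 0) (k l : ℕ)
    (hk : k < n) (hl : l < n) (hkl : k ≠ l) :
    ∑ v ∈ range (2^n), |starCoef s t (k+1) v - starCoef s t (l+1) v| ^ p
      = (2^(n-1) : ℕ) * |2*t| ^ p := by
  have h : ∀ v ∈ range (2^n), |starCoef s t (k+1) v - starCoef s t (l+1) v| ^ p
      = if Nat.testBit v k ≠ Nat.testBit v l then |2*t|^p else 0 := by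
    intro v _
    simp only [starCoef, Nat.succ_ne_zero, if_false, Nat.add_sub_cancel]
    cases hbk : Nat.testBit v k <;> cases hbl : Nat.testBit v l <;>
      norm_num [hbk, hbl]
    all_goals first
      | exact Real.zero_rpow hp
      | rw [show t + t = 2*t by ring]
      | rw [show s - t - (s + t) = -(2*t) by ring, abs_neg]
    all_goals rw [abs_mul, abs_two]
  rw [Finset.sum_congr rfl h, Finset.sum_ite, Finset.sum_const, Finset.sum_const,
    card_bit_ne n k l hk hl hkl]
  simp [nsmul_eq_mul]

end Aux

/-- For `2 < p < ∞` and `0 < τ ≤ 2^(1-1/p)`, the star metric `★_n^τ` embeds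
isometrically into `L_p`. -/
theorem starTau_isometric_into_Lp_two_lt_p (n : ℕ) (hn : 1 ≤ n)
    (p : ℝ) (hp : 2 < p)
    (τ : ℝ) (hτ : 0 < τ) (hτ2 : τ ≤ (2 : ℝ) ^ (1 - 1 / p))
    [Fact (1 ≤ ENNReal.ofReal p)] :
    ∃ f : ℕ → MeasureTheory.Lp ℝ (ENNReal.ofReal p)
        (MeasureTheory.volume : MeasureTheory.Measure ℝ),
      ∀ i j, i ≤ n → j ≤ n → ‖f i - f j‖ = starTauDist τ i j := by
  classical
  have hp0 : (0:ℝ) < p := by linarith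
  have hN : 0 < 2^n := Nat.pow_pos (by norm_num)
  set t := τ * 2 ^ (1/p - 1) with htdef
  have h2p : (0:ℝ) < (2:ℝ) ^ (1/p - 1) := Real.rpow_pos_of_pos (by norm_num) _
  have ht : 0 < t := mul_pos hτ h2p
  have ht1 : t ≤ 1 := by
    have h2 : (2:ℝ) ^ (1 - 1/p) * 2 ^ (1/p - 1) = 1 := by
      rw [← Real.rpow_add (by norm_num : (0:ℝ) < 2)]
      norm_num
    calc t ≤ 2 ^ (1 - 1/p) * 2 ^ (1/p - 1) :=
          mul_le_mul_of_nonneg_right hτ2 h2p.le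
      _ = 1 := h2
  -- choose s via IVT
  obtain ⟨s, hsmem, hFs⟩ : ∃ s ∈ Set.Icc (0:ℝ) 2, (|s + t| ^ p + |s - t| ^ p) / 2 = 1 := by
    have hFc : Continuous (fun s : ℝ => (|s + t| ^ p + |s - t| ^ p) / 2) := by
      apply Continuous.div_const
      exact (((continuous_id.add continuous_const).abs).rpow_const (fun x => Or.inr hp0.le)).add
        (((continuous_id.sub continuous_const).abs).rpow_const (fun x => Or.inr hp0.le))
    have hF0 : (|(0:ℝ) + t| ^ p + |(0:ℝ) - t| ^ p) / 2 ≤ 1 := by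
      rw [zero_add, zero_sub, abs_neg, abs_of_pos ht]
      have : t ^ p ≤ 1 := Real.rpow_le_one ht.le ht1 hp0.le
      linarith
    have hF2 : 1 ≤ (|(2:ℝ) + t| ^ p + |(2:ℝ) - t| ^ p) / 2 := by
      have h1 : (2:ℝ) ≤ |2 + t| := by rw [abs_of_pos (by linarith)]; linarith
      have h2 : (2:ℝ) ≤ (2:ℝ) ^ p := by
        calc (2:ℝ) = 2 ^ (1:ℝ) := (Real.rpow_one 2).symm
          _ ≤ 2 ^ p := Real.rpow_le_rpow_of_exponent_le one_le_two (by linarith)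
      have h3 : (2:ℝ) ^ p ≤ |2 + t| ^ p := Real.rpow_le_rpow (by norm_num) h1 hp0.le
      have h4 : (0:ℝ) ≤ |2 - t| ^ p := Real.rpow_nonneg (abs_nonneg _) _
      linarith
    have := intermediate_value_Icc (by norm_num : (0:ℝ) ≤ 2) hFc.continuousOn
    obtain ⟨s, hs1, hs2⟩ := this ⟨hF0, hF2⟩
    exact ⟨s, hs1, hs2⟩
  refine ⟨fun i => (memLp_stepFun (2^n) hN (starCoef s t i) (ENNReal.ofReal p)).toLp _, ?_⟩
  intro i j hi hj
  have key : ∀ a b : ℕ,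
      ‖(memLp_stepFun (2^n) hN (starCoef s t a) (ENNReal.ofReal p)).toLp _
        - (memLp_stepFun (2^n) hN (starCoef s t b) (ENNReal.ofReal p)).toLp _‖
      = ((∑ v ∈ range (2^n), |starCoef s t a v - starCoef s t b v| ^ p) / (2^n : ℕ)) ^ p⁻¹ := by
    intro a b
    rw [← MemLp.toLp_sub, Lp.norm_toLp]
    have hsub : stepFun (2^n) (starCoef s t a) - stepFun (2^n) (starCoef s t b)
        = stepFun (2^n) (fun v => starCoef s t a v - starCoef s t b v) := by
      funext x
      simp only [Pi.sub_apply, stepFun]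
      split <;> simp
    rw [hsub]
    exact eLpNorm_stepFun_toReal (2^n) hN _ hp0
  have hNcast : ((2^n : ℕ) : ℝ) = 2 * ((2^(n-1) : ℕ) : ℝ) := by
    have : (2^n : ℕ) = 2 * 2^(n-1) := by
      cases n with
      | zero => omega
      | succ m => simp [pow_succ, Nat.succ_sub_one]; ring
    exact_mod_cast this
  rcases eq_or_ne i j with rfl | hij
  · simp [starTauDist, sub_self]
  · rw [key i j]
    have single_val : ∀ k, k < n →
        ((∑ v ∈ range (2^n), |starCoef s t 0 v - starCoef s t (k+1) v| ^ p) / (2^n : ℕ)) ^ p⁻¹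
          = 1 := by
      intro k hk
      have habs : ∀ v, |starCoef s t 0 v - starCoef s t (k+1) v| = |starCoef s t (k+1) v| := by
        intro v
        have h0 : starCoef s t 0 v = 0 := by simp [starCoef]
        rw [h0, zero_sub, abs_neg]
      simp only [habs]
      rw [sum_starCoef_single n s t p k hk, hNcast]
      have hpos : (0:ℝ) < ((2^(n-1) : ℕ) : ℝ) := by positivity
      rw [show ((2^(n-1):ℕ):ℝ) * (|s + t| ^ p + |s - t| ^ p) / (2 * ((2^(n-1):ℕ):ℝ))
          = (|s + t| ^ p + |s - t| ^ p) / 2 by field_simp]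
      rw [hFs, Real.one_rpow]
    rcases Nat.eq_zero_or_pos i with rfl | hipos
    · -- i = 0, j ≥ 1
      obtain ⟨k, rfl⟩ : ∃ k, j = k + 1 := ⟨j - 1, by omega⟩
      rw [single_val k (by omega)]
      simp [starTauDist, hij]
    · rcases Nat.eq_zero_or_pos j with rfl | hjpos
      · -- j = 0, i ≥ 1
        obtain ⟨k, rfl⟩ : ∃ k, i = k + 1 := ⟨i - 1, by omega⟩
        have habs : ∀ v, |starCoef s t (k+1) v - starCoef s t 0 v|
            = |starCoef s t 0 v - starCoef s t (k+1) v| := fun v => abs_sub_comm _ _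
        simp only [habs]
        rw [single_val k (by omega)]
        simp [starTauDist, hij]
      · -- both ≥ 1
        obtain ⟨k, rfl⟩ : ∃ k, i = k + 1 := ⟨i - 1, by omega⟩
        obtain ⟨l, rfl⟩ : ∃ l, j = l + 1 := ⟨j - 1, by omega⟩
        have hkl : k ≠ l := by omega
        rw [sum_starCoef_pair n s t p hp0.ne' k l (by omega) (by omega) hkl, hNcast]
        have hpos : (0:ℝ) < ((2^(n-1) : ℕ) : ℝ) := by positivity
        rw [show ((2^(n-1):ℕ):ℝ) * |2*t| ^ p / (2 * ((2^(n-1):ℕ):ℝ))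
            = |2*t| ^ p / 2 by field_simp]
        have habs2t : |2*t| = 2*t := abs_of_pos (by linarith)
        have h2half : (2:ℝ) * 2 ^ (1/p - 1) = 2 ^ (1/p) := by
          rw [show (2:ℝ) * 2^(1/p-1) = 2^(1:ℝ) * 2^(1/p-1) by rw [Real.rpow_one],
            ← Real.rpow_add (by norm_num : (0:ℝ) < 2)]
          norm_num
        have hval : (2*t) ^ p / 2 = τ ^ p := by
          rw [htdef, show (2:ℝ) * (τ * 2^(1/p-1)) = τ * (2 * 2^(1/p-1)) by ring, h2half,
            Real.mul_rpow hτ.le (Real.rpow_nonneg (by norm_num) _),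
            ← Real.rpow_mul (by norm_num : (0:ℝ) ≤ 2),
            show 1/p * p = 1 by field_simp, Real.rpow_one]
          ring
        rw [habs2t, hval, ← Real.rpow_mul hτ.le, mul_inv_cancel₀ hp0.ne', Real.rpow_one]
        simp [starTauDist, hij, hkl]
end

section
/- For every D > 0 there exists a map F from ℓ_2 into a Hilbert space H such that ‖F(x)‖ = D for all x, and for all x, y: sqrt((e-1)/e)·min{D, ‖x-y‖_2} ≤ ‖F(x)-F(y)‖ ≤ min{D, ‖x-y‖_2}. Consequently, the metric space (ℓ_2, min{‖x-y‖_2, D}) embeds into Hilbert space with distortion at most sqrt(e/(e-1)), with image contained in the sphere of radius D. -/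
open Real
open scoped ENNReal

namespace TruncEmbAux

noncomputable abbrev E := lp (fun _ : ℕ => ℝ) 2
abbrev σι : Type := Σ n : ℕ, (Fin n → ℕ)

lemma pi_prod_aux {f : ℕ → ℝ} (hf : Summable fun k => ‖f k‖) (n : ℕ) :
    (Summable fun j : Fin n → ℕ => ‖∏ i, f (j i)‖) ∧
      ∑' j : Fin n → ℕ, ∏ i, f (j i) = (∑' k, f k) ^ n := by
  induction n with
  | zero =>
      constructor
      · exact Summable.of_finite
      · rw [tsum_eq_single (fun i => i.elim0) (fun b hb => absurd (Subsingleton.elim b _) hb)]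
        simp
  | succ n ih =>
      have he : ∀ j : Fin (n + 1) → ℕ, (∏ i, f (j i)) =
          (fun p : ℕ × (Fin n → ℕ) => f p.1 * ∏ i, f (p.2 i)) ((Fin.consEquiv fun _ => ℕ).symm j) := by
        intro j
        rw [Fin.prod_univ_succ]
        rfl
      have hsum : Summable fun p : ℕ × (Fin n → ℕ) => ‖f p.1 * ∏ i, f (p.2 i)‖ := by
        have := hf.mul_of_nonneg ih.1 (fun k => norm_nonneg _) (fun j => norm_nonneg _)
        exact this.congr (fun p => by rw [norm_mul])
      constructor
      · refine (((Fin.consEquiv fun _ => ℕ).symm).summable_iff.2 hsum).congr (fun j => ?_)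
        rw [Function.comp_apply]
        exact congrArg norm (he j).symm
      · calc ∑' j : Fin (n + 1) → ℕ, ∏ i, f (j i)
            = ∑' p : ℕ × (Fin n → ℕ), f p.1 * ∏ i, f (p.2 i) := by
              rw [← ((Fin.consEquiv fun _ => ℕ).symm).tsum_eq
                (fun p : ℕ × (Fin n → ℕ) => f p.1 * ∏ i, f (p.2 i))]
              exact tsum_congr he
          _ = (∑' k, f k) * ∑' j : Fin n → ℕ, ∏ i, f (j i) :=
              (tsum_mul_tsum_of_summable_norm hf ih.1).symm
          _ = (∑' k, f k) ^ (n + 1) := by rw [ih.2, pow_succ]; ring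

noncomputable def coeff (D : ℝ) (x : E) (p : σι) : ℝ :=
  (D / Real.sqrt 2) * Real.exp (-‖x‖ ^ 2 / D ^ 2) *
    Real.sqrt ((2 / D ^ 2) ^ p.1 / (Nat.factorial p.1)) * ∏ i, x (p.2 i)

lemma coeff_mul (D : ℝ) (x y : E) (p : σι) :
    coeff D x p * coeff D y p =
      (D ^ 2 / 2 * Real.exp (-(‖x‖ ^ 2 + ‖y‖ ^ 2) / D ^ 2)) *
        ((2 / D ^ 2) ^ p.1 / (Nat.factorial p.1)) * ∏ i, ((x (p.2 i) : ℝ) * y (p.2 i)) := by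
  obtain ⟨n, j⟩ := p
  have h1 : Real.sqrt ((2 / D ^ 2) ^ n / (Nat.factorial n)) *
        Real.sqrt ((2 / D ^ 2) ^ n / (Nat.factorial n))
      = (2 / D ^ 2) ^ n / (Nat.factorial n) := Real.mul_self_sqrt (by positivity)
  have h2 : D / Real.sqrt 2 * (D / Real.sqrt 2) = D ^ 2 / 2 := by
    rw [div_mul_div_comm, Real.mul_self_sqrt (by norm_num)]; ring
  have h4 : Real.exp (-‖x‖ ^ 2 / D ^ 2) * Real.exp (-‖y‖ ^ 2 / D ^ 2)
      = Real.exp (-(‖x‖ ^ 2 + ‖y‖ ^ 2) / D ^ 2) := by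
    rw [← Real.exp_add]; ring_nf
  have h3 : (∏ i, (x (j i) : ℝ)) * ∏ i, (y (j i) : ℝ) = ∏ i, ((x (j i) : ℝ) * y (j i)) :=
    Finset.prod_mul_distrib.symm
  calc coeff D x ⟨n, j⟩ * coeff D y ⟨n, j⟩
      = (D / Real.sqrt 2 * (D / Real.sqrt 2)) *
          (Real.exp (-‖x‖ ^ 2 / D ^ 2) * Real.exp (-‖y‖ ^ 2 / D ^ 2)) *
          (Real.sqrt ((2 / D ^ 2) ^ n / (Nat.factorial n)) *
            Real.sqrt ((2 / D ^ 2) ^ n / (Nat.factorial n))) *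
          ((∏ i, (x (j i) : ℝ)) * ∏ i, (y (j i) : ℝ)) := by
        simp only [coeff]; ring
    _ = _ := by rw [h1, h2, h3, h4]

lemma summable_xy (x y : E) : Summable fun k => ‖(x k : ℝ) * y k‖ := by
  have h : ((2 : ℝ≥0∞).toReal).HolderConjugate (2 : ℝ≥0∞).toReal := by
    rw [Real.holderConjugate_iff] <;> norm_num
  exact (lp.summable_mul h x y).congr fun k => (norm_mul _ _).symm

lemma summable_coeff_mul (D : ℝ) (x y : E) :
    Summable fun p : σι => ‖coeff D x p * coeff D y p‖ := by
  set C : ℝ := ‖D ^ 2 / 2 * Real.exp (-(‖x‖ ^ 2 + ‖y‖ ^ 2) / D ^ 2)‖ with hC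
  have hg := summable_xy x y
  have hg' : Summable fun k => ‖‖(x k : ℝ) * y k‖‖ := hg.congr fun k => (norm_norm _).symm
  set S : ℝ := ∑' k, ‖(x k : ℝ) * y k‖ with hS
  have key : ∀ p : σι, ‖coeff D x p * coeff D y p‖ =
      C * ((2 / D ^ 2) ^ p.1 / (Nat.factorial p.1) *
        ∏ i, ‖(x (p.2 i) : ℝ) * y (p.2 i)‖) := by
    intro p
    rw [coeff_mul, norm_mul, norm_mul, norm_prod,
      Real.norm_of_nonneg (show (0:ℝ) ≤ (2 / D ^ 2) ^ p.1 / (Nat.factorial p.1) by positivity)]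
    ring
  have hnn : ∀ p : σι, (0:ℝ) ≤ ‖coeff D x p * coeff D y p‖ := fun p => norm_nonneg _
  refine (summable_congr key).2 ?_
  refine (summable_sigma_of_nonneg ?_).2 ⟨?_, ?_⟩
  · intro p; positivity
  · intro n
    have h0 : Summable fun j : Fin n → ℕ => ∏ i, ‖(x (j i) : ℝ) * y (j i)‖ :=
      (pi_prod_aux hg' n).1.congr (fun j => by rw [Real.norm_of_nonneg (by positivity)])
    exact (h0.mul_left (C * ((2 / D ^ 2) ^ n / (Nat.factorial n)))).congr
      (fun j => mul_assoc _ _ _)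
  · have hfib : ∀ n : ℕ, (∑' j : Fin n → ℕ,
          C * ((2 / D ^ 2) ^ n / (Nat.factorial n) * ∏ i, ‖(x (j i) : ℝ) * y (j i)‖))
          = C * ((2 / D ^ 2 * S) ^ n / (Nat.factorial n)) := by
      intro n
      rw [tsum_mul_left, tsum_mul_left, (pi_prod_aux hg' n).2]
      rw [mul_pow]
      ring
    refine Summable.congr ?_ (fun n => (hfib n).symm)
    exact ((Real.summable_pow_div_factorial (2 / D ^ 2 * S)).mul_left C)

lemma tsum_coeff_mul (D : ℝ) (x y : E) :
    ∑' p : σι, coeff D x p * coeff D y p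
      = D ^ 2 / 2 * Real.exp (-‖x - y‖ ^ 2 / D ^ 2) := by
  have hg := summable_xy x y
  have hsum : Summable fun p : σι => coeff D x p * coeff D y p :=
    (summable_coeff_mul D x y).of_norm
  set K := D ^ 2 / 2 * Real.exp (-(‖x‖ ^ 2 + ‖y‖ ^ 2) / D ^ 2) with hK
  set T : ℝ := ∑' k, (x k : ℝ) * y k with hT
  have hexp : ∀ z : ℝ, Real.exp z = ∑' n : ℕ, z ^ n / (Nat.factorial n) := fun z => by
    rw [Real.exp_eq_exp_ℝ, NormedSpace.exp_eq_tsum_div]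
  have hTinner : (inner ℝ x y : ℝ) = T := by
    rw [lp.inner_eq_tsum]
    simp [RCLike.inner_apply]
    exact tsum_congr fun i => mul_comm _ _
  have hfib : ∀ n : ℕ, (∑' j : Fin n → ℕ, coeff D x ⟨n, j⟩ * coeff D y ⟨n, j⟩)
      = K * ((2 / D ^ 2 * T) ^ n / (Nat.factorial n)) := by
    intro n
    have : ∀ j : Fin n → ℕ, coeff D x ⟨n, j⟩ * coeff D y ⟨n, j⟩
        = K * ((2 / D ^ 2) ^ n / (Nat.factorial n)) * ∏ i, ((x (j i) : ℝ) * y (j i)) :=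
      fun j => coeff_mul D x y ⟨n, j⟩
    rw [tsum_congr this, tsum_mul_left, (pi_prod_aux hg n).2, ← hT, mul_pow]
    ring
  calc ∑' p : σι, coeff D x p * coeff D y p
      = ∑' n : ℕ, ∑' j : Fin n → ℕ, coeff D x ⟨n, j⟩ * coeff D y ⟨n, j⟩ :=
        hsum.tsum_sigma
    _ = ∑' n : ℕ, K * ((2 / D ^ 2 * T) ^ n / (Nat.factorial n)) := tsum_congr hfib
    _ = K * Real.exp (2 / D ^ 2 * T) := by rw [tsum_mul_left, ← hexp]
    _ = D ^ 2 / 2 * Real.exp (-‖x - y‖ ^ 2 / D ^ 2) := by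
        have hnorm : ‖x - y‖ ^ 2 = ‖x‖ ^ 2 - 2 * T + ‖y‖ ^ 2 := by
          rw [norm_sub_sq_real, hTinner]
        rw [hK, mul_assoc, ← Real.exp_add]
        congr 2
        rw [hnorm]
        ring

lemma memℓp_coeff (D : ℝ) (x : E) : Memℓp (coeff D x) 2 := by
  refine memℓp_gen ?_
  refine (summable_coeff_mul D x x).congr fun p => ?_
  have h2 : ((2 : ℝ≥0∞)).toReal = ((2 : ℕ) : ℝ) := by norm_num
  rw [norm_mul, h2, Real.rpow_natCast, sq]

end TruncEmbAux

open TruncEmbAux in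
/-- For every `D > 0` there is a map `F` from `ℓ₂` to a Hilbert space, taking
values in the sphere of radius `D`, such that
`√((e-1)/e) · min(D, ‖x-y‖) ≤ ‖F x - F y‖ ≤ min(D, ‖x-y‖)`; in particular the
`D`-truncated metric on `ℓ₂` embeds into Hilbert space with distortion at most
`√(e/(e-1))`. -/
theorem truncated_hilbert_embedding (D : ℝ) (hD : 0 < D) :
    ∃ (H : Type) (_ : NormedAddCommGroup H) (_ : InnerProductSpace ℝ H)
      (F : lp (fun _ : ℕ => ℝ) 2 → H),
      (∀ x, ‖F x‖ = D) ∧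
      ∀ x y, Real.sqrt ((Real.exp 1 - 1) / Real.exp 1) * min D ‖x - y‖ ≤ ‖F x - F y‖ ∧
        ‖F x - F y‖ ≤ min D ‖x - y‖ := by
  classical
  set H0 := lp (fun _ : σι => ℝ) 2 with hH0
  set F : lp (fun _ : ℕ => ℝ) 2 → WithLp 2 (ℝ × H0) :=
    fun x => (WithLp.equiv 2 (ℝ × H0)).symm (D / Real.sqrt 2, ⟨coeff D x, memℓp_coeff D x⟩)
    with hF
  have hinner : ∀ x y : E, (inner ℝ (F x) (F y) : ℝ)
      = D ^ 2 / 2 + D ^ 2 / 2 * Real.exp (-‖x - y‖ ^ 2 / D ^ 2) := by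
    intro x y
    rw [hF, WithLp.prod_inner_apply]
    simp only [WithLp.equiv_symm_apply, WithLp.ofLp_toLp]
    have h1 : (inner ℝ (D / Real.sqrt 2) (D / Real.sqrt 2) : ℝ) = D ^ 2 / 2 := by
      simp only [RCLike.inner_apply, starRingEnd_apply, star_trivial]
      rw [div_mul_div_comm, Real.mul_self_sqrt (by norm_num : (0:ℝ) ≤ 2)]
      ring
    have h2 : (inner ℝ (⟨coeff D x, memℓp_coeff D x⟩ : H0) (⟨coeff D y, memℓp_coeff D y⟩ : H0) : ℝ)
        = D ^ 2 / 2 * Real.exp (-‖x - y‖ ^ 2 / D ^ 2) := by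
      rw [lp.inner_eq_tsum, ← tsum_coeff_mul D x y]
      exact tsum_congr fun p => by simp [RCLike.inner_apply, mul_comm]
    rw [h1, h2]
  have hnormF : ∀ x : E, ‖F x‖ = D := by
    intro x
    have h2 : ‖F x‖ ^ 2 = D ^ 2 := by
      rw [← real_inner_self_eq_norm_sq, hinner x x]
      simp
    have := congrArg Real.sqrt h2
    rwa [Real.sqrt_sq (norm_nonneg _), Real.sqrt_sq hD.le] at this
  have hdistsq : ∀ x y : E, ‖F x - F y‖ ^ 2
      = D ^ 2 * (1 - Real.exp (-‖x - y‖ ^ 2 / D ^ 2)) := by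
    intro x y
    rw [norm_sub_sq_real, hinner x y, hnormF x, hnormF y]
    ring
  refine ⟨WithLp 2 (ℝ × H0), inferInstance, inferInstance, F, hnormF, ?_⟩
  intro x y
  set t := ‖x - y‖ with ht
  have ht0 : 0 ≤ t := norm_nonneg _
  have hD2 : (0:ℝ) < D ^ 2 := by positivity
  have hu0 : 0 ≤ ‖F x - F y‖ := norm_nonneg _
  have hu : ‖F x - F y‖ ^ 2 = D ^ 2 * (1 - Real.exp (-t ^ 2 / D ^ 2)) := hdistsq x y
  have hmin0 : 0 ≤ min D t := le_min hD.le ht0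
  have hds : D ^ 2 * (t ^ 2 / D ^ 2) = t ^ 2 := by field_simp
  clear_value t
  have hcoef : (Real.exp 1 - 1) / Real.exp 1 = 1 - Real.exp (-1) := by
    rw [Real.exp_neg]
    field_simp
  have hexp1 : Real.exp (-1) ≤ 1 := by
    rw [Real.exp_neg]
    rw [inv_le_one_iff₀]
    right
    exact Real.one_le_exp (by norm_num)
  have sq_le_imp : ∀ a b : ℝ, 0 ≤ a → 0 ≤ b → a ^ 2 ≤ b ^ 2 → a ≤ b := by
    intro a b ha hb hab
    have := Real.sqrt_le_sqrt hab
    rwa [Real.sqrt_sq ha, Real.sqrt_sq hb] at this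
  constructor
  · -- lower bound
    refine sq_le_imp _ _ (mul_nonneg (Real.sqrt_nonneg _) hmin0) hu0 ?_
    have he1 : (1:ℝ) ≤ Real.exp 1 := Real.one_le_exp (by norm_num)
    rw [hu, mul_pow, Real.sq_sqrt (div_nonneg (by linarith) (Real.exp_pos 1).le), hcoef]
    rcases le_total t D with hcase | hcase
    · rw [min_eq_right hcase]
      have hs1 : t ^ 2 / D ^ 2 ≤ 1 := by
        rw [div_le_one hD2]
        exact pow_le_pow_left₀ ht0 hcase 2
      have hs0 : 0 ≤ t ^ 2 / D ^ 2 := by positivity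
      have hconv := convexOn_exp.2 (Set.mem_univ (0:ℝ)) (Set.mem_univ (-1:ℝ))
        (by linarith : (0:ℝ) ≤ 1 - t ^ 2 / D ^ 2) hs0 (by ring)
      simp only [smul_eq_mul, mul_zero, mul_neg_one, zero_add, Real.exp_zero, mul_one] at hconv
      have hconv' : Real.exp (-t ^ 2 / D ^ 2)
          ≤ (1 - t ^ 2 / D ^ 2) + t ^ 2 / D ^ 2 * Real.exp (-1) := by
        calc Real.exp (-t ^ 2 / D ^ 2) = Real.exp ((1 - t ^ 2 / D ^ 2) * 0 + -(t ^ 2 / D ^ 2)) := by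
              ring_nf
          _ ≤ _ := by
              rw [show (1 - t ^ 2 / D ^ 2) * 0 + -(t ^ 2 / D ^ 2) = -(t ^ 2 / D ^ 2) by ring]; exact hconv
      nlinarith [mul_le_mul_of_nonneg_left hconv' hD2.le]
    · rw [min_eq_left hcase]
      have hs1 : (1:ℝ) ≤ t ^ 2 / D ^ 2 := by
        rw [le_div_iff₀ hD2, one_mul]
        exact pow_le_pow_left₀ hD.le hcase 2
      have hexp2 : Real.exp (-t ^ 2 / D ^ 2) ≤ Real.exp (-1) := by
        apply Real.exp_le_exp.2
        rw [neg_div]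
        linarith
      nlinarith
  · -- upper bound
    refine le_min ?_ ?_
    · refine sq_le_imp _ _ hu0 hD.le ?_
      rw [hu]
      nlinarith [Real.exp_pos (-t ^ 2 / D ^ 2)]
    · refine sq_le_imp _ _ hu0 ht0 ?_
      rw [hu]
      have h := Real.add_one_le_exp (-t ^ 2 / D ^ 2)
      have h2 : 1 - Real.exp (-t ^ 2 / D ^ 2) ≤ t ^ 2 / D ^ 2 := by
        nth_rewrite 1 [neg_div] at h
        linarith
      calc D ^ 2 * (1 - Real.exp (-t ^ 2 / D ^ 2))
          ≤ D ^ 2 * (t ^ 2 / D ^ 2) := mul_le_mul_of_nonneg_left h2 hD2.le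
        _ = t ^ 2 := hds
end

section
/- For every D > 0, any embedding of the truncated plane (ℝ², min{‖x-y‖_2, D}) into Hilbert space has distortion at least 2·sqrt(5-√7)/3 > 1.02. In particular, the truncated Euclidean metric on the four points (0,0), (D,0), (D/2,D), (D/2,0) does not embed isometrically into Hilbert space. -/
noncomputable def TPpt (x y : ℝ) : EuclideanSpace ℝ (Fin 2) :=
  (WithLp.equiv 2 (Fin 2 → ℝ)).symm ![x, y]

lemma TP_aux (D A U V : ℝ) (hD : 0 < D) (hA1 : 1 ≤ A) (hU0 : 0 ≤ U) (hV0 : 0 ≤ V)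
    (hUsq : U ^ 2 ≤ (4 * A ^ 2 - 1) * D ^ 2) (hVsq : V ^ 2 ≤ (A ^ 2 - 1) * D ^ 2)
    (hmid : 2 * D ≤ U + V) :
    2 * Real.sqrt (5 - Real.sqrt 7) / 3 ≤ A := by
  by_contra hcon
  push_neg at hcon
  set t := A ^ 2 with htdef
  have ht1 : 1 ≤ t := by nlinarith
  have hs7 : Real.sqrt 7 ^ 2 = 7 := Real.sq_sqrt (by norm_num)
  have hs7le : Real.sqrt 7 ≤ 3 := by nlinarith [Real.sqrt_nonneg 7]
  have ht0 : t < (20 - 4 * Real.sqrt 7) / 9 := by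
    have h57 : (0:ℝ) ≤ 5 - Real.sqrt 7 := by linarith
    have hsq : Real.sqrt (5 - Real.sqrt 7) ^ 2 = 5 - Real.sqrt 7 := Real.sq_sqrt h57
    have : A ^ 2 < (2 * Real.sqrt (5 - Real.sqrt 7) / 3) ^ 2 := by
      apply sq_lt_sq' _ hcon
      nlinarith [Real.sqrt_nonneg (5 - Real.sqrt 7)]
    rw [htdef]
    nlinarith
  have hpoly : 9 * t ^ 2 - 40 * t + 32 > 0 := by
    have hp1 : 0 < (20 - 4 * Real.sqrt 7) / 9 - t := by linarith
    have hp2 : 0 < (20 + 4 * Real.sqrt 7) / 9 - t := by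
      nlinarith [Real.sqrt_nonneg 7]
    nlinarith [mul_pos hp1 hp2]
  have hs7ge : (2:ℝ) ≤ Real.sqrt 7 := by nlinarith [Real.sqrt_nonneg 7]
  have ht43 : t < 4/3 := by linarith
  have hUb : U ≤ (4 + 3*t)/4 * D := by
    have hc : (0:ℝ) ≤ (4 + 3*t)/4 * D := by positivity
    have h' : U ^ 2 ≤ ((4 + 3*t)/4 * D) ^ 2 := by
      nlinarith [mul_nonneg hpoly.le (sq_nonneg D)]
    exact le_of_pow_le_pow_left₀ (by norm_num) hc h'
  have hVb : V < (4 - 3*t)/4 * D := by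
    have hc : (0:ℝ) < (4 - 3*t)/4 * D := by
      apply mul_pos _ hD; linarith
    have h' : V ^ 2 < ((4 - 3*t)/4 * D) ^ 2 := by
      nlinarith [mul_pos hpoly (mul_pos hD hD)]
    exact lt_of_pow_lt_pow_left₀ 2 hc.le h'
  linarith


set_option maxHeartbeats 800000 in
/-- Any embedding of the `D`-truncated Euclidean plane into a Hilbert space
(noncontracting and `A`-Lipschitz with respect to the truncated metric
`min(‖x-y‖, D)`) satisfies `A ≥ 2√(5-√7)/3 > 1.02`.  In particular, the
truncated metric on the four points `(0,0), (D,0), (D/2,D), (D/2,0)` does not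
embed isometrically into Hilbert space. -/
theorem truncated_plane_distortion_lower_bound
    {H : Type*} [NormedAddCommGroup H] [InnerProductSpace ℝ H]
    (D : ℝ) (hD : 0 < D) (A : ℝ)
    (f : EuclideanSpace ℝ (Fin 2) → H)
    (hf : ∀ x y, min (dist x y) D ≤ ‖f x - f y‖ ∧
      ‖f x - f y‖ ≤ A * min (dist x y) D) :
    2 * Real.sqrt (5 - Real.sqrt 7) / 3 ≤ A := by
  set a := TPpt 0 0
  set b := TPpt D 0
  set c := TPpt (D/2) D
  set d := TPpt (D/2) 0
  have hD2 : (0:ℝ) < D/2 := by linarith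
  have hab : dist a b = D := by
    rw [EuclideanSpace.dist_eq]
    simp [a, b, TPpt, Fin.sum_univ_two, Real.dist_eq, abs_of_pos hD, Real.sqrt_sq hD.le]
  have had : dist a d = D / 2 := by
    rw [EuclideanSpace.dist_eq]
    simp [a, d, TPpt, Fin.sum_univ_two, Real.dist_eq, abs_of_pos hD2, Real.sqrt_sq hD2.le]
  have hbd : dist b d = D / 2 := by
    rw [EuclideanSpace.dist_eq]
    simp only [b, d, TPpt, WithLp.equiv_symm_apply, PiLp.toLp_apply, Fin.sum_univ_two,
      Matrix.cons_val_zero, Matrix.cons_val_one, Matrix.head_cons, Real.dist_eq]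
    rw [show |D - D/2| = D/2 by rw [abs_of_pos (by linarith)]; ring]
    rw [show |(0:ℝ) - 0| = 0 by simp]
    rw [show (D/2)^2 + (0:ℝ)^2 = (D/2)^2 by ring, Real.sqrt_sq hD2.le]
  have hcd : dist c d = D := by
    rw [EuclideanSpace.dist_eq]
    simp [c, d, TPpt, Fin.sum_univ_two, Real.dist_eq, abs_of_pos hD, Real.sqrt_sq hD.le]
  have hac : D ≤ dist a c := by
    rw [EuclideanSpace.dist_eq]
    calc D = Real.sqrt (D ^ 2) := (Real.sqrt_sq hD.le).symm
      _ ≤ _ := by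
        apply Real.sqrt_le_sqrt
        simp only [a, c, TPpt, WithLp.equiv_symm_apply, PiLp.toLp_apply, Fin.sum_univ_two,
          Matrix.cons_val_zero, Matrix.cons_val_one, Matrix.head_cons, Real.dist_eq, sq_abs]
        nlinarith [sq_nonneg D]
  have hbc : D ≤ dist b c := by
    rw [EuclideanSpace.dist_eq]
    calc D = Real.sqrt (D ^ 2) := (Real.sqrt_sq hD.le).symm
      _ ≤ _ := by
        apply Real.sqrt_le_sqrt
        simp only [b, c, TPpt, WithLp.equiv_symm_apply, PiLp.toLp_apply, Fin.sum_univ_two,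
          Matrix.cons_val_zero, Matrix.cons_val_one, Matrix.head_cons, Real.dist_eq, sq_abs]
        nlinarith [sq_nonneg D]
  -- translate to norm inequalities
  have hminD : min D D = D := min_self D
  have hmin2 : min (D/2) D = D/2 := min_eq_left (by linarith)
  have h1 : D ≤ ‖f a - f b‖ := by simpa [hab, hminD] using (hf a b).1
  have h2 : ‖f a - f d‖ ≤ A * (D/2) := by simpa [had, hmin2] using (hf a d).2
  have h3 : ‖f b - f d‖ ≤ A * (D/2) := by simpa [hbd, hmin2] using (hf b d).2
  have h4 : ‖f c - f a‖ ≤ A * D := by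
    have := (hf c a).2
    rwa [dist_comm, min_eq_right hac] at this
  have h5 : ‖f c - f b‖ ≤ A * D := by
    have := (hf c b).2
    rwa [dist_comm, min_eq_right hbc] at this
  have h6 : D ≤ ‖f c - f d‖ := by simpa [hcd, hminD] using (hf c d).1
  have hA1 : 1 ≤ A := by
    have hDA : 1 * D ≤ A * D := by
      have := (hf a b).2
      rw [hab, hminD] at this
      linarith
    exact (mul_le_mul_iff_left₀ hD).mp hDA
  -- parallelogram laws
  have hU := parallelogram_law_with_norm ℝ (f c - f a) (f c - f b)
  have hV := parallelogram_law_with_norm ℝ (f d - f a) (f d - f b)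
  set U := ‖(f c - f a) + (f c - f b)‖ with hUdef
  set V := ‖(f d - f a) + (f d - f b)‖ with hVdef
  have hU0 : 0 ≤ U := norm_nonneg _
  have hV0 : 0 ≤ V := norm_nonneg _
  have hsub1 : ‖(f c - f a) - (f c - f b)‖ = ‖f a - f b‖ := by
    rw [← norm_neg]; congr 1; abel
  have hsub2 : ‖(f d - f a) - (f d - f b)‖ = ‖f a - f b‖ := by
    rw [← norm_neg]; congr 1; abel
  rw [hsub1] at hU
  rw [hsub2] at hV
  have e1 : ‖f c - f a‖ ^ 2 ≤ A ^ 2 * D ^ 2 := calc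
    ‖f c - f a‖ ^ 2 ≤ (A * D) ^ 2 := pow_le_pow_left₀ (norm_nonneg _) h4 2
    _ = A ^ 2 * D ^ 2 := by ring
  have e2 : ‖f c - f b‖ ^ 2 ≤ A ^ 2 * D ^ 2 := calc
    ‖f c - f b‖ ^ 2 ≤ (A * D) ^ 2 := pow_le_pow_left₀ (norm_nonneg _) h5 2
    _ = A ^ 2 * D ^ 2 := by ring
  have e3 : D ^ 2 ≤ ‖f a - f b‖ ^ 2 := pow_le_pow_left₀ hD.le h1 2
  have h2' : ‖f d - f a‖ ≤ A * (D/2) := by rw [norm_sub_rev]; exact h2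
  have h3' : ‖f d - f b‖ ≤ A * (D/2) := by rw [norm_sub_rev]; exact h3
  have e4 : ‖f d - f a‖ ^ 2 ≤ A ^ 2 * D ^ 2 / 4 := calc
    ‖f d - f a‖ ^ 2 ≤ (A * (D/2)) ^ 2 := pow_le_pow_left₀ (norm_nonneg _) h2' 2
    _ = A ^ 2 * D ^ 2 / 4 := by ring
  have e5 : ‖f d - f b‖ ^ 2 ≤ A ^ 2 * D ^ 2 / 4 := calc
    ‖f d - f b‖ ^ 2 ≤ (A * (D/2)) ^ 2 := pow_le_pow_left₀ (norm_nonneg _) h3' 2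
    _ = A ^ 2 * D ^ 2 / 4 := by ring
  have hUsq : U ^ 2 ≤ (4 * A ^ 2 - 1) * D ^ 2 := by linarith
  have hVsq : V ^ 2 ≤ (A ^ 2 - 1) * D ^ 2 := by linarith
  -- midpoint triangle inequality
  have hmid : 2 * D ≤ U + V := by
    have hkey : (2:ℝ) • (f c - f d) = ((f c - f a) + (f c - f b)) - ((f d - f a) + (f d - f b)) := by
      rw [two_smul]; abel
    have hle : ‖(2:ℝ) • (f c - f d)‖ ≤ U + V := by
      rw [hkey]; exact norm_sub_le _ _
    rw [norm_smul, Real.norm_ofNat] at hle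
    linarith
  exact TP_aux D A U V hD hA1 hU0 hV0 hUsq hVsq hmid
end
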